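/- arXiv:1207.5077 — 6 statements merged into one kernel-verified Lean document; each statement's English description precedes it below -/
import Mathlib

section
/- Let J, K, k be integers with 0 ≤ K ≤ J and 0 < k < K. Then for every point (η; φ_1,…,φ_J) ∈ ℝ^{1+J} such that η ≠ 0 and K'η ≠ φ_{i_1} + ⋯ + φ_{i_{J'}} for all integers 1 ≤ K' ≤ J' ≤ J and all pairwise distinct indices i_1,…,i_{J'} ∈ {1,…,J}, one has f_{J,K}(η;φ_1,…,φ_J) = (1/2) Σ_{j=0}^{J} (f_{j,k} ⊙ g_{J−j,K−k})(η;φ_1,…,φ_J). -/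
open scoped BigOperators ENNReal
open MeasureTheory

/-- ω_a coefficients: ω_0 = -1, ω_{±1} = 1/2, otherwise 0. -/
noncomputable def omegaCoef : ℤ → ℝ := fun a =>
  if a = 0 then -1 else if a = 1 ∨ a = -1 then (1 : ℝ) / 2 else 0

/-- The functions `f_{J,K}` of `1+J` real variables (extra variables beyond the first `J`
are ignored); `f_{J,K} = 0` unless `1 ≤ J` and `0 ≤ K ≤ J`. For `J ≥ 2`,
`f_{J,K}(η;φ) = η⁻¹ Σ_{a=-1}^{1} ω_a (1/J!) Σ_{σ ∈ S_J} g_{J-1,K+a}(η;φ_{σ(1)},…,φ_{σ(J-1)})`,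
where `g_{J,K}(η;φ) = -2K (Kη - φ_1 - ⋯ - φ_J)⁻¹ f_{J,K}(η;φ)` is inlined. -/
noncomputable def fAux : ℕ → ℤ → ℝ → (ℕ → ℝ) → ℝ
  | 0, _, _, _ => 0
  | 1, K, η, _ => if K = 0 then -η⁻¹ else if K = 1 then η⁻¹ else 0
  | (J+2), K, η, φ =>
      if 0 ≤ K ∧ K ≤ (J : ℤ) + 2 then
        η⁻¹ * ∑ a ∈ ({-1, 0, 1} : Finset ℤ), omegaCoef a *
          ((Nat.factorial (J+2) : ℝ)⁻¹ *
            ∑ σ : Equiv.Perm (Fin (J+2)),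
              (fun ψ : ℕ → ℝ =>
                (-2 * ((K + a : ℤ) : ℝ)) /
                    (((K + a : ℤ) : ℝ) * η - ∑ i ∈ Finset.range (J+1), ψ i) *
                  fAux (J+1) (K+a) η ψ)
              (fun i => if h : i < J+2 then φ (σ ⟨i, h⟩) else φ i))
      else 0

/-- The functions `g_{J,K} = -2K (Kη - φ_1 - ⋯ - φ_J)⁻¹ f_{J,K}`. -/
noncomputable def gAux (J : ℕ) (K : ℤ) (η : ℝ) (φ : ℕ → ℝ) : ℝ :=
  (-2 * (K : ℝ)) / ((K : ℝ) * η - ∑ i ∈ Finset.range J, φ i) * fAux J K η φ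

/-- Symmetric product `p ⊙ q` of a function of `1+I` variables and one of `1+J` variables. -/
noncomputable def symProd (I J : ℕ) (p q : ℝ → (ℕ → ℝ) → ℝ) (η : ℝ) (φ : ℕ → ℝ) : ℝ :=
  (Nat.factorial (I + J) : ℝ)⁻¹ *
    ∑ σ : Equiv.Perm (Fin (I + J)),
      p η (fun i => if h : i < I + J then φ (σ ⟨i, h⟩) else φ i) *
      q η (fun i => if h : i + I < I + J then φ (σ ⟨i + I, h⟩) else φ (i + I))

/-!
`FProductFormula n` is the claimed identity in `1 + n` variables and `GProductFormula n` its
companion `∑_{j+m=n} g_{j,k} ⊙ g_{m,l} = 2 g_{n,k+l}` (`k, l ≥ 1`); they are proved together by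
induction on `n`.

`FProductFormula n → GProductFormula n` is partial fractions: the denominators of `g_{j,k}` and
`g_{m,l}` add up to `(k+l)η - φ_1 - ⋯ - φ_n`, which splits `g_{j,k} ⊙ g_{m,l}` into multiples of
`g_{j,k} ⊙ f_{m,l}` and `f_{j,k} ⊙ g_{m,l}`, and both sums over `j + m = n` are instances of
`FProductFormula n`.

`GProductFormula (n-1) → FProductFormula n`: by its recursion, `f_{j,k} ⊙ g_{m,K-k}` is
`η⁻¹ ∑_a ω_a` times the symmetrisation over all `n` variables of `g_{j-1,k+a} ⊙ g_{m,K-k}` (for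
`j = 1` only `f_{1,1} = 1/η` survives), and summing over `j` with `GProductFormula (n-1)` gives
`2 f_{n,K}` through the recursion for `f_{n,K}`.

The non-resonance condition keeps every denominator nonzero. A function of `1 + J` variables is
a function of `η` and of a sequence of which it reads the first `J` entries; symmetrisation
averages over the permutations of the first `n` entries.
-/

open Finset Equiv Function

section Arguments

variable {α : Type*}

def permuteArgs (n : ℕ) (σ : Perm (Fin n)) (φ : ℕ → α) : ℕ → α :=
  fun i => if h : i < n then φ (σ ⟨i, h⟩) else φ i

def shiftArgs (j : ℕ) (φ : ℕ → α) : ℕ → α := fun i => φ (i + j)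

def DependsOnlyOnFirst {β : Type*} (n : ℕ) (F : (ℕ → α) → β) : Prop :=
  ∀ ψ ψ' : ℕ → α, (∀ i < n, ψ i = ψ' i) → F ψ = F ψ'

@[simp]
theorem shiftArgs_zero (φ : ℕ → α) : shiftArgs 0 φ = φ :=
  rfl

theorem permuteArgs_of_lt {n i : ℕ} (σ : Perm (Fin n)) (φ : ℕ → α) (h : i < n) :
    permuteArgs n σ φ i = φ (σ ⟨i, h⟩) :=
  dif_pos h

theorem permuteArgs_of_not_lt {n i : ℕ} (σ : Perm (Fin n)) (φ : ℕ → α) (h : ¬i < n) :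
    permuteArgs n σ φ i = φ i :=
  dif_neg h

theorem permuteArgs_permuteArgs {n : ℕ} (σ τ : Perm (Fin n)) (φ : ℕ → α) :
    permuteArgs n τ (permuteArgs n σ φ) = permuteArgs n (σ * τ) φ := by
  funext i
  by_cases h : i < n <;> simp [permuteArgs, h]

theorem permuteArgs_eq_permuteArgs_viaFintypeEmbedding {j n : ℕ} (h : j ≤ n)
    (τ : Perm (Fin j)) (φ : ℕ → α) :
    permuteArgs j τ φ = permuteArgs n (τ.viaFintypeEmbedding (Fin.castLEEmb h)) φ := by
  funext i
  by_cases hj : i < j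
  · have := τ.viaFintypeEmbedding_apply_image (Fin.castLEEmb h) ⟨i, hj⟩
    simp only [Fin.castLEEmb_apply, Fin.castLE_mk] at this
    rw [permuteArgs_of_lt _ _ hj, permuteArgs_of_lt _ _ (hj.trans_le h), this]
    rfl
  · rw [permuteArgs_of_not_lt _ _ hj]
    by_cases hn : i < n
    · rw [permuteArgs_of_lt _ _ hn, Perm.viaFintypeEmbedding_apply_notMem_range]
      rintro ⟨x, hx⟩
      have := congrArg Fin.val hx
      simp only [Fin.castLEEmb_apply, Fin.val_castLE] at this
      omega
    · rw [permuteArgs_of_not_lt _ _ hn]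

theorem shiftArgs_permuteArgs_self {j : ℕ} (τ : Perm (Fin j)) (φ : ℕ → α) :
    shiftArgs j (permuteArgs j τ φ) = shiftArgs j φ := by
  funext i
  exact permuteArgs_of_not_lt _ _ (by omega)

theorem sum_range_permuteArgs_self [AddCommMonoid α] {n : ℕ} (σ : Perm (Fin n)) (φ : ℕ → α) :
    ∑ i ∈ range n, permuteArgs n σ φ i = ∑ i ∈ range n, φ i := by
  simp only [sum_range, permuteArgs_of_lt _ _ (Fin.is_lt _)]
  exact Equiv.sum_comp σ fun i => φ i

theorem sum_range_add_shiftArgs [AddCommMonoid α] (j m : ℕ) (φ : ℕ → α) :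
    ∑ i ∈ range (j + m), φ i = ∑ i ∈ range j, φ i + ∑ i ∈ range m, shiftArgs j φ i := by
  simp [sum_range_add, shiftArgs, add_comm]

variable {M : Type*} [AddCommMonoid M]

theorem sum_perm_permuteArgs_permuteArgs {n : ℕ} (ρ : Perm (Fin n)) (F : (ℕ → α) → M)
    (φ : ℕ → α) :
    ∑ σ : Perm (Fin n), F (permuteArgs n ρ (permuteArgs n σ φ)) =
      ∑ σ : Perm (Fin n), F (permuteArgs n σ φ) := by
  simp only [permuteArgs_permuteArgs]
  exact Equiv.sum_comp (Equiv.mulRight ρ) fun σ => F (permuteArgs n σ φ)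

theorem sum_perm_sum_perm_permuteArgs_permuteArgs {j n : ℕ} (h : j ≤ n) (F : (ℕ → α) → M)
    (φ : ℕ → α) :
    ∑ τ : Perm (Fin j), ∑ σ : Perm (Fin n), F (permuteArgs j τ (permuteArgs n σ φ)) =
      j.factorial • ∑ σ : Perm (Fin n), F (permuteArgs n σ φ) := by
  simp only [permuteArgs_eq_permuteArgs_viaFintypeEmbedding h, sum_perm_permuteArgs_permuteArgs,
    sum_const, card_univ, Fintype.card_perm, Fintype.card_fin]

/-- Moving the second factor's block one slot to the left, across a slot that neither factor
reads, is absorbed by a cyclic relabelling of the arguments. -/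
theorem sum_perm_mul_shiftArgs_succ {R : Type*} [NonUnitalNonAssocSemiring R] {i m n : ℕ}
    (h : i + m < n) {A B : (ℕ → α) → R} (hA : DependsOnlyOnFirst i A)
    (hB : DependsOnlyOnFirst m B) (φ : ℕ → α) :
    ∑ σ : Perm (Fin n), A (permuteArgs n σ φ) * B (shiftArgs (i + 1) (permuteArgs n σ φ)) =
      ∑ σ : Perm (Fin n), A (permuteArgs n σ φ) * B (shiftArgs i (permuteArgs n σ φ)) := by
  have : NeZero n := ⟨by omega⟩
  let ρ := Fin.cycleIcc (⟨i, by omega⟩ : Fin n) ⟨n - 1, by omega⟩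
  rw [← sum_perm_permuteArgs_permuteArgs ρ fun ψ => A ψ * B (shiftArgs i ψ)]
  refine sum_congr rfl fun σ _ => congrArg₂ _ (hA _ _ fun t ht => ?_) (hB _ _ fun t ht => ?_)
  · rw [permuteArgs_of_lt ρ _ (by omega : t < n), Fin.cycleIcc_of_lt (Fin.mk_lt_mk.2 ht)]
  · have hlt : (⟨t + i, by omega⟩ : Fin n) < ⟨n - 1, by omega⟩ := Fin.mk_lt_mk.2 (by omega)
    simp only [shiftArgs]
    rw [permuteArgs_of_lt ρ _ (by omega : t + i < n),
      Fin.cycleIcc_of_ge_of_lt (Fin.mk_le_mk.2 (by omega)) hlt,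
      Fin.val_add_one_of_lt' (by simp; omega), add_assoc]

end Arguments

section Recursion

theorem fAux_eq_zero {J : ℕ} {K : ℤ} (η : ℝ) (φ : ℕ → ℝ) (h : K < 0 ∨ (J : ℤ) < K) :
    fAux J K η φ = 0 := by
  match J with
  | 0 => rfl
  | 1 => rw [fAux, if_neg (by omega), if_neg (by omega)]
  | J + 2 => rw [fAux, if_neg (by push_cast at h; omega)]

theorem le_of_fAux_ne_zero {J : ℕ} {K : ℤ} {η : ℝ} {φ : ℕ → ℝ} (h : fAux J K η φ ≠ 0) :
    K ≤ J :=
  not_lt.1 fun hK => h (fAux_eq_zero η φ (Or.inr hK))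

@[simp]
theorem gAux_zero_left (K : ℤ) (η : ℝ) (φ : ℕ → ℝ) : gAux 0 K η φ = 0 := by
  simp [gAux, fAux]

@[simp]
theorem gAux_zero_right (J : ℕ) (η : ℝ) (φ : ℕ → ℝ) : gAux J 0 η φ = 0 := by
  simp [gAux]

/-- Unlike the defining equation, this holds for every `K`: outside `[0, N + 2]` every
`gAux (N + 1) (K + a)` vanishes. -/
theorem fAux_add_two (N : ℕ) (K : ℤ) (η : ℝ) (φ : ℕ → ℝ) :
    fAux (N + 2) K η φ =
      η⁻¹ * ∑ a ∈ ({-1, 0, 1} : Finset ℤ), omegaCoef a *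
        (((N + 2).factorial : ℝ)⁻¹ *
          ∑ σ : Perm (Fin (N + 2)), gAux (N + 1) (K + a) η (permuteArgs (N + 2) σ φ)) := by
  rw [fAux]
  split_ifs with hK
  · rfl
  · have hg : ∀ a ∈ ({-1, 0, 1} : Finset ℤ), ∀ ψ, gAux (N + 1) (K + a) η ψ = 0 := by
      intro a ha ψ
      simp only [mem_insert, mem_singleton] at ha
      rcases eq_or_ne (K + a) 0 with h0 | h0
      · rw [h0, gAux_zero_right]
      · rw [gAux, fAux_eq_zero η ψ (by push_cast; omega), mul_zero]
    rw [sum_eq_zero fun a ha => by simp [hg a ha], mul_zero]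

theorem dependsOnlyOnFirst_gAux_of_fAux {J : ℕ} {K : ℤ} {η : ℝ}
    (h : DependsOnlyOnFirst J (fAux J K η)) : DependsOnlyOnFirst J (gAux J K η) := by
  intro φ ψ hφψ
  rw [gAux, gAux, h φ ψ hφψ, sum_congr rfl fun i hi => hφψ i (mem_range.1 hi)]

theorem dependsOnlyOnFirst_fAux (J : ℕ) (K : ℤ) (η : ℝ) : DependsOnlyOnFirst J (fAux J K η) := by
  induction J using Nat.strong_induction_on generalizing K with
  | _ J ih =>
    match J, ih with
    | 0, _ | 1, _ => exact fun _ _ _ => rfl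
    | N + 2, ih =>
      intro φ ψ hφψ
      rw [fAux_add_two, fAux_add_two]
      refine congrArg _ (sum_congr rfl fun a _ => congrArg _ (congrArg _ ?_))
      refine sum_congr rfl fun σ _ =>
        dependsOnlyOnFirst_gAux_of_fAux (ih (N + 1) (by omega) (K + a)) _ _ fun i hi => ?_
      rw [permuteArgs_of_lt _ _ (by omega), permuteArgs_of_lt _ _ (by omega)]
      exact hφψ _ (Fin.is_lt _)

theorem dependsOnlyOnFirst_gAux (J : ℕ) (K : ℤ) (η : ℝ) : DependsOnlyOnFirst J (gAux J K η) :=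
  dependsOnlyOnFirst_gAux_of_fAux (dependsOnlyOnFirst_fAux J K η)

theorem sum_omegaCoef_mul (F : ℤ → ℝ) :
    ∑ a ∈ ({-1, 0, 1} : Finset ℤ), omegaCoef a * F a = F (-1) / 2 - F 0 + F 1 / 2 := by
  have hneg : omegaCoef (-1) = 1 / 2 := by norm_num [omegaCoef]
  have hzero : omegaCoef 0 = -1 := by norm_num [omegaCoef]
  have hone : omegaCoef 1 = 1 / 2 := by norm_num [omegaCoef]
  rw [sum_insert (by decide), sum_insert (by decide), sum_singleton, hneg, hzero, hone]
  ring

end Recursion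

section SymmetricProduct

theorem symProd_eq_sum {I J n : ℕ} (h : I + J = n) (p q : ℝ → (ℕ → ℝ) → ℝ) (η : ℝ)
    (φ : ℕ → ℝ) :
    symProd I J p q η φ = (n.factorial : ℝ)⁻¹ * ∑ σ : Perm (Fin n),
      p η (permuteArgs n σ φ) * q η (shiftArgs I (permuteArgs n σ φ)) := by
  subst h
  rfl

theorem symProd_eq_zero_of_left {I J : ℕ} {p : ℝ → (ℕ → ℝ) → ℝ} {η : ℝ} (hp : ∀ ψ, p η ψ = 0)
    (q : ℝ → (ℕ → ℝ) → ℝ) (φ : ℕ → ℝ) : symProd I J p q η φ = 0 := by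
  simp [symProd, hp]

theorem symProd_eq_zero_of_right {I J : ℕ} (p : ℝ → (ℕ → ℝ) → ℝ) {q : ℝ → (ℕ → ℝ) → ℝ} {η : ℝ}
    (hq : ∀ ψ, q η ψ = 0) (φ : ℕ → ℝ) : symProd I J p q η φ = 0 := by
  simp [symProd, hq]

theorem symProd_comm {I J : ℕ} {p q : ℝ → (ℕ → ℝ) → ℝ} {η : ℝ} (hp : DependsOnlyOnFirst I (p η))
    (hq : DependsOnlyOnFirst J (q η)) (φ : ℕ → ℝ) :
    symProd I J p q η φ = symProd J I q p η φ := by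
  let ρ : Perm (Fin (I + J)) := finAddFlip.trans (finCongr (add_comm J I))
  rw [symProd_eq_sum rfl, symProd_eq_sum (add_comm J I),
    ← sum_perm_permuteArgs_permuteArgs ρ fun ψ => p η ψ * q η (shiftArgs I ψ)]
  refine congrArg _ (sum_congr rfl fun σ _ => (mul_comm _ _).trans
    (congrArg₂ _ (hq _ _ fun t ht => ?_) (hp _ _ fun t ht => ?_)))
  · simp only [shiftArgs]
    rw [permuteArgs_of_lt ρ _ (by omega)]
    simp [ρ, finAddFlip_apply_mk_right]
  · simp only [shiftArgs]
    rw [permuteArgs_of_lt ρ _ (by omega)]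
    simp [ρ, finAddFlip_apply_mk_left ht, add_comm]

theorem sum_perm_symProd {j m n : ℕ} (h : j + m ≤ n) (p q : ℝ → (ℕ → ℝ) → ℝ) (η : ℝ)
    (φ : ℕ → ℝ) :
    ∑ σ : Perm (Fin n), symProd j m p q η (permuteArgs n σ φ) =
      ∑ σ : Perm (Fin n), p η (permuteArgs n σ φ) * q η (shiftArgs j (permuteArgs n σ φ)) := by
  simp only [symProd_eq_sum rfl, ← mul_sum]
  rw [sum_comm, sum_perm_sum_perm_permuteArgs_permuteArgs h fun ψ => p η ψ * q η (shiftArgs j ψ),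
    nsmul_eq_mul, ← mul_assoc, inv_mul_cancel₀ (by positivity), one_mul]

end SymmetricProduct

section NonResonance

def NonResonant (n : ℕ) (η : ℝ) (φ : ℕ → ℝ) : Prop :=
  ∀ K' J' : ℕ, 1 ≤ K' → K' ≤ J' → J' ≤ n →
    ∀ ι : Fin J' → Fin n, Injective ι → (K' : ℝ) * η ≠ ∑ i, φ (ι i : ℕ)

variable {m n : ℕ} {η : ℝ} {φ : ℕ → ℝ}

theorem NonResonant.comp {ψ : ℕ → ℝ} (h : NonResonant n η φ) (e : Fin m → Fin n)
    (he : Injective e) (hψ : ∀ i : Fin m, ψ i = φ (e i)) : NonResonant m η ψ := by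
  intro K' J' hK' hKJ hJm ι hι
  have hmn : m ≤ n := by simpa using Fintype.card_le_of_injective e he
  simpa only [comp_apply, hψ] using h K' J' hK' hKJ (hJm.trans hmn) (e ∘ ι) (he.comp hι)

theorem NonResonant.mono (h : NonResonant n η φ) (hmn : m ≤ n) : NonResonant m η φ :=
  h.comp (Fin.castLE hmn) (Fin.castLE_injective hmn) fun _ => rfl

theorem NonResonant.permuteArgs (h : NonResonant n η φ) (σ : Perm (Fin n)) :
    NonResonant n η (permuteArgs n σ φ) :=
  h.comp σ σ.injective fun i => permuteArgs_of_lt σ φ i.is_lt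

theorem NonResonant.shiftArgs {j : ℕ} (h : NonResonant n η φ) (hjm : j + m ≤ n) :
    NonResonant m η (shiftArgs j φ) :=
  h.comp (fun i => ⟨i + j, by omega⟩) (fun a b hab => Fin.ext (by simpa using hab))
    fun _ => rfl

theorem NonResonant.sub_sum_range_ne_zero (h : NonResonant n η φ) {k : ℤ} (hk : 0 < k)
    (hkn : k ≤ n) : k * η - ∑ i ∈ range n, φ i ≠ 0 := by
  lift k to ℕ using hk.le
  rw [sub_ne_zero, sum_range]
  exact_mod_cast h k n (by omega) (by omega) le_rfl id injective_id

end NonResonance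

/-- Partial fractions: the two denominators of `gAux` add up to the denominator of
`gAux (j + m) (k + l)`. -/
theorem gAux_mul_gAux_shiftArgs {j m : ℕ} {k l : ℤ} (hk : 0 < k) (hl : 0 < l) {η : ℝ}
    {ψ : ℕ → ℝ} (hψ : NonResonant (j + m) η ψ) :
    gAux j k η ψ * gAux m l η (shiftArgs j ψ) =
      -2 / ((k + l) * η - ∑ i ∈ range (j + m), ψ i) *
        (l * (gAux j k η ψ * fAux m l η (shiftArgs j ψ)) +
          k * (fAux j k η ψ * gAux m l η (shiftArgs j ψ))) := by
  by_cases hx : fAux j k η ψ = 0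
  · simp [gAux, hx]
  by_cases hy : fAux m l η (shiftArgs j ψ) = 0
  · simp [gAux, hy]
  have hDa := (hψ.mono (by omega)).sub_sum_range_ne_zero hk (le_of_fAux_ne_zero hx)
  have hDb := (hψ.shiftArgs le_rfl).sub_sum_range_ne_zero hl (le_of_fAux_ne_zero hy)
  have hD := hψ.sub_sum_range_ne_zero (add_pos hk hl)
    (by push_cast; linarith [le_of_fAux_ne_zero hx, le_of_fAux_ne_zero hy])
  rw [sum_range_add_shiftArgs, Int.cast_add] at hD
  rw [sum_range_add_shiftArgs]
  simp only [gAux]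
  generalize ∑ i ∈ range j, ψ i = Sa at *
  generalize ∑ i ∈ range m, shiftArgs j ψ i = Sb at *
  rw [show ((k : ℝ) + l) * η - (Sa + Sb) = (k * η - Sa) + (l * η - Sb) by ring] at hD ⊢
  generalize (k : ℝ) * η - Sa = Da at *
  generalize (l : ℝ) * η - Sb = Db at *
  field_simp
  ring

theorem symProd_gAux_gAux {j m : ℕ} {k l : ℤ} (hk : 0 < k) (hl : 0 < l) {η : ℝ} {φ : ℕ → ℝ}
    (hφ : NonResonant (j + m) η φ) :
    symProd j m (gAux j k) (gAux m l) η φ =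
      -2 / ((k + l) * η - ∑ i ∈ range (j + m), φ i) *
        (l * symProd j m (gAux j k) (fAux m l) η φ +
          k * symProd j m (fAux j k) (gAux m l) η φ) := by
  simp only [symProd_eq_sum rfl]
  rw [sum_congr rfl fun σ _ => gAux_mul_gAux_shiftArgs hk hl (hφ.permuteArgs σ)]
  simp only [sum_range_permuteArgs_self, ← mul_sum, sum_add_distrib]
  ring

def FProductFormula (n : ℕ) : Prop :=
  ∀ K k : ℤ, 0 < k → k < K → ∀ (η : ℝ) (φ : ℕ → ℝ), NonResonant n η φ →
    fAux n K η φ =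
      1 / 2 * ∑ p ∈ antidiagonal n, symProd p.1 p.2 (fAux p.1 k) (gAux p.2 (K - k)) η φ

def GProductFormula (n : ℕ) : Prop :=
  ∀ k l : ℤ, 0 < k → 0 < l → ∀ (η : ℝ) (φ : ℕ → ℝ), NonResonant n η φ →
    ∑ p ∈ antidiagonal n, symProd p.1 p.2 (gAux p.1 k) (gAux p.2 l) η φ = 2 * gAux n (k + l) η φ

theorem FProductFormula.gProductFormula {n : ℕ} (hf : FProductFormula n) :
    GProductFormula n := by
  intro k l hk hl η φ hφ
  have hsplit : ∀ p ∈ antidiagonal n, symProd p.1 p.2 (gAux p.1 k) (gAux p.2 l) η φ =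
      -2 / ((k + l) * η - ∑ i ∈ range n, φ i) *
        (l * symProd p.1 p.2 (gAux p.1 k) (fAux p.2 l) η φ +
          k * symProd p.1 p.2 (fAux p.1 k) (gAux p.2 l) η φ) := by
    rintro ⟨i, j⟩ hp
    rw [HasAntidiagonal.mem_antidiagonal] at hp
    subst hp
    exact symProd_gAux_gAux hk hl hφ
  have hfg : ∑ p ∈ antidiagonal n, symProd p.1 p.2 (fAux p.1 k) (gAux p.2 l) η φ =
      2 * fAux n (k + l) η φ := by
    rw [hf (k + l) k hk (by omega) η φ hφ, add_sub_cancel_left]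
    ring
  have hgf : ∑ p ∈ antidiagonal n, symProd p.1 p.2 (gAux p.1 k) (fAux p.2 l) η φ =
      2 * fAux n (k + l) η φ := by
    rw [← Nat.sum_antidiagonal_swap, hf (k + l) l hl (by omega) η φ hφ, add_sub_cancel_right]
    simp only [Prod.fst_swap, Prod.snd_swap,
      symProd_comm (dependsOnlyOnFirst_gAux _ _ _) (dependsOnlyOnFirst_fAux _ _ _) φ]
    ring
  rw [sum_congr rfl hsplit, ← mul_sum, sum_add_distrib, ← mul_sum, ← mul_sum, hgf, hfg, gAux]
  push_cast
  ring

theorem symProd_fAux_one {m n : ℕ} (h : 1 + m = n) (k L : ℤ) (η : ℝ) (φ : ℕ → ℝ) :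
    symProd 1 m (fAux 1 k) (gAux m L) η φ =
      fAux 1 k η φ *
        ((n.factorial : ℝ)⁻¹ * ∑ σ : Perm (Fin n), gAux m L η (permuteArgs n σ φ)) := by
  have hshift := sum_perm_mul_shiftArgs_succ (i := 0) (m := m) (n := n) (by omega)
    (A := fun _ => fAux 1 k η φ) (fun _ _ _ => rfl) (dependsOnlyOnFirst_gAux m L η) φ
  rw [symProd_eq_sum h]
  calc _ = (n.factorial : ℝ)⁻¹ *
        ∑ σ : Perm (Fin n), fAux 1 k η φ * gAux m L η (shiftArgs 0 (permuteArgs n σ φ)) :=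
      congrArg _ hshift
    _ = _ := by simp only [shiftArgs_zero, ← mul_sum]; ring

theorem symProd_fAux_add_two {j m n : ℕ} (h : j + 2 + m = n) (k L : ℤ) (η : ℝ) (φ : ℕ → ℝ) :
    symProd (j + 2) m (fAux (j + 2) k) (gAux m L) η φ =
      η⁻¹ * (n.factorial : ℝ)⁻¹ * ∑ a ∈ ({-1, 0, 1} : Finset ℤ), omegaCoef a *
        ∑ σ : Perm (Fin n), gAux (j + 1) (k + a) η (permuteArgs n σ φ) *
          gAux m L η (shiftArgs (j + 1) (permuteArgs n σ φ)) := by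
  have hterm : ∀ ψ : ℕ → ℝ, fAux (j + 2) k η ψ * gAux m L η (shiftArgs (j + 2) ψ) =
      η⁻¹ * ∑ a ∈ ({-1, 0, 1} : Finset ℤ), omegaCoef a *
        (((j + 2).factorial : ℝ)⁻¹ * ∑ τ : Perm (Fin (j + 2)),
          gAux (j + 1) (k + a) η (permuteArgs (j + 2) τ ψ) *
            gAux m L η (shiftArgs (j + 2) (permuteArgs (j + 2) τ ψ))) := by
    intro ψ
    rw [fAux_add_two]
    simp only [shiftArgs_permuteArgs_self, sum_mul, mul_assoc]
  have hsum : ∀ a : ℤ, ∑ σ : Perm (Fin n), ((j + 2).factorial : ℝ)⁻¹ *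
      ∑ τ : Perm (Fin (j + 2)), gAux (j + 1) (k + a) η (permuteArgs (j + 2) τ (permuteArgs n σ φ)) *
        gAux m L η (shiftArgs (j + 2) (permuteArgs (j + 2) τ (permuteArgs n σ φ))) =
      ∑ σ : Perm (Fin n), gAux (j + 1) (k + a) η (permuteArgs n σ φ) *
        gAux m L η (shiftArgs (j + 1) (permuteArgs n σ φ)) := by
    intro a
    rw [← mul_sum, sum_comm, sum_perm_sum_perm_permuteArgs_permuteArgs (by omega)
      fun ψ => gAux (j + 1) (k + a) η ψ * gAux m L η (shiftArgs (j + 2) ψ),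
      nsmul_eq_mul, inv_mul_cancel_left₀ (by positivity)]
    exact sum_perm_mul_shiftArgs_succ (by omega) (dependsOnlyOnFirst_gAux _ _ _)
      (dependsOnlyOnFirst_gAux _ _ _) φ
  rw [symProd_eq_sum h]
  simp only [hterm, mul_sum, ← hsum]
  rw [sum_comm]
  refine sum_congr rfl fun a _ => sum_congr rfl fun σ _ => sum_congr rfl fun τ _ => ?_
  ring

theorem GProductFormula.sum_antidiagonal_sum_perm {n N : ℕ} (hg : GProductFormula (n + 1))
    (hnN : n + 1 ≤ N) {k l : ℤ} (hk : 0 < k) (hl : 0 < l) {η : ℝ} {φ : ℕ → ℝ}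
    (hφ : NonResonant N η φ) :
    ∑ p ∈ antidiagonal n, ∑ σ : Perm (Fin N), gAux (p.1 + 1) k η (permuteArgs N σ φ) *
        gAux p.2 l η (shiftArgs (p.1 + 1) (permuteArgs N σ φ)) =
      2 * ∑ σ : Perm (Fin N), gAux (n + 1) (k + l) η (permuteArgs N σ φ) := by
  have hsucc := Nat.sum_antidiagonal_succ (n := n) (f := fun p => ∑ σ : Perm (Fin N),
    gAux p.1 k η (permuteArgs N σ φ) * gAux p.2 l η (shiftArgs p.1 (permuteArgs N σ φ)))
  simp only [gAux_zero_left, zero_mul, sum_const_zero, zero_add] at hsucc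
  rw [← hsucc, sum_congr rfl fun p hp => (sum_perm_symProd
    (by rw [HasAntidiagonal.mem_antidiagonal.1 hp]; exact hnN) _ _ η φ).symm, sum_comm, mul_sum]
  exact sum_congr rfl fun σ _ => hg k l hk hl η _ ((hφ.permuteArgs σ).mono hnN)

theorem fProductFormula_zero : FProductFormula 0 := by
  intro K k _ _ η φ _
  rw [Nat.antidiagonal_zero, sum_singleton, symProd_eq_zero_of_left (fun _ => rfl), mul_zero]
  rfl

theorem fProductFormula_one : FProductFormula 1 := by
  intro K k _ hkK η φ _
  rw [Nat.sum_antidiagonal_succ, Nat.antidiagonal_zero, sum_singleton,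
    symProd_eq_zero_of_left (fun _ => rfl), symProd_eq_zero_of_right _ (gAux_zero_left _ η),
    fAux_eq_zero η φ (Or.inr (by omega))]
  simp

theorem GProductFormula.fProductFormula_add_two {N : ℕ} (hg : GProductFormula (N + 1)) :
    FProductFormula (N + 2) := by
  intro K k hk hkK η φ hφ
  obtain ⟨G, hG⟩ : ∃ G : ℤ → ℝ, ∀ c,
      ∑ σ : Perm (Fin (N + 2)), gAux (N + 1) c η (permuteArgs (N + 2) σ φ) = G c :=
    ⟨_, fun _ => rfl⟩
  obtain ⟨S, hS⟩ : ∃ S : ℤ → ℝ, ∀ a, ∑ p ∈ antidiagonal N, ∑ σ : Perm (Fin (N + 2)),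
      gAux (p.1 + 1) (k + a) η (permuteArgs (N + 2) σ φ) *
        gAux p.2 (K - k) η (shiftArgs (p.1 + 1) (permuteArgs (N + 2) σ φ)) = S a :=
    ⟨_, fun _ => rfl⟩
  have hSG : ∀ a, 0 < k + a → S a = 2 * G (K + a) := by
    intro a ha
    rw [← hS, hg.sum_antidiagonal_sum_perm (by omega) ha (sub_pos.2 hkK) hφ, ← hG]
    ring_nf
  have hlow : fAux 1 k η φ * G (K - k) + η⁻¹ * (S (-1) / 2) = η⁻¹ * G (K + -1) := by
    rcases (show k = 1 ∨ 1 < k by omega) with rfl | hk1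
    · simp [← hS, fAux, sub_eq_add_neg]
    · rw [hSG (-1) (by omega), fAux_eq_zero η φ (Or.inr (by omega))]
      ring
  have hrhs : ∑ p ∈ antidiagonal N,
      symProd (p.1 + 1 + 1) p.2 (fAux (p.1 + 1 + 1) k) (gAux p.2 (K - k)) η φ =
        η⁻¹ * ((N + 2).factorial : ℝ)⁻¹ * (S (-1) / 2 - S 0 + S 1 / 2) := by
    rw [sum_congr rfl fun p hp => symProd_fAux_add_two (n := N + 2)
      (by rw [← HasAntidiagonal.mem_antidiagonal.1 hp]; ring) k (K - k) η φ, ← mul_sum, sum_comm]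
    simp only [← mul_sum, hS]
    rw [sum_omegaCoef_mul]
  rw [fAux_add_two, Nat.sum_antidiagonal_succ, Nat.sum_antidiagonal_succ, hrhs,
    symProd_eq_zero_of_left (fun _ => rfl), symProd_fAux_one (n := N + 2) (by omega)]
  simp only [hG, sum_omegaCoef_mul]
  rw [hSG 0 (by omega), hSG 1 (by omega)]
  linear_combination (-(((N + 2).factorial : ℝ)⁻¹ / 2)) * hlow

theorem fProductFormula_and_gProductFormula : ∀ n, FProductFormula n ∧ GProductFormula n
  | 0 => ⟨fProductFormula_zero, fProductFormula_zero.gProductFormula⟩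
  | 1 => ⟨fProductFormula_one, fProductFormula_one.gProductFormula⟩
  | N + 2 =>
    have hf := (fProductFormula_and_gProductFormula (N + 1)).2.fProductFormula_add_two
    ⟨hf, hf.gProductFormula⟩

theorem stmt5_general (J K k : ℕ) (hk0 : 0 < k) (hkK : k < K)
    (η : ℝ) (φ : ℕ → ℝ)
    (hres : ∀ K' J' : ℕ, 1 ≤ K' → K' ≤ J' → J' ≤ J →
      ∀ ι : Fin J' → Fin J, Function.Injective ι →
        (K' : ℝ) * η ≠ ∑ i, φ (ι i : ℕ)) :
    fAux J (K : ℤ) η φ =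
      (1 / 2) * ∑ j ∈ Finset.range (J + 1),
        symProd j (J - j) (fAux j (k : ℤ)) (gAux (J - j) ((K : ℤ) - (k : ℤ))) η φ := by
  rw [(fProductFormula_and_gProductFormula J).1 K k (by exact_mod_cast hk0)
    (by exact_mod_cast hkK) η φ hres, Nat.sum_antidiagonal_eq_sum_range_succ_mk]

theorem stmt5 (J K k : ℕ) (hKJ : K ≤ J) (hk0 : 0 < k) (hkK : k < K)
    (η : ℝ) (hη : η ≠ 0) (φ : ℕ → ℝ)
    (hres : ∀ K' J' : ℕ, 1 ≤ K' → K' ≤ J' → J' ≤ J →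
      ∀ ι : Fin J' → Fin J, Function.Injective ι →
        (K' : ℝ) * η ≠ ∑ i, φ (ι i : ℕ)) :
    fAux J (K : ℤ) η φ =
      (1 / 2) * ∑ j ∈ Finset.range (J + 1),
        symProd j (J - j) (fAux j (k : ℤ)) (gAux (J - j) ((K : ℤ) - (k : ℤ))) η φ :=
  stmt5_general J K k hk0 hkK η φ hres
end

section
/- Let J, K, k be integers with 0 ≤ K ≤ J and 0 < k < K. Then for every point (η; φ_1,…,φ_J) ∈ ℝ^{1+J} such that η ≠ 0 and K'η ≠ φ_{i_1} + ⋯ + φ_{i_{J'}} for all integers 1 ≤ K' ≤ J' ≤ J and all pairwise distinct indices i_1,…,i_{J'} ∈ {1,…,J}, one has g_{J,K}(η;φ_1,…,φ_J) = (1/2) Σ_{j=0}^{J} (g_{j,k} ⊙ g_{J−j,K−k})(η;φ_1,…,φ_J). -/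
open scoped BigOperators ENNReal
open MeasureTheory

open Finset

/-- Fuel-based finset version of fAux. -/
noncomputable def Fm : ℕ → ℝ → ℤ → (ℕ → ℝ) → Finset ℕ → ℝ
  | 0, _, _, _, _ => 0
  | (n+1), η, K, φ, S =>
    if S.card ≤ 1 then
      (if S.card = 1 then (if K = 0 then -η⁻¹ else if K = 1 then η⁻¹ else 0) else 0)
    else η⁻¹ * (S.card : ℝ)⁻¹ * ∑ a ∈ ({-1, 0, 1} : Finset ℤ), omegaCoef a *
        ∑ x ∈ S, (-2 * ((K+a : ℤ) : ℝ)) / (((K+a : ℤ) : ℝ) * η - ∑ i ∈ S.erase x, φ i) *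
          Fm n η (K+a) φ (S.erase x)

noncomputable def FF (η : ℝ) (K : ℤ) (φ : ℕ → ℝ) (S : Finset ℕ) : ℝ := Fm S.card η K φ S

noncomputable def GG (η : ℝ) (K : ℤ) (φ : ℕ → ℝ) (S : Finset ℕ) : ℝ :=
  (-2 * (K : ℝ)) / ((K : ℝ) * η - ∑ i ∈ S, φ i) * FF η K φ S

lemma Fm_fuel : ∀ (n : ℕ) (η : ℝ) (K : ℤ) (φ : ℕ → ℝ) (S : Finset ℕ), S.card ≤ n →
    Fm n η K φ S = FF η K φ S := by
  intro n
  induction n with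
  | zero => intro η K φ S h; rw [FF, Nat.le_zero.mp h]
  | succ n ih =>
    intro η K φ S h
    rw [FF]
    rcases Nat.lt_or_ge S.card 2 with h2 | h2
    · interval_cases hc : S.card <;> simp [Fm, hc]
    · obtain ⟨c, hc⟩ : ∃ c, S.card = c + 2 := ⟨S.card - 2, by omega⟩
      rw [hc, Fm, Fm]
      simp only [hc, Nat.succ_ne_zero, if_false]
      rw [if_neg (by omega), if_neg (by omega)]
      congr 1
      refine Finset.sum_congr rfl fun a _ => ?_
      congr 1
      refine Finset.sum_congr rfl fun x hx => ?_
      congr 1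
      have hce : (S.erase x).card = c + 1 := by
        have := Finset.card_erase_of_mem hx; omega
      rw [ih η (K+a) φ _ (by omega), FF, hce]

lemma FF_empty (η : ℝ) (K : ℤ) (φ : ℕ → ℝ) : FF η K φ ∅ = 0 := by simp [FF, Fm]

lemma FF_card_one (η : ℝ) (K : ℤ) (φ : ℕ → ℝ) (S : Finset ℕ) (h : S.card = 1) :
    FF η K φ S = (if K = 0 then -η⁻¹ else if K = 1 then η⁻¹ else 0) := by
  simp [FF, Fm, h]

lemma FF_rec (η : ℝ) (K : ℤ) (φ : ℕ → ℝ) (S : Finset ℕ) (h : 2 ≤ S.card) :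
    FF η K φ S = η⁻¹ * (S.card : ℝ)⁻¹ * ∑ a ∈ ({-1, 0, 1} : Finset ℤ), omegaCoef a *
      ∑ x ∈ S, GG η (K+a) φ (S.erase x) := by
  obtain ⟨c, hc⟩ : ∃ c, S.card = c + 2 := ⟨S.card - 2, by omega⟩
  rw [FF, hc, Fm, if_neg (by omega), hc]
  refine congrArg (fun t => η⁻¹ * ((c + 2 : ℕ) : ℝ)⁻¹ * t) (Finset.sum_congr rfl fun a _ => ?_)
  refine congrArg (fun t => omegaCoef a * t) (Finset.sum_congr rfl fun x hx => ?_)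
  have hce : (S.erase x).card = c + 1 := by
    have := Finset.card_erase_of_mem hx; omega
  rw [Fm_fuel (c+1) η (K+a) φ (S.erase x) (by omega), GG]

lemma GG_zero_of (η : ℝ) (K : ℤ) (φ : ℕ → ℝ) (S : Finset ℕ)
    (h : FF η K φ S = 0 ∨ K = 0) : GG η K φ S = 0 := by
  rcases h with h | h <;> simp [GG, h]

lemma FF_zero : ∀ (n : ℕ) (η : ℝ) (K : ℤ) (φ : ℕ → ℝ) (S : Finset ℕ), S.card = n →
    (K < 0 ∨ (S.card : ℤ) < K) → FF η K φ S = 0 := by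
  intro n
  induction n using Nat.strong_induction_on with
  | _ n ih =>
    intro η K φ S hn hK
    rcases Nat.lt_or_ge S.card 2 with h2 | h2
    · interval_cases hc : S.card
      · rw [Finset.card_eq_zero.mp hc, FF_empty]
      · push_cast at hK
        rw [FF_card_one _ _ _ _ hc, if_neg (by omega), if_neg (by omega)]
    · rw [FF_rec _ _ _ _ h2]
      have : ∀ a ∈ ({-1, 0, 1} : Finset ℤ), omegaCoef a *
          ∑ x ∈ S, GG η (K+a) φ (S.erase x) = 0 := by
        intro a ha
        simp only [Finset.mem_insert, Finset.mem_singleton] at ha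
        have hz : ∀ x ∈ S, GG η (K+a) φ (S.erase x) = 0 := by
          intro x hx
          have hce : (S.erase x).card = S.card - 1 := Finset.card_erase_of_mem hx
          apply GG_zero_of
          rcases eq_or_ne (K + a) 0 with h0 | h0
          · right; exact h0
          · left
            apply ih (S.card - 1) (by omega) η (K+a) φ _ hce
            rw [hce]
            rcases hK with hK | hK
            · left; rcases ha with rfl | rfl | rfl <;> omega
            · right; rcases ha with rfl | rfl | rfl <;> push_cast <;> omega
        rw [Finset.sum_eq_zero hz, mul_zero]
      rw [Finset.sum_eq_zero this, mul_zero]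

lemma FF_zero' (η : ℝ) (K : ℤ) (φ : ℕ → ℝ) (S : Finset ℕ)
    (hK : K < 0 ∨ (S.card : ℤ) < K) : FF η K φ S = 0 := FF_zero S.card η K φ S rfl hK

lemma GG_zero (η : ℝ) (K : ℤ) (φ : ℕ → ℝ) (S : Finset ℕ)
    (hK : K ≤ 0 ∨ (S.card : ℤ) < K) : GG η K φ S = 0 := by
  apply GG_zero_of
  rcases hK with hK | hK
  · rcases eq_or_lt_of_le hK with h | h
    · right; omega
    · left; exact FF_zero' _ _ _ _ (Or.inl h)
  · left; exact FF_zero' _ _ _ _ (Or.inr hK)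

lemma image_erase_injOn (u : ℕ → ℕ) (S : Finset ℕ) (hu : Set.InjOn u S) (x : ℕ) (hx : x ∈ S) :
    (S.image u).erase (u x) = (S.erase x).image u := by
  ext y
  simp only [Finset.mem_erase, Finset.mem_image]
  constructor
  · rintro ⟨hne, z, hz, rfl⟩
    exact ⟨z, ⟨fun h => hne (by rw [h]), hz⟩, rfl⟩
  · rintro ⟨z, ⟨hzx, hz⟩, rfl⟩
    exact ⟨fun h => hzx (hu hz hx h), z, hz, rfl⟩

lemma FF_image : ∀ (n : ℕ) (η : ℝ) (K : ℤ) (φ : ℕ → ℝ) (u : ℕ → ℕ) (S : Finset ℕ),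
    S.card = n → Set.InjOn u S →
    FF η K (φ ∘ u) S = FF η K φ (S.image u) := by
  intro n
  induction n using Nat.strong_induction_on with
  | _ n ih =>
    intro η K φ u S hn hu
    have hinj : ∀ x ∈ S, ∀ y ∈ S, u x = u y → x = y := fun x hx y hy h => hu hx hy h
    have hcard : (S.image u).card = S.card := Finset.card_image_of_injOn hu
    rcases Nat.lt_or_ge S.card 2 with h2 | h2
    · interval_cases hc : S.card
      · rw [Finset.card_eq_zero.mp hc]
        simp [FF_empty]
      · rw [FF_card_one _ _ _ _ hc, FF_card_one _ _ _ _ (by omega)]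
    · rw [FF_rec _ _ _ _ h2, FF_rec _ _ _ _ (by omega), hcard]
      refine congrArg (fun t => η⁻¹ * ((S.card : ℝ))⁻¹ * t) (Finset.sum_congr rfl fun a _ => ?_)
      refine congrArg (fun t => omegaCoef a * t) ?_
      rw [Finset.sum_image hinj]
      refine Finset.sum_congr rfl fun x hx => ?_
      rw [image_erase_injOn u S hu x hx]
      have hce : (S.erase x).card = S.card - 1 := Finset.card_erase_of_mem hx
      have hue : Set.InjOn u (S.erase x) := hu.mono (by simp [Finset.coe_subset, Finset.erase_subset])
      rw [GG, GG, ← ih (S.card - 1) (by omega) η (K+a) φ u (S.erase x) hce hue]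
      rw [Finset.sum_image (fun p hp q hq h => hue hp hq h)]
      rfl

lemma GG_image (η : ℝ) (K : ℤ) (φ : ℕ → ℝ) (u : ℕ → ℕ) (S : Finset ℕ) (hu : Set.InjOn u S) :
    GG η K (φ ∘ u) S = GG η K φ (S.image u) := by
  rw [GG, GG, ← FF_image S.card η K φ u S rfl hu,
    Finset.sum_image (fun p hp q hq h => hu hp hq h)]
  rfl

lemma exists_perm_image {n : ℕ} (A B : Finset (Fin n)) (h : A.card = B.card) :
    ∃ τ : Equiv.Perm (Fin n), A.image (⇑τ) = B := by
  classical
  have hc : Aᶜ.card = Bᶜ.card := by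
    rw [Finset.card_compl, Finset.card_compl, h]
  let e1 := Finset.equivOfCardEq h
  let e2 := Finset.equivOfCardEq hc
  let f : Fin n → Fin n := fun x =>
    if hx : x ∈ A then (e1 ⟨x, hx⟩ : Fin n) else (e2 ⟨x, by simp [hx]⟩ : Fin n)
  have hfB : ∀ x, x ∈ A → f x ∈ B := by
    intro x hx; simp only [f, dif_pos hx]; exact (e1 ⟨x, hx⟩).2
  have hfBc : ∀ x, x ∉ A → f x ∈ Bᶜ := by
    intro x hx; simp only [f, dif_neg hx]; exact (e2 ⟨x, by simp [hx]⟩).2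
  have hinj : Function.Injective f := by
    intro x y hxy
    by_cases hx : x ∈ A <;> by_cases hy : y ∈ A
    · have := Subtype.coe_injective (a₁ := e1 ⟨x, hx⟩) (a₂ := e1 ⟨y, hy⟩)
        (by simpa [f, dif_pos hx, dif_pos hy] using hxy)
      simpa using congrArg Subtype.val (e1.injective this)
    · exfalso
      have h1 : f x ∈ B := hfB x hx
      rw [hxy] at h1
      exact (Finset.mem_compl.mp (hfBc y hy)) h1
    · exfalso
      have h1 : f y ∈ B := hfB y hy
      rw [← hxy] at h1
      exact (Finset.mem_compl.mp (hfBc x hx)) h1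
    · have := Subtype.coe_injective (a₁ := e2 ⟨x, by simp [hx]⟩) (a₂ := e2 ⟨y, by simp [hy]⟩)
        (by simpa [f, dif_neg hx, dif_neg hy] using hxy)
      simpa using congrArg Subtype.val (e2.injective this)
  refine ⟨Equiv.ofBijective f (Finite.injective_iff_bijective.mp hinj), ?_⟩
  apply Finset.eq_of_subset_of_card_le
  · intro y hy
    obtain ⟨x, hx, rfl⟩ := Finset.mem_image.mp hy
    exact hfB x hx
  · rw [show ⇑(Equiv.ofBijective f (Finite.injective_iff_bijective.mp hinj)) = f from rfl,
      Finset.card_image_of_injective _ hinj, h]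

lemma fiber_card_const {n : ℕ} (D : Finset (Fin n)) (B1 B2 : Finset (Fin n))
    (h12 : B1.card = B2.card) :
    (Finset.univ.filter (fun σ : Equiv.Perm (Fin n) => D.image ⇑σ = B1)).card =
    (Finset.univ.filter (fun σ : Equiv.Perm (Fin n) => D.image ⇑σ = B2)).card := by
  classical
  obtain ⟨τ, hτ⟩ := exists_perm_image B1 B2 h12
  apply Finset.card_bij' (fun σ _ => τ * σ) (fun σ _ => τ⁻¹ * σ)
  · intro σ hσ
    simp only [Finset.mem_filter, Finset.mem_univ, true_and] at hσ ⊢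
    rw [show ⇑(τ * σ) = ⇑τ ∘ ⇑σ from rfl, ← Finset.image_image, hσ, hτ]
  · intro σ hσ
    simp only [Finset.mem_filter, Finset.mem_univ, true_and] at hσ ⊢
    rw [show ⇑(τ⁻¹ * σ) = ⇑τ⁻¹ ∘ ⇑σ from rfl, ← Finset.image_image, hσ, ← hτ,
      Finset.image_image]
    have hid : ⇑τ⁻¹ ∘ ⇑τ = id := by ext x; simp
    rw [hid, Finset.image_id]
  · intro σ _; simp [mul_assoc]
  · intro σ _; simp [mul_assoc]

lemma sum_perm_image {n d : ℕ} (D : Finset (Fin n)) (hD : D.card = d)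
    (H : Finset (Fin n) → ℝ) :
    ∑ σ : Equiv.Perm (Fin n), H (D.image ⇑σ) =
      ((d.factorial * (n - d).factorial : ℕ) : ℝ) *
        ∑ B ∈ Finset.powersetCard d Finset.univ, H B := by
  classical
  have hdn : d ≤ n := by
    rw [← hD]
    exact (Finset.card_le_card (Finset.subset_univ D)).trans (by simp)
  have hmaps : ∀ σ : Equiv.Perm (Fin n), σ ∈ (Finset.univ : Finset (Equiv.Perm (Fin n))) →
      D.image ⇑σ ∈ Finset.powersetCard d Finset.univ := by
    intro σ _
    simp [Finset.mem_powersetCard, Finset.card_image_of_injective _ σ.injective, hD]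
  have hfibsum : ∑ B ∈ Finset.powersetCard d Finset.univ,
      (Finset.univ.filter (fun σ : Equiv.Perm (Fin n) => D.image ⇑σ = B)).card =
      n.factorial := by
    rw [← Finset.card_eq_sum_card_fiberwise hmaps, Finset.card_univ, Fintype.card_perm,
      Fintype.card_fin]
  have hconst : ∀ B ∈ Finset.powersetCard d Finset.univ,
      (Finset.univ.filter (fun σ : Equiv.Perm (Fin n) => D.image ⇑σ = B)).card =
      d.factorial * (n - d).factorial := by
    intro B hB
    obtain ⟨-, hBc⟩ := Finset.mem_powersetCard.mp hB
    have hall : ∀ B' ∈ Finset.powersetCard d Finset.univ,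
        (Finset.univ.filter (fun σ : Equiv.Perm (Fin n) => D.image ⇑σ = B')).card =
        (Finset.univ.filter (fun σ : Equiv.Perm (Fin n) => D.image ⇑σ = B)).card := by
      intro B' hB'
      obtain ⟨-, hBc'⟩ := Finset.mem_powersetCard.mp hB'
      exact fiber_card_const D B' B (by rw [hBc', hBc])
    rw [Finset.sum_congr rfl hall, Finset.sum_const, Finset.card_powersetCard,
      Finset.card_univ, Fintype.card_fin, smul_eq_mul] at hfibsum
    have hch : n.choose d * (d.factorial * (n - d).factorial) = n.factorial := by
      rw [← mul_assoc]; exact Nat.choose_mul_factorial_mul_factorial hdn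
    exact Nat.eq_of_mul_eq_mul_left (Nat.choose_pos hdn) (by rw [hfibsum, hch])
  rw [← Finset.sum_fiberwise_of_maps_to hmaps (fun σ => H (D.image ⇑σ))]
  rw [Finset.mul_sum]
  refine Finset.sum_congr rfl fun B hB => ?_
  have : ∀ σ ∈ Finset.univ.filter (fun σ : Equiv.Perm (Fin n) => D.image ⇑σ = B),
      H (D.image ⇑σ) = H B := by
    intro σ hσ
    rw [(Finset.mem_filter.mp hσ).2]
  rw [Finset.sum_congr rfl this, Finset.sum_const, hconst B hB, nsmul_eq_mul]

lemma omega_sum (X : ℤ → ℝ) :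
    ∑ a ∈ ({-1, 0, 1} : Finset ℤ), omegaCoef a * X a =
      (1/2) * X (-1) - X 0 + (1/2) * X 1 := by
  rw [show ({-1, 0, 1} : Finset ℤ) = insert (-1) (insert 0 {1}) from rfl]
  rw [Finset.sum_insert (by decide), Finset.sum_insert (by decide), Finset.sum_singleton]
  simp only [omegaCoef]
  norm_num
  ring

lemma choose_id1 (J d : ℕ) (hJ : 1 ≤ J) :
    J * (J - 1).choose d = J.choose (d + 1) * (d + 1) := by
  obtain ⟨J', rfl⟩ : ∃ J', J = J' + 1 := ⟨J - 1, by omega⟩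
  simpa using (Nat.add_one_mul_choose_eq J' d)

lemma powerset_compl_sum (S : Finset ℕ) (t : Finset ℕ → Finset ℕ → ℝ) :
    ∑ A ∈ S.powerset, t A (S \ A) = ∑ A ∈ S.powerset, t (S \ A) A := by
  apply Finset.sum_nbij' (fun A => S \ A) (fun A => S \ A)
  · intro A hA; exact Finset.mem_powerset.mpr (Finset.sdiff_subset)
  · intro A hA; exact Finset.mem_powerset.mpr (Finset.sdiff_subset)
  · intro A hA; exact Finset.sdiff_sdiff_eq_self (Finset.mem_powerset.mp hA)
  · intro A hA; exact Finset.sdiff_sdiff_eq_self (Finset.mem_powerset.mp hA)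
  · intro A hA; rw [Finset.sdiff_sdiff_eq_self (Finset.mem_powerset.mp hA)]

lemma powerset_mem_swap (S : Finset ℕ) (w : Finset ℕ → ℕ → ℝ) :
    ∑ B ∈ S.powerset, ∑ y ∈ B, w B y =
      ∑ y ∈ S, ∑ A ∈ (S.erase y).powerset, w (insert y A) y := by
  classical
  have h1 : ∀ B ∈ S.powerset, ∑ y ∈ B, w B y = ∑ y ∈ S, if y ∈ B then w B y else 0 := by
    intro B hB
    rw [← Finset.sum_filter]
    congr 1
    ext z
    simp only [Finset.mem_filter]
    exact ⟨fun hz => ⟨Finset.mem_powerset.mp hB hz, hz⟩, fun hz => hz.2⟩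
  rw [Finset.sum_congr rfl h1, Finset.sum_comm]
  refine Finset.sum_congr rfl fun y hy => ?_
  rw [← Finset.sum_filter]
  apply Finset.sum_nbij' (fun B => B.erase y) (fun A => insert y A)
  · intro B hB
    simp only [Finset.mem_filter, Finset.mem_powerset] at hB
    exact Finset.mem_powerset.mpr (Finset.erase_subset_erase y hB.1)
  · intro A hA
    simp only [Finset.mem_powerset] at hA
    simp only [Finset.mem_filter, Finset.mem_powerset]
    constructor
    · intro z hz
      rcases Finset.mem_insert.mp hz with rfl | hz
      · exact hy
      · exact (Finset.erase_subset y S) (hA hz)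
    · exact Finset.mem_insert_self y A
  · intro B hB
    simp only [Finset.mem_filter] at hB
    exact Finset.insert_erase hB.2
  · intro A hA
    simp only [Finset.mem_powerset] at hA
    exact Finset.erase_insert (fun hcon => (Finset.notMem_erase y S) (hA hcon))
  · intro B hB
    simp only [Finset.mem_filter] at hB
    rw [Finset.insert_erase hB.2]

lemma powerset_card_one_sum (S : Finset ℕ) (w : Finset ℕ → ℝ) :
    ∑ B ∈ S.powerset.filter (fun B => B.card = 1), w B = ∑ y ∈ S, w {y} := by
  classical
  symm
  apply Finset.sum_bij (fun (y : ℕ) (_ : y ∈ S) => ({y} : Finset ℕ))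
  · intro y hy
    simp only [Finset.mem_filter, Finset.mem_powerset]
    exact ⟨Finset.singleton_subset_iff.mpr hy, Finset.card_singleton y⟩
  · intro y1 h1 y2 h2 h
    exact Finset.singleton_injective h
  · intro B hB
    simp only [Finset.mem_filter, Finset.mem_powerset] at hB
    obtain ⟨y, rfl⟩ := Finset.card_eq_one.mp hB.2
    exact ⟨y, hB.1 (Finset.mem_singleton_self y), rfl⟩
  · intro y hy; rfl

lemma GG_empty (η : ℝ) (K : ℤ) (φ : ℕ → ℝ) : GG η K φ ∅ = 0 :=
  GG_zero_of _ _ _ _ (Or.inl (FF_empty _ _ _))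

lemma choose_inv_id (J d : ℕ) (hJ : 1 ≤ J) :
    ((J.choose (d+1) : ℕ) : ℝ)⁻¹ * (((d+1 : ℕ)) : ℝ)⁻¹ =
      ((J : ℕ) : ℝ)⁻¹ * (((J-1).choose d : ℕ) : ℝ)⁻¹ := by
  rcases Nat.lt_or_ge J (d+1) with h | h
  · have h1 : J.choose (d+1) = 0 := Nat.choose_eq_zero_of_lt h
    have h2 : (J-1).choose d = 0 := Nat.choose_eq_zero_of_lt (by omega)
    simp [h1, h2]
  · have hkey : (J : ℝ) * ((J-1).choose d : ℕ) = (J.choose (d+1) : ℕ) * ((d+1 : ℕ) : ℝ) := by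
      have := choose_id1 J d hJ
      exact_mod_cast congrArg (fun x : ℕ => (x : ℝ)) this
    have h1 : (J.choose (d+1) : ℝ) ≠ 0 :=
      Nat.cast_ne_zero.mpr (Nat.pos_iff_ne_zero.mp (Nat.choose_pos h))
    have h2 : ((J-1).choose d : ℝ) ≠ 0 :=
      Nat.cast_ne_zero.mpr (Nat.pos_iff_ne_zero.mp (Nat.choose_pos (by omega)))
    have h3 : ((d+1 : ℕ) : ℝ) ≠ 0 := by positivity
    have h4 : ((J : ℕ) : ℝ) ≠ 0 := by
      exact_mod_cast Nat.cast_ne_zero.mpr (by omega)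
    field_simp
    push_cast at hkey ⊢
    linarith [hkey]

lemma FF_formula (η : ℝ) (v : ℤ) (hv : 1 ≤ v) (φ : ℕ → ℝ) (B : Finset ℕ) :
    FF η v φ B = (if B.card = 1 ∧ v = 1 then η⁻¹ else 0) +
      η⁻¹ * (B.card : ℝ)⁻¹ * ∑ a ∈ ({-1, 0, 1} : Finset ℤ), omegaCoef a *
        ∑ y ∈ B, GG η (v+a) φ (B.erase y) := by
  rcases Nat.lt_or_ge B.card 2 with h2 | h2
  · interval_cases hc : B.card
    · rw [Finset.card_eq_zero.mp hc]
      rw [FF_empty]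
      simp [GG_empty]
    · obtain ⟨y, rfl⟩ := Finset.card_eq_one.mp hc
      rw [FF_card_one _ _ _ _ hc]
      have hz : ∀ a ∈ ({-1, 0, 1} : Finset ℤ), omegaCoef a *
          ∑ y' ∈ ({y} : Finset ℕ), GG η (v+a) φ (({y} : Finset ℕ).erase y') = 0 := by
        intro a _
        rw [Finset.sum_singleton, Finset.erase_singleton, GG_empty, mul_zero]
      rw [Finset.sum_eq_zero hz]
      simp only [mul_zero, add_zero, hc]
      rw [if_neg (by omega)]
      by_cases h1 : v = 1 <;> simp [h1]
  · rw [FF_rec _ _ _ _ h2, if_neg (by omega)]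
    rw [zero_add]

lemma T_expand (η : ℝ) (φ : ℕ → ℝ) (S : Finset ℕ) (hJ : 1 ≤ S.card) (u v : ℤ) (hv : 1 ≤ v) :
    ∑ B ∈ S.powerset, ((S.card.choose B.card : ℕ) : ℝ)⁻¹ * (GG η u φ (S \ B) * FF η v φ B) =
      (if v = 1 then η⁻¹ * ((S.card : ℕ) : ℝ)⁻¹ * ∑ y ∈ S, GG η u φ (S.erase y) else 0) +
      η⁻¹ * ((S.card : ℕ) : ℝ)⁻¹ * ∑ a ∈ ({-1, 0, 1} : Finset ℤ), omegaCoef a *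
        ∑ y ∈ S, ∑ A ∈ (S.erase y).powerset, (((S.card - 1).choose A.card : ℕ) : ℝ)⁻¹ *
          (GG η u φ ((S.erase y) \ A) * GG η (v+a) φ A) := by
  classical
  have hsplit : ∀ B ∈ S.powerset,
      ((S.card.choose B.card : ℕ) : ℝ)⁻¹ * (GG η u φ (S \ B) * FF η v φ B) =
      (if B.card = 1 ∧ v = 1 then
          ((S.card.choose B.card : ℕ) : ℝ)⁻¹ * GG η u φ (S \ B) * η⁻¹ else 0)
      + ∑ a ∈ ({-1, 0, 1} : Finset ℤ), ∑ y ∈ B,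
          (((S.card.choose B.card : ℕ) : ℝ)⁻¹ * ((B.card : ℕ) : ℝ)⁻¹ * η⁻¹ * omegaCoef a) *
            (GG η u φ (S \ B) * GG η (v+a) φ (B.erase y)) := by
    intro B _
    rw [FF_formula η v hv φ B]
    simp only [mul_add, Finset.mul_sum]
    congr 1
    · by_cases hb : B.card = 1 ∧ v = 1 <;> simp [hb] <;> ring
    · refine Finset.sum_congr rfl fun a _ => Finset.sum_congr rfl fun y _ => by ring
  rw [Finset.sum_congr rfl hsplit, Finset.sum_add_distrib]
  congr 1
  · -- boundary piece
    by_cases hv1 : v = 1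
    · rw [if_pos hv1]
      have hb : ∀ B ∈ S.powerset,
          (if B.card = 1 ∧ v = 1 then
            ((S.card.choose B.card : ℕ) : ℝ)⁻¹ * GG η u φ (S \ B) * η⁻¹ else 0)
          = (if B.card = 1 then
            ((S.card.choose B.card : ℕ) : ℝ)⁻¹ * GG η u φ (S \ B) * η⁻¹ else 0) := by
        intro B _
        by_cases h : B.card = 1 <;> simp [h, hv1]
      rw [Finset.sum_congr rfl hb, ← Finset.sum_filter, powerset_card_one_sum]
      rw [Finset.mul_sum]
      refine Finset.sum_congr rfl fun y hy => ?_
      rw [Finset.card_singleton, Nat.choose_one_right, Finset.sdiff_singleton_eq_erase]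
      ring
    · rw [if_neg hv1]
      apply Finset.sum_eq_zero
      intro B _
      rw [if_neg (by tauto)]
  · -- main piece
    rw [Finset.sum_comm]
    simp only [Finset.mul_sum]
    refine Finset.sum_congr rfl fun a _ => ?_
    rw [powerset_mem_swap S (fun B y =>
      (((S.card.choose B.card : ℕ) : ℝ)⁻¹ * ((B.card : ℕ) : ℝ)⁻¹ * η⁻¹ * omegaCoef a) *
        (GG η u φ (S \ B) * GG η (v+a) φ (B.erase y)))]
    refine Finset.sum_congr rfl fun y hy => Finset.sum_congr rfl fun A hA => ?_
    have hAsub : A ⊆ S.erase y := Finset.mem_powerset.mp hA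
    have hyA : y ∉ A := fun h => (Finset.notMem_erase y S) (hAsub h)
    have hcard : (insert y A).card = A.card + 1 := Finset.card_insert_of_notMem hyA
    have h1 : (insert y A).erase y = A := Finset.erase_insert hyA
    have h2 : S \ insert y A = (S.erase y) \ A := by
      rw [Finset.sdiff_insert, ← Finset.erase_sdiff_comm]
    rw [hcard, h1, h2]
    have hw := choose_inv_id S.card A.card hJ
    linear_combination (η⁻¹ * omegaCoef a *
      (GG η u φ ((S.erase y) \ A) * GG η (v+a) φ A)) * hw

lemma pf_algebra (c d1 d2 F1 F2 kk ll : ℝ) (h1 : d1 ≠ 0) (h2 : d2 ≠ 0)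
    (h12 : d1 + d2 ≠ 0) :
    c * ((-2 * kk / d1 * F1) * (-2 * ll / d2 * F2)) =
      -2 * ll / (d1 + d2) * (c * ((-2 * kk / d1 * F1) * F2)) +
      -2 * kk / (d1 + d2) * (c * ((-2 * ll / d2 * F2) * F1)) := by
  field_simp
  ring

theorem main_GG (η : ℝ) (hη : η ≠ 0) (φ : ℕ → ℝ) :
    ∀ (n : ℕ) (S : Finset ℕ), S.card = n →
      (∀ A : Finset ℕ, A ⊆ S → ∀ m : ℕ, 1 ≤ m → m ≤ A.card → (m : ℝ) * η ≠ ∑ i ∈ A, φ i) →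
      ∀ k l : ℤ, 1 ≤ k → 1 ≤ l →
      GG η (k + l) φ S = (1/2) * ∑ A ∈ S.powerset,
        ((S.card.choose A.card : ℕ) : ℝ)⁻¹ * (GG η k φ A * GG η l φ (S \ A)) := by
  intro n
  induction n using Nat.strong_induction_on with
  | _ n ih =>
  intro S hn hres k l hk hl
  classical
  have hres' : ∀ A : Finset ℕ, A ⊆ S → ∀ m : ℤ, 1 ≤ m → m ≤ (A.card : ℤ) →
      (m : ℝ) * η - ∑ i ∈ A, φ i ≠ 0 := by
    intro A hA m h1 h2 hcon
    have hcast : ((m.toNat : ℕ) : ℝ) = (m : ℝ) := by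
      rw [← Int.cast_natCast, Int.toNat_of_nonneg (by omega)]
    exact hres A hA m.toNat (by omega) (by omega) (by rw [hcast]; linarith)
  rcases lt_or_ge ((S.card : ℤ)) (k + l) with hKJ | hKJ
  · -- degenerate case K > J : both sides vanish
    have hz : ∀ A ∈ S.powerset,
        ((S.card.choose A.card : ℕ) : ℝ)⁻¹ * (GG η k φ A * GG η l φ (S \ A)) = 0 := by
      intro A hA
      have hsub := Finset.mem_powerset.mp hA
      by_cases h1 : (A.card : ℤ) < k
      · rw [GG_zero η k φ A (Or.inr h1), zero_mul, mul_zero]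
      · have hc : (S \ A).card = S.card - A.card := Finset.card_sdiff_of_subset hsub
        have hcle : A.card ≤ S.card := Finset.card_le_card hsub
        rw [GG_zero η l φ (S \ A) (Or.inr (by rw [hc]; push_cast; omega)), mul_zero, mul_zero]
    rw [Finset.sum_eq_zero hz, GG_zero η (k+l) φ S (Or.inr hKJ), mul_zero]
  · -- main case
    have hJ2 : 2 ≤ S.card := by omega
    have hD0 : ((k + l : ℤ) : ℝ) * η - ∑ i ∈ S, φ i ≠ 0 :=
      hres' S (subset_refl S) (k+l) (by omega) hKJ
    -- partial fraction decomposition per subset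
    have hPF : ∀ A ∈ S.powerset,
        ((S.card.choose A.card : ℕ) : ℝ)⁻¹ * (GG η k φ A * GG η l φ (S \ A)) =
        (-2*(l : ℝ)/(((k + l : ℤ) : ℝ) * η - ∑ i ∈ S, φ i)) *
          (((S.card.choose A.card : ℕ) : ℝ)⁻¹ * (GG η k φ A * FF η l φ (S \ A)))
        + (-2*(k : ℝ)/(((k + l : ℤ) : ℝ) * η - ∑ i ∈ S, φ i)) *
          (((S.card.choose A.card : ℕ) : ℝ)⁻¹ * (GG η l φ (S \ A) * FF η k φ A)) := by
      intro A hA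
      have hsub := Finset.mem_powerset.mp hA
      by_cases hFk : FF η k φ A = 0
      · rw [GG_zero_of η k φ A (Or.inl hFk), hFk]; ring
      by_cases hFl : FF η l φ (S \ A) = 0
      · rw [GG_zero_of η l φ (S \ A) (Or.inl hFl), hFl]; ring
      have hkA : k ≤ (A.card : ℤ) := by
        by_contra hcon
        exact hFk (FF_zero' η k φ A (by omega))
      have hlB : l ≤ ((S \ A).card : ℤ) := by
        by_contra hcon
        exact hFl (FF_zero' η l φ (S \ A) (by omega))
      have hd1 : (k : ℝ) * η - ∑ i ∈ A, φ i ≠ 0 := hres' A hsub k hk hkA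
      have hd2 : (l : ℝ) * η - ∑ i ∈ (S \ A), φ i ≠ 0 :=
        hres' (S \ A) Finset.sdiff_subset l hl hlB
      have hDsum : ((k + l : ℤ) : ℝ) * η - ∑ i ∈ S, φ i =
          ((k : ℝ) * η - ∑ i ∈ A, φ i) + ((l : ℝ) * η - ∑ i ∈ (S \ A), φ i) := by
        rw [← Finset.sum_sdiff hsub]
        push_cast
        ring
      have hDD : (((k : ℝ) * η - ∑ i ∈ A, φ i) + ((l : ℝ) * η - ∑ i ∈ (S \ A), φ i)) ≠ 0 := by
        rw [← hDsum]; exact hD0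
      simp only [GG]
      rw [hDsum]
      exact pf_algebra _ _ _ _ _ _ _ hd1 hd2 hDD
    -- the inner convolution sums via the induction hypothesis
    have hH : ∀ y ∈ S, ∀ u w : ℤ, 1 ≤ u → 1 ≤ w →
        ∑ A ∈ (S.erase y).powerset, (((S.card - 1).choose A.card : ℕ) : ℝ)⁻¹ *
          (GG η u φ ((S.erase y) \ A) * GG η w φ A) = 2 * GG η (w + u) φ (S.erase y) := by
      intro y hy u w hu hw
      have hcy : (S.erase y).card = n - 1 := by rw [Finset.card_erase_of_mem hy, hn]
      have hihy := ih (n-1) (by omega) (S.erase y) hcy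
        (fun A hA m hm1 hm2 => hres A (hA.trans (Finset.erase_subset y S)) m hm1 hm2) w u hw hu
      rw [hihy, hcy, ← mul_assoc]
      norm_num
      have hcc : S.card - 1 = n - 1 := by omega
      rw [hcc]
      exact Finset.sum_congr rfl fun A _ => by ring
    have hH0 : ∀ y ∈ S, ∀ u : ℤ,
        ∑ A ∈ (S.erase y).powerset, (((S.card - 1).choose A.card : ℕ) : ℝ)⁻¹ *
          (GG η u φ ((S.erase y) \ A) * GG η 0 φ A) = 0 := by
      intro y hy u
      apply Finset.sum_eq_zero
      intro A _
      rw [GG_zero_of η 0 φ A (Or.inr rfl), mul_zero, mul_zero]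
    -- the two expanded sums
    have hE : ∀ u v : ℤ, 1 ≤ u → 1 ≤ v → u + v = k + l →
        ∑ B ∈ S.powerset, ((S.card.choose B.card : ℕ) : ℝ)⁻¹ *
          (GG η u φ (S \ B) * FF η v φ B) =
        η⁻¹ * ((S.card : ℕ) : ℝ)⁻¹ *
          ((∑ y ∈ S, GG η (k+l+(-1)) φ (S.erase y)) -
            2 * (∑ y ∈ S, GG η (k+l) φ (S.erase y)) +
            (∑ y ∈ S, GG η (k+l+1) φ (S.erase y))) := by
      intro u v hu hv huv
      rw [T_expand η φ S (by omega) u v hv]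
      rw [omega_sum (fun a => ∑ y ∈ S, ∑ A ∈ (S.erase y).powerset,
        (((S.card - 1).choose A.card : ℕ) : ℝ)⁻¹ *
          (GG η u φ ((S.erase y) \ A) * GG η (v+a) φ A))]
      have hXp : (∑ y ∈ S, ∑ A ∈ (S.erase y).powerset,
          (((S.card - 1).choose A.card : ℕ) : ℝ)⁻¹ *
            (GG η u φ ((S.erase y) \ A) * GG η (v+1) φ A)) =
          2 * ∑ y ∈ S, GG η (k+l+1) φ (S.erase y) := by
        rw [Finset.mul_sum]
        refine Finset.sum_congr rfl fun y hy => ?_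
        rw [hH y hy u (v+1) hu (by omega), show v + 1 + u = k + l + 1 by omega]
      have hX0 : (∑ y ∈ S, ∑ A ∈ (S.erase y).powerset,
          (((S.card - 1).choose A.card : ℕ) : ℝ)⁻¹ *
            (GG η u φ ((S.erase y) \ A) * GG η (v+0) φ A)) =
          2 * ∑ y ∈ S, GG η (k+l) φ (S.erase y) := by
        rw [Finset.mul_sum]
        refine Finset.sum_congr rfl fun y hy => ?_
        rw [hH y hy u (v+0) hu (by omega), show v + 0 + u = k + l by omega]
      rw [hXp, hX0]
      by_cases hv1 : v = 1
      · -- boundary term present, a = -1 term vanishes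
        rw [if_pos hv1]
        have hXm : (∑ y ∈ S, ∑ A ∈ (S.erase y).powerset,
            (((S.card - 1).choose A.card : ℕ) : ℝ)⁻¹ *
              (GG η u φ ((S.erase y) \ A) * GG η (v+(-1)) φ A)) = 0 := by
          apply Finset.sum_eq_zero
          intro y hy
          rw [show v + (-1) = 0 by omega]
          exact hH0 y hy u
        have hbd : (∑ y ∈ S, GG η u φ (S.erase y)) =
            ∑ y ∈ S, GG η (k+l+(-1)) φ (S.erase y) := by
          rw [show k + l + (-1) = u by omega]
        rw [hXm, hbd]
        ring
      · -- no boundary term, a = -1 term via IH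
        rw [if_neg hv1]
        have hXm : (∑ y ∈ S, ∑ A ∈ (S.erase y).powerset,
            (((S.card - 1).choose A.card : ℕ) : ℝ)⁻¹ *
              (GG η u φ ((S.erase y) \ A) * GG η (v+(-1)) φ A)) =
            2 * ∑ y ∈ S, GG η (k+l+(-1)) φ (S.erase y) := by
          rw [Finset.mul_sum]
          refine Finset.sum_congr rfl fun y hy => ?_
          rw [hH y hy u (v+(-1)) hu (by omega), show v + (-1) + u = k + l + (-1) by omega]
        rw [hXm]
        ring
    -- swap the first sum into T-form
    have hswap : ∑ A ∈ S.powerset, ((S.card.choose A.card : ℕ) : ℝ)⁻¹ *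
          (GG η k φ A * FF η l φ (S \ A))
        = ∑ B ∈ S.powerset, ((S.card.choose B.card : ℕ) : ℝ)⁻¹ *
          (GG η k φ (S \ B) * FF η l φ B) := by
      rw [powerset_compl_sum S (fun X Y =>
        ((S.card.choose X.card : ℕ) : ℝ)⁻¹ * (GG η k φ X * FF η l φ Y))]
      refine Finset.sum_congr rfl fun A hA => ?_
      have hsub := Finset.mem_powerset.mp hA
      have hcs : (S \ A).card = S.card - A.card := Finset.card_sdiff_of_subset hsub
      rw [hcs, Nat.choose_symm (Finset.card_le_card hsub)]
    -- left-hand side via the recursion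
    rw [GG, FF_rec η (k+l) φ S hJ2]
    rw [omega_sum (fun a => ∑ x ∈ S, GG η (k+l+a) φ (S.erase x))]
    -- right-hand side
    rw [Finset.sum_congr rfl hPF, Finset.sum_add_distrib, ← Finset.mul_sum, ← Finset.mul_sum]
    rw [hswap, hE k l hk hl rfl, hE l k hl hk (by ring)]
    push_cast
    ring

-- the set of "first m" indices inside `Fin n`
lemma filter_lt_image_val (n m : ℕ) (hm : m ≤ n) :
    ((Finset.univ : Finset (Fin n)).filter (fun i : Fin n => i.val < m)).image Fin.val =
      Finset.range m := by
  ext x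
  simp only [Finset.mem_image, Finset.mem_filter, Finset.mem_univ, true_and, Finset.mem_range]
  constructor
  · rintro ⟨j, hj, rfl⟩; exact hj
  · intro hx; exact ⟨⟨x, by omega⟩, hx, rfl⟩

lemma filter_lt_card (n m : ℕ) (hm : m ≤ n) :
    ((Finset.univ : Finset (Fin n)).filter (fun i : Fin n => i.val < m)).card = m := by
  have := filter_lt_image_val n m hm
  have h2 := Finset.card_image_of_injective
    ((Finset.univ : Finset (Fin n)).filter (fun i : Fin n => i.val < m)) Fin.val_injective
  rw [this, Finset.card_range] at h2
  omega

lemma powersetCard_pred_sum (n : ℕ) (H : Finset (Fin (n+1)) → ℝ) :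
    ∑ B ∈ Finset.powersetCard n (Finset.univ : Finset (Fin (n+1))), H B =
      ∑ t : Fin (n+1), H (Finset.univ.erase t) := by
  classical
  symm
  apply Finset.sum_bij (fun (t : Fin (n+1)) (_ : t ∈ Finset.univ) => Finset.univ.erase t)
  · intro t _
    rw [Finset.mem_powersetCard]
    refine ⟨Finset.erase_subset _ _ |>.trans (Finset.subset_univ _), ?_⟩
    rw [Finset.card_erase_of_mem (Finset.mem_univ t), Finset.card_univ, Fintype.card_fin]
    omega
  · intro t1 _ t2 _ h
    by_contra hne
    have : t1 ∈ Finset.univ.erase t2 := Finset.mem_erase.mpr ⟨hne, Finset.mem_univ t1⟩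
    rw [← h] at this
    exact (Finset.notMem_erase t1 Finset.univ) this
  · intro B hB
    rw [Finset.mem_powersetCard] at hB
    have hc : Bᶜ.card = 1 := by
      rw [Finset.card_compl, Fintype.card_fin, hB.2]
      omega
    obtain ⟨t, ht⟩ := Finset.card_eq_one.mp hc
    refine ⟨t, Finset.mem_univ t, ?_⟩
    have : B = Bᶜᶜ := by simp
    rw [this, ht]
    simp [Finset.compl_eq_univ_sdiff, Finset.sdiff_singleton_eq_erase]
  · intro t _; rfl

lemma erase_univ_image_val (n : ℕ) (t : Fin (n+1)) :
    ((Finset.univ : Finset (Fin (n+1))).erase t).image Fin.val =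
      (Finset.range (n+1)).erase (t : ℕ) := by
  ext x
  simp only [Finset.mem_image, Finset.mem_erase, Finset.mem_univ, and_true, true_and,
    Finset.mem_range]
  constructor
  · rintro ⟨j, hj, rfl⟩
    exact ⟨fun h => hj (Fin.val_injective h), j.isLt⟩
  · rintro ⟨hne, hx⟩
    exact ⟨⟨x, hx⟩, fun h => hne (congrArg Fin.val h), rfl⟩

lemma fAux_eq : ∀ (n : ℕ) (K : ℤ) (η : ℝ) (φ : ℕ → ℝ),
    fAux n K η φ = FF η K φ (Finset.range n) := by
  intro n
  induction n using Nat.strong_induction_on with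
  | _ n ih =>
  intro K η φ
  match n with
  | 0 => rw [show Finset.range 0 = ∅ from rfl, FF_empty]; rfl
  | 1 =>
    rw [FF_card_one η K φ _ (Finset.card_range 1)]
    rfl
  | (m+2) =>
    rw [fAux]
    by_cases hK : 0 ≤ K ∧ K ≤ (m : ℤ) + 2
    · rw [if_pos hK]
      have hper : ∀ a : ℤ, ∀ σ : Equiv.Perm (Fin (m+2)),
          (fun ψ : ℕ → ℝ =>
              (-2 * ((K + a : ℤ) : ℝ)) /
                  (((K + a : ℤ) : ℝ) * η - ∑ i ∈ Finset.range (m+1), ψ i) *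
                fAux (m+1) (K+a) η ψ)
            (fun i => if h : i < m+2 then φ (σ ⟨i, h⟩) else φ i) =
          GG η (K+a) φ
            ((((Finset.univ : Finset (Fin (m+2))).filter
                (fun i : Fin (m+2) => i.val < m+1)).image ⇑σ).image Fin.val) := by
        intro a σ
        set u : ℕ → ℕ := fun i => if h : i < m+2 then ((σ ⟨i, h⟩ : Fin (m+2)) : ℕ) else i with hu
        have hcomp : (fun i => if h : i < m+2 then φ (σ ⟨i, h⟩) else φ i) = φ ∘ u := by
          funext i
          by_cases h : i < m+2 <;> simp [hu, h]
        have huinj : Set.InjOn u (Finset.range (m+1)) := by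
          intro x hx y hy hxy
          simp only [Finset.coe_range, Set.mem_Iio] at hx hy
          simp only [hu, dif_pos (by omega : x < m+2), dif_pos (by omega : y < m+2)] at hxy
          have := σ.injective (Fin.val_injective hxy)
          exact congrArg Fin.val this
        have himg : (Finset.range (m+1)).image u =
            ((((Finset.univ : Finset (Fin (m+2))).filter
                (fun i : Fin (m+2) => i.val < m+1)).image ⇑σ).image Fin.val) := by
          rw [Finset.image_image]
          ext x
          simp only [Finset.mem_image, Finset.mem_range, Finset.mem_filter, Finset.mem_univ,
            true_and, Function.comp_apply]
          constructor
          · rintro ⟨i, hi, rfl⟩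
            exact ⟨⟨i, by omega⟩, hi, by simp [hu, dif_pos (by omega : i < m+2)]⟩
          · rintro ⟨j, hj, rfl⟩
            exact ⟨(j : ℕ), hj, by simp [hu, dif_pos j.isLt]⟩
        rw [hcomp]
        beta_reduce
        rw [ih (m+1) (by omega) (K+a) η (φ ∘ u)]
        rw [show (Finset.range (m+1)) = (Finset.range (m+1)) from rfl]
        rw [FF_image (Finset.range (m+1)).card η (K+a) φ u (Finset.range (m+1)) rfl huinj]
        have hsum : ∑ i ∈ Finset.range (m+1), (φ ∘ u) i =
            ∑ i ∈ (Finset.range (m+1)).image u, φ i := by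
          rw [Finset.sum_image (fun x hx y hy h => huinj (by simpa using hx) (by simpa using hy) h)]
          rfl
        rw [hsum, himg, GG]
      have hinner : ∀ a : ℤ,
          ∑ σ : Equiv.Perm (Fin (m+2)),
            (fun ψ : ℕ → ℝ =>
              (-2 * ((K + a : ℤ) : ℝ)) /
                  (((K + a : ℤ) : ℝ) * η - ∑ i ∈ Finset.range (m+1), ψ i) *
                fAux (m+1) (K+a) η ψ)
            (fun i => if h : i < m+2 then φ (σ ⟨i, h⟩) else φ i) =
          (((m+1).factorial * 1 : ℕ) : ℝ) *
            ∑ x ∈ Finset.range (m+2), GG η (K+a) φ ((Finset.range (m+2)).erase x) := by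
        intro a
        rw [Finset.sum_congr rfl (fun σ _ => hper a σ)]
        rw [sum_perm_image ((Finset.univ : Finset (Fin (m+2))).filter
            (fun i : Fin (m+2) => i.val < m+1)) (filter_lt_card (m+2) (m+1) (by omega))
            (fun B => GG η (K+a) φ (B.image Fin.val))]
        rw [show m + 2 - (m+1) = 1 from by omega]
        congr 1
        rw [powersetCard_pred_sum (m+1) (fun B => GG η (K+a) φ (B.image Fin.val))]
        rw [← Fin.sum_univ_eq_sum_range (fun x => GG η (K+a) φ ((Finset.range (m+2)).erase x))
          (m+2)]
        refine Finset.sum_congr rfl fun t _ => ?_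
        rw [erase_univ_image_val (m+1) t]
      rw [Finset.sum_congr rfl (fun a _ => by rw [hinner a])]
      rw [FF_rec η K φ (Finset.range (m+2)) (by rw [Finset.card_range]; omega), Finset.card_range]
      rw [Finset.mul_sum, Finset.mul_sum]
      refine Finset.sum_congr rfl fun a _ => ?_
      have hfac : ((Nat.factorial (m+2) : ℕ) : ℝ)⁻¹ * (((m+1).factorial * 1 : ℕ) : ℝ) =
          (((m+2 : ℕ)) : ℝ)⁻¹ := by
        rw [Nat.factorial_succ (m+1)]
        have h1 : ((m+1).factorial : ℝ) ≠ 0 := by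
          exact_mod_cast Nat.cast_ne_zero.mpr (Nat.factorial_ne_zero (m+1))
        have h2 : (((m+2 : ℕ)) : ℝ) ≠ 0 := by positivity
        push_cast
        field_simp
        ring
      push_cast at hfac ⊢
      calc η⁻¹ * (omegaCoef a * ((Nat.factorial (m+2) : ℝ)⁻¹ *
            (((m+1).factorial * 1 : ℝ) *
              ∑ x ∈ Finset.range (m+2), GG η (K+a) φ ((Finset.range (m+2)).erase x))))
          = (((Nat.factorial (m+2) : ℝ))⁻¹ * (((m+1).factorial * 1 : ℝ))) *
            (η⁻¹ * (omegaCoef a *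
              ∑ x ∈ Finset.range (m+2), GG η (K+a) φ ((Finset.range (m+2)).erase x))) := by
            ring
        _ = _ := by rw [hfac]; ring
    · rw [if_neg hK]
      symm
      apply FF_zero'
      rw [Finset.card_range]
      push_cast
      omega

lemma gAux_eq (n : ℕ) (K : ℤ) (η : ℝ) (φ : ℕ → ℝ) :
    gAux n K η φ = GG η K φ (Finset.range n) := by
  rw [gAux, fAux_eq, GG]

lemma compl_image_perm {N : ℕ} (D : Finset (Fin N)) (σ : Equiv.Perm (Fin N)) :
    Finset.univ \ (D.image ⇑σ) = (Finset.univ \ D).image ⇑σ := by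
  ext x
  simp only [Finset.mem_sdiff, Finset.mem_univ, true_and, Finset.mem_image]
  constructor
  · intro hx
    exact ⟨σ⁻¹ x, fun h => hx ⟨σ⁻¹ x, h, by simp⟩, by simp⟩
  · rintro ⟨j, hj, rfl⟩ ⟨j', hj', hjj⟩
    exact hj (σ.injective hjj ▸ hj')

lemma symProd_eq (I J' : ℕ) (k l : ℤ) (η : ℝ) (φ : ℕ → ℝ) :
    symProd I J' (gAux I k) (gAux J' l) η φ =
      (((I+J').choose I : ℕ) : ℝ)⁻¹ *
        ∑ A ∈ Finset.powersetCard I (Finset.range (I+J')),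
          GG η k φ A * GG η l φ ((Finset.range (I+J')) \ A) := by
  classical
  set N := I + J' with hN
  set D : Finset (Fin N) := Finset.univ.filter (fun i : Fin N => i.val < I) with hD
  have hDcard : D.card = I := filter_lt_card N I (by omega)
  have hterm : ∀ σ : Equiv.Perm (Fin N),
      gAux I k η (fun i => if h : i < N then φ (σ ⟨i, h⟩) else φ i) *
      gAux J' l η (fun i => if h : i + I < N then φ (σ ⟨i + I, h⟩) else φ (i + I)) =
      GG η k φ (((D.image ⇑σ).image Fin.val)) *
      GG η l φ (((Finset.univ \ (D.image ⇑σ)).image Fin.val)) := by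
    intro σ
    set u1 : ℕ → ℕ := fun i => if h : i < N then ((σ ⟨i, h⟩ : Fin N) : ℕ) else i with hu1
    set u2 : ℕ → ℕ := fun i => if h : i + I < N then ((σ ⟨i + I, h⟩ : Fin N) : ℕ) else i + I
      with hu2
    have hc1 : (fun i => if h : i < N then φ (σ ⟨i, h⟩) else φ i) = φ ∘ u1 := by
      funext i; by_cases h : i < N <;> simp [hu1, h]
    have hc2 : (fun i => if h : i + I < N then φ (σ ⟨i + I, h⟩) else φ (i + I)) = φ ∘ u2 := by
      funext i; by_cases h : i + I < N <;> simp [hu2, h]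
    have hinj1 : Set.InjOn u1 (Finset.range I) := by
      intro x hx y hy hxy
      simp only [Finset.coe_range, Set.mem_Iio] at hx hy
      simp only [hu1, dif_pos (by omega : x < N), dif_pos (by omega : y < N)] at hxy
      exact congrArg Fin.val (σ.injective (Fin.val_injective hxy))
    have hinj2 : Set.InjOn u2 (Finset.range J') := by
      intro x hx y hy hxy
      simp only [Finset.coe_range, Set.mem_Iio] at hx hy
      simp only [hu2, dif_pos (by omega : x + I < N), dif_pos (by omega : y + I < N)] at hxy
      have := congrArg Fin.val (σ.injective (Fin.val_injective hxy))
      simpa using this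
    have himg1 : (Finset.range I).image u1 = (D.image ⇑σ).image Fin.val := by
      rw [Finset.image_image]
      ext x
      simp only [Finset.mem_image, Finset.mem_range, hD, Finset.mem_filter, Finset.mem_univ,
        true_and, Function.comp_apply]
      constructor
      · rintro ⟨i, hi, rfl⟩
        exact ⟨⟨i, by omega⟩, hi, by simp [hu1, dif_pos (show i < N by omega)]⟩
      · rintro ⟨j, hj, rfl⟩
        exact ⟨(j : ℕ), hj, by simp [hu1, dif_pos j.isLt]⟩
    have himg2 : (Finset.range J').image u2 = ((Finset.univ \ D).image ⇑σ).image Fin.val := by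
      rw [Finset.image_image]
      ext x
      simp only [Finset.mem_image, Finset.mem_range, hD, Finset.mem_sdiff, Finset.mem_filter,
        Finset.mem_univ, true_and, Function.comp_apply]
      constructor
      · rintro ⟨i, hi, rfl⟩
        refine ⟨⟨i + I, by omega⟩, by simp, by simp [hu2, dif_pos (show i + I < N by omega)]⟩
      · rintro ⟨j, hj, rfl⟩
        have hjI : I ≤ (j : ℕ) := by
          by_contra hcon
          exact hj (by simpa using (by omega : (j : ℕ) < I))
        refine ⟨(j : ℕ) - I, by omega, ?_⟩
        have : (j : ℕ) - I + I = (j : ℕ) := by omega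
        simp [hu2, this, dif_pos j.isLt]
    rw [hc1, hc2, gAux_eq, gAux_eq]
    rw [GG_image η k φ u1 (Finset.range I) hinj1, GG_image η l φ u2 (Finset.range J') hinj2]
    rw [himg1, himg2, compl_image_perm]
  rw [symProd]
  rw [Finset.sum_congr rfl (fun σ _ => hterm σ)]
  rw [sum_perm_image D hDcard (fun B => GG η k φ (B.image Fin.val) *
    GG η l φ ((Finset.univ \ B).image Fin.val))]
  -- convert Fin-level powersetCard sum to ℕ-level
  have hbij : ∑ B ∈ Finset.powersetCard I (Finset.univ : Finset (Fin N)),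
      GG η k φ (B.image Fin.val) * GG η l φ ((Finset.univ \ B).image Fin.val) =
      ∑ A ∈ Finset.powersetCard I (Finset.range N),
        GG η k φ A * GG η l φ ((Finset.range N) \ A) := by
    apply Finset.sum_bij (fun (B : Finset (Fin N)) (_ : B ∈ _) => B.image Fin.val)
    · intro B hB
      rw [Finset.mem_powersetCard] at hB ⊢
      constructor
      · intro x hx
        obtain ⟨j, _, rfl⟩ := Finset.mem_image.mp hx
        exact Finset.mem_range.mpr j.isLt
      · rw [Finset.card_image_of_injective _ Fin.val_injective, hB.2]
    · intro B1 h1 B2 h2 h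
      ext j
      constructor
      · intro hj
        have : (j : ℕ) ∈ B2.image Fin.val := h ▸ Finset.mem_image_of_mem _ hj
        obtain ⟨j', hj', hjj⟩ := Finset.mem_image.mp this
        exact Fin.val_injective hjj ▸ hj'
      · intro hj
        have : (j : ℕ) ∈ B1.image Fin.val := h ▸ Finset.mem_image_of_mem _ hj
        obtain ⟨j', hj', hjj⟩ := Finset.mem_image.mp this
        exact Fin.val_injective hjj ▸ hj'
    · intro A hA
      rw [Finset.mem_powersetCard] at hA
      have himg : (Finset.univ.filter (fun i : Fin N => (i : ℕ) ∈ A)).image Fin.val = A := by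
        ext x
        simp only [Finset.mem_image, Finset.mem_filter, Finset.mem_univ, true_and]
        constructor
        · rintro ⟨j, hj, rfl⟩; exact hj
        · intro hx
          have hxN : x < N := Finset.mem_range.mp (hA.1 hx)
          exact ⟨⟨x, hxN⟩, hx, rfl⟩
      refine ⟨Finset.univ.filter (fun i : Fin N => (i : ℕ) ∈ A), ?_, himg⟩
      rw [Finset.mem_powersetCard]
      refine ⟨Finset.subset_univ _, ?_⟩
      have hc2 : (Finset.univ.filter (fun i : Fin N => (i : ℕ) ∈ A)).card = A.card := by
        conv_rhs => rw [← himg]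
        rw [Finset.card_image_of_injective _ Fin.val_injective]
      rw [hc2, hA.2]
    · intro B hB
      have hset : (Finset.univ \ B).image Fin.val = Finset.range N \ (B.image Fin.val) := by
        ext x
        simp only [Finset.mem_image, Finset.mem_sdiff, Finset.mem_univ, true_and,
          Finset.mem_range]
        constructor
        · rintro ⟨j, hj, rfl⟩
          refine ⟨j.isLt, fun hcon => ?_⟩
          obtain ⟨j', hj', hjj⟩ := hcon
          exact hj (Fin.val_injective hjj ▸ hj')
        · rintro ⟨hxN, hx⟩
          exact ⟨⟨x, hxN⟩, fun hcon => hx ⟨⟨x, hxN⟩, hcon, rfl⟩, rfl⟩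
      rw [hset]
  rw [hbij]
  rw [← mul_assoc]
  congr 1
  have hIN : I ≤ N := by omega
  have hch : (N.choose I : ℝ) * ((I.factorial * (N - I).factorial : ℕ) : ℝ) =
      (N.factorial : ℝ) := by
    exact_mod_cast congrArg (fun x : ℕ => (x : ℝ))
      (by rw [← mul_assoc]; exact Nat.choose_mul_factorial_mul_factorial hIN)
  have h1 : (N.factorial : ℝ) ≠ 0 :=
    Nat.cast_ne_zero.mpr (Nat.factorial_ne_zero N)
  have h2 : (N.choose I : ℝ) ≠ 0 :=
    Nat.cast_ne_zero.mpr (Nat.pos_iff_ne_zero.mp (Nat.choose_pos hIN))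
  rw [show (I + J').factorial = N.factorial from rfl]
  field_simp
  push_cast at hch ⊢
  linarith [hch]

theorem stmt6 (J K k : ℕ) (hKJ : K ≤ J) (hk0 : 0 < k) (hkK : k < K)
    (η : ℝ) (hη : η ≠ 0) (φ : ℕ → ℝ)
    (hres : ∀ K' J' : ℕ, 1 ≤ K' → K' ≤ J' → J' ≤ J →
      ∀ ι : Fin J' → Fin J, Function.Injective ι →
        (K' : ℝ) * η ≠ ∑ i, φ (ι i : ℕ)) :
    gAux J (K : ℤ) η φ =
      (1 / 2) * ∑ j ∈ Finset.range (J + 1),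
        symProd j (J - j) (gAux j (k : ℤ)) (gAux (J - j) ((K : ℤ) - (k : ℤ))) η φ := by
  classical
  have hres2 : ∀ A : Finset ℕ, A ⊆ Finset.range J → ∀ m : ℕ, 1 ≤ m → m ≤ A.card →
      (m : ℝ) * η ≠ ∑ i ∈ A, φ i := by
    intro A hA m hm1 hm2
    have hcard : A.card ≤ J := by
      have := Finset.card_le_card hA
      rwa [Finset.card_range] at this
    have hmem : ∀ i : Fin A.card, ((A.orderIsoOfFin rfl i : ℕ)) < J := by
      intro i
      have := (A.orderIsoOfFin rfl i).2
      exact Finset.mem_range.mp (hA this)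
    set ι : Fin A.card → Fin J := fun i => ⟨(A.orderIsoOfFin rfl i : ℕ), hmem i⟩ with hι
    have hιinj : Function.Injective ι := by
      intro i j h
      have h1 : ((A.orderIsoOfFin rfl i : ℕ)) = ((A.orderIsoOfFin rfl j : ℕ)) :=
        congrArg Fin.val h
      exact (A.orderIsoOfFin rfl).injective (Subtype.ext h1)
    have hsum : ∑ i, φ ((ι i : Fin J) : ℕ) = ∑ i ∈ A, φ i := by
      rw [← Finset.sum_coe_sort A φ]
      exact Fintype.sum_equiv (A.orderIsoOfFin rfl).toEquiv _ _ (fun i => rfl)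
    have := hres m A.card hm1 hm2 hcard ι hιinj
    rwa [hsum] at this
  rw [gAux_eq]
  have hmain := main_GG η hη φ J (Finset.range J) (Finset.card_range J) hres2
    (k : ℤ) ((K : ℤ) - (k : ℤ)) (by omega) (by omega)
  rw [show (k : ℤ) + ((K : ℤ) - (k : ℤ)) = (K : ℤ) from by ring] at hmain
  rw [Finset.card_range] at hmain
  rw [hmain]
  congr 1
  rw [Finset.sum_powerset, Finset.card_range]
  refine Finset.sum_congr rfl fun j hj => ?_
  have hjJ : j ≤ J := by
    have := Finset.mem_range.mp hj
    omega
  rw [symProd_eq j (J - j) (k : ℤ) ((K : ℤ) - (k : ℤ)) η φ]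
  rw [show j + (J - j) = J from by omega]
  rw [Finset.mul_sum]
  refine Finset.sum_congr rfl fun A hA => ?_
  rw [(Finset.mem_powersetCard.mp hA).2]
end

section
/- Let J ≥ 1 be an integer. Then for every point (η; φ_1,…,φ_J) ∈ ℝ^{1+J} such that η ≠ 0 and K'η ≠ φ_{i_1} + ⋯ + φ_{i_{J'}} for all integers 1 ≤ K' ≤ J' ≤ J and all pairwise distinct indices i_1,…,i_{J'} ∈ {1,…,J}, one has g_{J,1}(η; φ_1,…,φ_J) = −(2/η^J) · (1/J!) Σ_{σ ∈ S_J} h_J(η; φ_{σ(1)},…,φ_{σ(J)}). -/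
open scoped BigOperators ENNReal
open MeasureTheory

/-- The functions `h_J` of `1+J` real variables (extra variables beyond the first `J`
are ignored), defined recursively by `h_0(η) = 1` and
`h_J(η;φ_1,…,φ_J) = (η - φ_1 - ⋯ - φ_J)⁻¹ Σ_{j=0}^{J-1} h_j(η;φ_1,…,φ_j) h_{J-j-1}(η;φ_{j+1},…,φ_{J-1})`. -/
noncomputable def hFun : ℕ → ℝ → (ℕ → ℝ) → ℝ
  | 0, _, _ => 1
  | (J+1), η, φ =>
      (η - ∑ i ∈ Finset.range (J+1), φ i)⁻¹ *
        ∑ j ∈ (Finset.range (J+1)).attach,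
          hFun j.1 η φ * hFun (J - j.1) η (fun i => φ (i + j.1))
  termination_by J _ _ => J
  decreasing_by
  · exact Nat.lt_of_lt_of_le (Finset.mem_range.mp j.2) (Nat.le_refl _)
  · exact Nat.lt_succ_of_le (Nat.sub_le J j.1)

namespace Stmt8Aux

noncomputable def hl (η : ℝ) : List ℝ → ℝ
  | [] => 1
  | a :: l =>
      (η - (a :: l).sum)⁻¹ *
        ∑ j ∈ Finset.range (a :: l).length,
          hl η ((a :: l).dropLast.take j) * hl η ((a :: l).dropLast.drop j)
  termination_by L => L.length
  decreasing_by
  all_goals (simp [List.length_take]; try omega)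

lemma hl_nil (η : ℝ) : hl η [] = 1 := by simp [hl]

lemma hl_eq (η : ℝ) (L : List ℝ) (hL : L ≠ []) :
    hl η L = (η - L.sum)⁻¹ *
      ∑ j ∈ Finset.range L.length, hl η (L.dropLast.take j) * hl η (L.dropLast.drop j) := by
  cases L with
  | nil => exact absurd rfl hL
  | cons a l => rw [hl]

lemma hl_rec (η : ℝ) (L : List ℝ) (hL : L ≠ []) (hη : η ≠ L.sum) :
    (η - L.sum) * hl η L =
      ∑ j ∈ Finset.range L.length, hl η (L.dropLast.take j) * hl η (L.dropLast.drop j) := by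
  rw [hl_eq η L hL, ← mul_assoc, mul_inv_cancel₀ (sub_ne_zero.mpr hη), one_mul]

noncomputable def tB (η : ℝ) : ℕ → List ℝ → ℝ
  | 0, L => if L = [] then 1 else 0
  | (K+1), L => ∑ j ∈ Finset.range L.length, hl η (L.take (j+1)) * tB η K (L.drop (j+1))

noncomputable def ta2 (η : ℝ) : ℕ → List ℝ → ℝ
  | 0, A => ∑ j ∈ Finset.range (A.length + 1), hl η (A.take j) * hl η (A.drop j)
  | (m+1), A => ∑ j ∈ Finset.range A.length, hl η (A.take (j+1)) * ta2 η m (A.drop (j+1))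

noncomputable def DD (η : ℝ) (K : ℕ) (A B : List ℝ) : ℝ :=
  ∑ m ∈ Finset.range K, ta2 η m A * tB η (K - 1 - m) B

lemma tB_zero_of_lt (η : ℝ) : ∀ (K : ℕ) (L : List ℝ), L.length < K → tB η K L = 0 := by
  intro K
  induction K with
  | zero => intro L h; omega
  | succ K ih =>
    intro L h
    simp only [tB]
    refine Finset.sum_eq_zero fun j hj => ?_
    simp only [Finset.mem_range] at hj
    rw [ih _ (by simp only [List.length_drop]; omega), mul_zero]

lemma tB_one (η : ℝ) (L : List ℝ) (hL : L ≠ []) : tB η 1 L = hl η L := by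
  have hn : 0 < L.length := List.length_pos_iff.mpr hL
  simp only [tB]
  rw [Finset.sum_eq_single_of_mem (L.length - 1) (by simp; omega)]
  · have h1 : L.length - 1 + 1 = L.length := by omega
    rw [h1, List.take_length, List.drop_length]
    simp
  · intro j hj hne
    simp only [Finset.mem_range] at hj
    have : L.drop (j+1) ≠ [] := by
      simp only [ne_eq, List.drop_eq_nil_iff]
      omega
    rw [if_neg this, mul_zero]

lemma tri (n : ℕ) (F : ℕ → ℕ → ℝ) :
    ∑ p ∈ Finset.range n, ∑ j ∈ Finset.range p, F j p
      = ∑ j ∈ Finset.range n, ∑ q ∈ Finset.range (n - 1 - j), F j (j + 1 + q) := by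
  rw [Finset.sum_sigma', Finset.sum_sigma']
  refine Finset.sum_nbij' (fun x => ⟨x.2, x.1 - x.2 - 1⟩) (fun x => ⟨x.1 + 1 + x.2, x.1⟩) ?_ ?_ ?_ ?_ ?_
  · rintro ⟨p, j⟩ h
    simp only [Finset.mem_sigma, Finset.mem_range] at h ⊢
    omega
  · rintro ⟨j, q⟩ h
    simp only [Finset.mem_sigma, Finset.mem_range] at h ⊢
    omega
  · rintro ⟨p, j⟩ h
    simp only [Finset.mem_sigma, Finset.mem_range] at h
    simp only [Sigma.mk.inj_iff, heq_eq_eq]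
    exact ⟨by omega, trivial⟩
  · rintro ⟨j, q⟩ h
    simp only [Finset.mem_sigma, Finset.mem_range] at h
    simp only [Sigma.mk.inj_iff, heq_eq_eq]
    exact ⟨trivial, by omega⟩
  · rintro ⟨p, j⟩ h
    simp only [Finset.mem_sigma, Finset.mem_range] at h
    show F j p = F j (j + 1 + (p - j - 1))
    have hh : j + 1 + (p - j - 1) = p := by omega
    rw [hh]


lemma tB_succ (η : ℝ) (K : ℕ) (L : List ℝ) :
    tB η (K+1) L = ∑ j ∈ Finset.range L.length, hl η (L.take (j+1)) * tB η K (L.drop (j+1)) := rfl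

lemma take_of_take (M : List ℝ) {i p : ℕ} (h : i ≤ p) : (M.take p).take i = M.take i := by
  rw [List.take_take, min_eq_left h]

lemma drop_of_take (M : List ℝ) (i p : ℕ) : (M.take p).drop i = (M.drop i).take (p - i) :=
  List.drop_take ..

lemma drop_of_drop (M : List ℝ) (a b : ℕ) : (M.drop a).drop b = M.drop (a + b) := by
  rw [List.drop_drop]

lemma len_take (M : List ℝ) {p : ℕ} (h : p ≤ M.length) : (M.take p).length = p := by
  simp [List.length_take]; omega

lemma ta2_zero_take (η : ℝ) (M : List ℝ) (p : ℕ) (h : p ≤ M.length) :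
    ta2 η 0 (M.take p)
      = ∑ i ∈ Finset.range (p+1), hl η (M.take i) * hl η ((M.drop i).take (p - i)) := by
  show ∑ i ∈ Finset.range ((M.take p).length + 1), _ = _
  rw [len_take M h]
  refine Finset.sum_congr rfl fun i hi => ?_
  simp only [Finset.mem_range] at hi
  rw [take_of_take M (by omega), drop_of_take]

lemma ta2_succ_take (η : ℝ) (m : ℕ) (M : List ℝ) (p : ℕ) (h : p ≤ M.length) :
    ta2 η (m+1) (M.take p)
      = ∑ j ∈ Finset.range p, hl η (M.take (j+1)) * ta2 η m ((M.drop (j+1)).take (p - (j+1))) := by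
  show ∑ j ∈ Finset.range (M.take p).length, _ = _
  rw [len_take M h]
  refine Finset.sum_congr rfl fun j hj => ?_
  simp only [Finset.mem_range] at hj
  rw [take_of_take M (by omega), drop_of_take]

lemma m0_part (η : ℝ) (K : ℕ) (M : List ℝ) :
    ∑ p ∈ Finset.range (M.length + 1), ta2 η 0 (M.take p) * tB η K (M.drop p)
      = tB η K M + 2 * tB η (K + 1) M + tB η (K + 2) M := by
  have h1 : ∀ p ∈ Finset.range (M.length + 1),
      ta2 η 0 (M.take p) * tB η K (M.drop p)
        = ∑ i ∈ Finset.range (p+1),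
            hl η (M.take i) * hl η ((M.drop i).take (p - i)) * tB η K (M.drop p) := by
    intro p hp; simp only [Finset.mem_range] at hp
    rw [ta2_zero_take η M p (by omega), Finset.sum_mul]
  rw [Finset.sum_congr rfl h1, Finset.sum_range_succ']
  have hG0 : ∑ i ∈ Finset.range (0+1),
      hl η (M.take i) * hl η ((M.drop i).take (0 - i)) * tB η K (M.drop 0) = tB η K M := by
    simp [hl_nil]
  rw [hG0]
  have hGq : ∀ q ∈ Finset.range M.length,
      (∑ i ∈ Finset.range (q+1+1),
          hl η (M.take i) * hl η ((M.drop i).take (q+1 - i)) * tB η K (M.drop (q+1)))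
        = (∑ i ∈ Finset.range q,
            hl η (M.take (i+1)) * hl η ((M.drop (i+1)).take (q - i)) * tB η K (M.drop (q+1)))
          + (hl η (M.take (q+1)) * tB η K (M.drop (q+1))
            + hl η (M.take (q+1)) * tB η K (M.drop (q+1))) := by
    intro q hq; simp only [Finset.mem_range] at hq
    rw [Finset.sum_range_succ']
    have hf0 : hl η (M.take 0) * hl η ((M.drop 0).take (q+1-0)) * tB η K (M.drop (q+1))
        = hl η (M.take (q+1)) * tB η K (M.drop (q+1)) := by
      simp [hl_nil]
    rw [hf0, Finset.sum_range_succ]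
    have hfq : hl η (M.take (q+1)) * hl η ((M.drop (q+1)).take (q+1-(q+1))) * tB η K (M.drop (q+1))
        = hl η (M.take (q+1)) * tB η K (M.drop (q+1)) := by
      simp [hl_nil]
    rw [hfq]
    have hmid : ∀ i ∈ Finset.range q,
        hl η (M.take (i+1)) * hl η ((M.drop (i+1)).take (q+1-(i+1))) * tB η K (M.drop (q+1))
          = hl η (M.take (i+1)) * hl η ((M.drop (i+1)).take (q-i)) * tB η K (M.drop (q+1)) := by
      intro i hi
      have e : q + 1 - (i+1) = q - i := by omega
      rw [e]
    rw [Finset.sum_congr rfl hmid]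
    ring
  rw [Finset.sum_congr rfl hGq, Finset.sum_add_distrib]
  have htri : ∑ q ∈ Finset.range M.length, ∑ i ∈ Finset.range q,
      hl η (M.take (i+1)) * hl η ((M.drop (i+1)).take (q - i)) * tB η K (M.drop (q+1))
        = tB η (K+2) M := by
    rw [tri M.length
      (fun i q => hl η (M.take (i+1)) * hl η ((M.drop (i+1)).take (q - i)) * tB η K (M.drop (q+1)))]
    rw [tB_succ η (K+1) M]
    refine Finset.sum_congr rfl fun j hj => ?_
    simp only [Finset.mem_range] at hj
    rw [tB_succ, Finset.mul_sum]
    have hlen : (M.drop (j+1)).length = M.length - 1 - j := by simp; omega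
    rw [hlen]
    refine Finset.sum_congr rfl fun r hr => ?_
    simp only [Finset.mem_range] at hr
    have e1 : j + 1 + r - j = r + 1 := by omega
    have e2 : M.drop (j + 1 + r + 1) = (M.drop (j+1)).drop (r+1) := by
      rw [drop_of_drop]
      have : j + 1 + r + 1 = j + 1 + (r + 1) := by omega
      rw [this]
    rw [e1, e2]
    all_goals ring
  rw [htri]
  have h2 : ∑ q ∈ Finset.range M.length,
      (hl η (M.take (q+1)) * tB η K (M.drop (q+1)) + hl η (M.take (q+1)) * tB η K (M.drop (q+1)))
        = 2 * tB η (K+1) M := by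
    rw [Finset.sum_add_distrib, tB_succ]
    ring
  rw [h2]; ring

lemma starII (η : ℝ) : ∀ (K : ℕ) (M : List ℝ),
    ∑ p ∈ Finset.range (M.length + 1), DD η K (M.take p) (M.drop p)
      = K * (tB η (K-1) M + 2 * tB η K M + tB η (K+1) M) := by
  intro K
  induction K with
  | zero => intro M; simp [DD]
  | succ K ih =>
    intro M
    have hDD : ∀ p ∈ Finset.range (M.length + 1),
        DD η (K+1) (M.take p) (M.drop p)
          = (∑ j ∈ Finset.range p, ∑ m ∈ Finset.range K, hl η (M.take (j+1))
                * (ta2 η m ((M.drop (j+1)).take (p - (j+1))) * tB η (K-1-m) (M.drop p)))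
            + ta2 η 0 (M.take p) * tB η K (M.drop p) := by
      intro p hp; simp only [Finset.mem_range] at hp
      show ∑ m ∈ Finset.range (K+1), ta2 η m (M.take p) * tB η (K+1-1-m) (M.drop p) = _
      rw [Finset.sum_range_succ']
      have hfst : (∑ m ∈ Finset.range K, ta2 η (m+1) (M.take p) * tB η (K+1-1-(m+1)) (M.drop p))
          = ∑ j ∈ Finset.range p, ∑ m ∈ Finset.range K, hl η (M.take (j+1))
              * (ta2 η m ((M.drop (j+1)).take (p - (j+1))) * tB η (K-1-m) (M.drop p)) := by
        rw [Finset.sum_comm]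
        refine Finset.sum_congr rfl fun m hm => ?_
        have e : K + 1 - 1 - (m+1) = K - 1 - m := by omega
        rw [e, ta2_succ_take η m M p (by omega), Finset.sum_mul]
        refine Finset.sum_congr rfl fun j hj => ?_
        ring
      rw [hfst]
      have hsnd : tB η (K+1-1-0) (M.drop p) = tB η K (M.drop p) := by norm_num
      rw [hsnd]
    rw [Finset.sum_congr rfl hDD, Finset.sum_add_distrib, m0_part]
    have hA : ∑ p ∈ Finset.range (M.length + 1), ∑ j ∈ Finset.range p,
        ∑ m ∈ Finset.range K, hl η (M.take (j+1))
            * (ta2 η m ((M.drop (j+1)).take (p - (j+1))) * tB η (K-1-m) (M.drop p))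
          = K * (tB η K M + 2 * tB η (K+1) M + tB η (K+2) M) := by
      rcases K with _ | K'
      · simp
      · rw [tri (M.length + 1)
          (fun j p => ∑ m ∈ Finset.range (K'+1), hl η (M.take (j+1))
              * (ta2 η m ((M.drop (j+1)).take (p - (j+1))) * tB η (K'+1-1-m) (M.drop p)))]
        rw [Finset.sum_range_succ]
        have hlast : (∑ q ∈ Finset.range (M.length + 1 - 1 - M.length),
            ∑ m ∈ Finset.range (K'+1), hl η (M.take (M.length+1))
              * (ta2 η m ((M.drop (M.length+1)).take (M.length + 1 + q - (M.length+1)))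
                * tB η (K'+1-1-m) (M.drop (M.length + 1 + q)))) = 0 := by
          have e : M.length + 1 - 1 - M.length = 0 := by omega
          rw [e]; simp
        rw [hlast, add_zero]
        have hj : ∀ j ∈ Finset.range M.length,
            (∑ q ∈ Finset.range (M.length + 1 - 1 - j),
              ∑ m ∈ Finset.range (K'+1), hl η (M.take (j+1))
                * (ta2 η m ((M.drop (j+1)).take (j + 1 + q - (j+1)))
                  * tB η (K'+1-1-m) (M.drop (j + 1 + q))))
              = hl η (M.take (j+1))
                * ((K'+1 : ℕ) * (tB η (K'+1-1) (M.drop (j+1)) + 2 * tB η (K'+1) (M.drop (j+1))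
                    + tB η (K'+1+1) (M.drop (j+1)))) := by
          intro j hj; simp only [Finset.mem_range] at hj
          have hlen : M.length + 1 - 1 - j = (M.drop (j+1)).length + 1 := by simp; omega
          rw [hlen, ← ih (M.drop (j+1)), Finset.mul_sum]
          refine Finset.sum_congr rfl fun q hq => ?_
          simp only [Finset.mem_range] at hq
          have e1 : j + 1 + q - (j+1) = q := by omega
          have e2 : M.drop (j + 1 + q) = (M.drop (j+1)).drop q := by
            rw [drop_of_drop]
          rw [e1, e2]
          have eD : DD η (K'+1) ((M.drop (j+1)).take q) ((M.drop (j+1)).drop q)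
              = ∑ m ∈ Finset.range (K'+1), ta2 η m ((M.drop (j+1)).take q)
                  * tB η (K'+1-1-m) ((M.drop (j+1)).drop q) := rfl
          rw [eD, Finset.mul_sum]
        rw [Finset.sum_congr rfl hj]
        have expand : ∀ j ∈ Finset.range M.length,
            hl η (M.take (j+1))
              * ((K'+1 : ℕ) * (tB η (K'+1-1) (M.drop (j+1)) + 2 * tB η (K'+1) (M.drop (j+1))
                  + tB η (K'+1+1) (M.drop (j+1))))
              = (K'+1 : ℕ) * (hl η (M.take (j+1)) * tB η K' (M.drop (j+1))
                  + 2 * (hl η (M.take (j+1)) * tB η (K'+1) (M.drop (j+1)))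
                  + hl η (M.take (j+1)) * tB η (K'+2) (M.drop (j+1))) := by
          intro j _
          have e : K' + 1 - 1 = K' := by omega
          rw [e]; ring
        rw [Finset.sum_congr rfl expand, ← Finset.mul_sum, Finset.sum_add_distrib,
          Finset.sum_add_distrib, ← Finset.mul_sum]
        rw [← tB_succ η K' M, ← tB_succ η (K'+1) M, ← tB_succ η (K'+2) M]
    rw [hA]
    have e : K + 1 - 1 = K := by omega
    rw [e]
    push_cast
    ring

lemma dropLast_take (L : List ℝ) {j : ℕ} (h : j < L.length) :
    (L.take (j+1)).dropLast = L.take j := by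
  rw [List.dropLast_eq_take, len_take L (by omega)]
  simp only [Nat.add_sub_cancel]
  exact take_of_take L (by omega)

lemma starI (η : ℝ) : ∀ (K : ℕ) (L : List ℝ),
    (∀ B : List ℝ, B <:+: L → B ≠ [] → η ≠ B.sum) →
    ((K:ℝ) * η - L.sum) * tB η K L
      = ∑ p ∈ Finset.range L.length, DD η K (L.take p) (L.drop (p+1)) := by
  intro K
  induction K with
  | zero =>
    intro L h
    rcases eq_or_ne L [] with rfl | hL
    · simp [tB]
    · have h0 : ∀ p ∈ Finset.range L.length, DD η 0 (L.take p) (L.drop (p+1)) = 0 := by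
        intro p _; simp [DD]
      rw [Finset.sum_congr rfl h0]
      simp [tB, hL]
  | succ K ih =>
    intro L h
    rw [tB_succ, Finset.mul_sum]
    have step1 : ∀ j ∈ Finset.range L.length,
        (((K+1:ℕ):ℝ) * η - L.sum) * (hl η (L.take (j+1)) * tB η K (L.drop (j+1)))
          = (∑ i ∈ Finset.range (j+1), hl η (L.take i) * hl η ((L.drop i).take (j - i)))
              * tB η K (L.drop (j+1))
            + hl η (L.take (j+1))
              * (∑ q ∈ Finset.range (L.length - 1 - j),
                  DD η K ((L.drop (j+1)).take q) ((L.drop (j+1)).drop (q+1))) := by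
      intro j hj
      simp only [Finset.mem_range] at hj
      have hne : L.take (j+1) ≠ [] := by
        have hlt : (L.take (j+1)).length = j+1 := len_take L (by omega)
        intro hcon; rw [hcon] at hlt; simp at hlt
      have hsum : (L.take (j+1)).sum + (L.drop (j+1)).sum = L.sum :=
        List.sum_take_add_sum_drop L (j+1)
      have key : (((K+1:ℕ):ℝ) * η - L.sum) * (hl η (L.take (j+1)) * tB η K (L.drop (j+1)))
          = ((η - (L.take (j+1)).sum) * hl η (L.take (j+1))) * tB η K (L.drop (j+1))
            + hl η (L.take (j+1))
              * (((K:ℕ):ℝ) * η - (L.drop (j+1)).sum) * tB η K (L.drop (j+1)) := by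
        rw [← hsum]; push_cast; ring
      rw [key]
      have part1 : ((η - (L.take (j+1)).sum) * hl η (L.take (j+1))) * tB η K (L.drop (j+1))
          = (∑ i ∈ Finset.range (j+1), hl η (L.take i) * hl η ((L.drop i).take (j - i)))
              * tB η K (L.drop (j+1)) := by
        rw [hl_rec η (L.take (j+1)) hne (h _ ((List.take_prefix (j+1) L).isInfix) hne)]
        congr 1
        rw [len_take L (by omega)]
        refine Finset.sum_congr rfl fun i hi => ?_
        simp only [Finset.mem_range] at hi
        rw [dropLast_take L (by omega), take_of_take L (by omega), drop_of_take]
      have part2 : hl η (L.take (j+1))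
            * (((K:ℕ):ℝ) * η - (L.drop (j+1)).sum) * tB η K (L.drop (j+1))
          = hl η (L.take (j+1))
            * (∑ q ∈ Finset.range (L.length - 1 - j),
                DD η K ((L.drop (j+1)).take q) ((L.drop (j+1)).drop (q+1))) := by
        rw [mul_assoc,
          ih (L.drop (j+1)) (fun B hB hBne => h B (hB.trans (List.drop_suffix (j+1) L).isInfix) hBne)]
        have e : (L.drop (j+1)).length = L.length - 1 - j := by simp; omega
        rw [e]
      rw [part1, part2]
    rw [Finset.sum_congr rfl step1, Finset.sum_add_distrib]
    have hDD2 : ∀ p ∈ Finset.range L.length,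
        DD η (K+1) (L.take p) (L.drop (p+1))
          = (∑ j ∈ Finset.range p, ∑ m ∈ Finset.range K, hl η (L.take (j+1))
                * (ta2 η m ((L.drop (j+1)).take (p - (j+1))) * tB η (K-1-m) (L.drop (p+1))))
            + (∑ i ∈ Finset.range (p+1), hl η (L.take i) * hl η ((L.drop i).take (p - i)))
                * tB η K (L.drop (p+1)) := by
      intro p hp; simp only [Finset.mem_range] at hp
      show ∑ m ∈ Finset.range (K+1), ta2 η m (L.take p) * tB η (K+1-1-m) (L.drop (p+1)) = _
      rw [Finset.sum_range_succ']
      have hfst : (∑ m ∈ Finset.range K, ta2 η (m+1) (L.take p) * tB η (K+1-1-(m+1)) (L.drop (p+1)))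
          = ∑ j ∈ Finset.range p, ∑ m ∈ Finset.range K, hl η (L.take (j+1))
              * (ta2 η m ((L.drop (j+1)).take (p - (j+1))) * tB η (K-1-m) (L.drop (p+1))) := by
        rw [Finset.sum_comm]
        refine Finset.sum_congr rfl fun m hm => ?_
        have e : K + 1 - 1 - (m+1) = K - 1 - m := by omega
        rw [e, ta2_succ_take η m L p (by omega), Finset.sum_mul]
        refine Finset.sum_congr rfl fun j hj => ?_
        ring
      rw [hfst]
      have hsnd : ta2 η 0 (L.take p) * tB η (K+1-1-0) (L.drop (p+1))
          = (∑ i ∈ Finset.range (p+1), hl η (L.take i) * hl η ((L.drop i).take (p - i)))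
              * tB η K (L.drop (p+1)) := by
        rw [ta2_zero_take η L p (by omega)]
        norm_num
      rw [hsnd]
    rw [Finset.sum_congr rfl hDD2, Finset.sum_add_distrib]
    have htri : ∑ p ∈ Finset.range L.length,
        (∑ j ∈ Finset.range p, ∑ m ∈ Finset.range K, hl η (L.take (j+1))
            * (ta2 η m ((L.drop (j+1)).take (p - (j+1))) * tB η (K-1-m) (L.drop (p+1))))
          = ∑ j ∈ Finset.range L.length, hl η (L.take (j+1))
              * (∑ q ∈ Finset.range (L.length - 1 - j),
                  DD η K ((L.drop (j+1)).take q) ((L.drop (j+1)).drop (q+1))) := by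
      rw [tri L.length (fun j p => ∑ m ∈ Finset.range K, hl η (L.take (j+1))
          * (ta2 η m ((L.drop (j+1)).take (p - (j+1))) * tB η (K-1-m) (L.drop (p+1))))]
      refine Finset.sum_congr rfl fun j hj => ?_
      simp only [Finset.mem_range] at hj
      rw [Finset.mul_sum]
      refine Finset.sum_congr rfl fun q hq => ?_
      simp only [Finset.mem_range] at hq
      have e1 : j + 1 + q - (j+1) = q := by omega
      have e2 : L.drop (j + 1 + q + 1) = (L.drop (j+1)).drop (q+1) := by
        rw [drop_of_drop]
        have e : j + 1 + q + 1 = j + 1 + (q + 1) := by omega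
        rw [e]
      rw [e1, e2]
      have eD : DD η K ((L.drop (j+1)).take q) ((L.drop (j+1)).drop (q+1))
          = ∑ m ∈ Finset.range K, ta2 η m ((L.drop (j+1)).take q)
              * tB η (K-1-m) ((L.drop (j+1)).drop (q+1)) := rfl
      rw [eD, Finset.mul_sum]
    rw [htri]
    ring


lemma hl_single (η x : ℝ) : hl η [x] = (η - x)⁻¹ := by
  rw [hl_eq η [x] (by simp)]
  simp [hl_nil]

lemma hFun_eq_hl (η : ℝ) : ∀ (J : ℕ) (ψ : ℕ → ℝ),
    hFun J η ψ = hl η (List.ofFn fun i : Fin J => ψ i) := by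
  intro J
  induction J using Nat.strong_induction_on with
  | _ J ihJ =>
    match J with
    | 0 => intro ψ; simp [hFun, hl_nil]
    | (J+1) =>
      intro ψ
      set L : List ℝ := List.ofFn fun i : Fin (J+1) => ψ i with hL
      have hLlen : L.length = J + 1 := by simp [hL]
      have hLne : L ≠ [] := by
        intro hcon; rw [hcon] at hLlen; simp at hLlen
      rw [hl_eq η L hLne]
      have hsum : L.sum = ∑ i ∈ Finset.range (J+1), ψ i := by
        rw [hL, List.sum_ofFn, Fin.sum_univ_eq_sum_range]
      rw [hFun, hsum, hLlen, Finset.sum_attach (Finset.range (J+1))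
        (fun j => hFun j η ψ * hFun (J - j) η (fun i => ψ (i + j)))]
      congr 1
      refine Finset.sum_congr rfl fun j hj => ?_
      simp only [Finset.mem_range] at hj
      have h1 : hFun j η ψ = hl η (L.dropLast.take j) := by
        rw [ihJ j (by omega)]
        congr 1
        apply List.ext_getElem
        · first
          | (simp [hL, List.length_take, List.length_dropLast]; omega)
          | simp [hL, List.length_take, List.length_dropLast]
        · intro i h1 h2
          simp only [hL, List.getElem_take, List.getElem_dropLast, List.getElem_ofFn]
      have h2 : hFun (J - j) η (fun i => ψ (i + j)) = hl η (L.dropLast.drop j) := by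
        rw [ihJ (J - j) (by omega)]
        congr 1
        apply List.ext_getElem
        · first
          | (simp [hL, List.length_take, List.length_dropLast]; omega)
          | simp [hL, List.length_take, List.length_dropLast]
        · intro i h1 h2
          simp only [List.getElem_drop, List.getElem_dropLast, hL, List.getElem_ofFn]
          congr 1
          simp only [List.length_ofFn] at h1
          omega
      rw [h1, h2]

def extPerm {n : ℕ} (τ : Equiv.Perm (Fin n)) : Equiv.Perm (Fin (n+1)) where
  toFun x := if h : (x:ℕ) < n then (τ ⟨x, h⟩).castSucc else x
  invFun x := if h : (x:ℕ) < n then (τ.symm ⟨x, h⟩).castSucc else x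
  left_inv x := by
    dsimp only
    by_cases h : (x:ℕ) < n
    · rw [dif_pos h]
      have h2 : (((τ ⟨x, h⟩).castSucc : Fin (n+1)) : ℕ) < n := by
        simp [Fin.coe_castSucc]
      rw [dif_pos h2]
      have : (⟨((τ ⟨x, h⟩).castSucc : Fin (n+1)) , h2⟩ : Fin n) = τ ⟨x, h⟩ := by
        apply Fin.ext; simp
      rw [this, Equiv.symm_apply_apply]
      apply Fin.ext; simp
    · rw [dif_neg h, dif_neg h]
  right_inv x := by
    dsimp only
    by_cases h : (x:ℕ) < n
    · rw [dif_pos h]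
      have h2 : (((τ.symm ⟨x, h⟩).castSucc : Fin (n+1)) : ℕ) < n := by
        simp [Fin.coe_castSucc]
      rw [dif_pos h2]
      have : (⟨((τ.symm ⟨x, h⟩).castSucc : Fin (n+1)) , h2⟩ : Fin n) = τ.symm ⟨x, h⟩ := by
        apply Fin.ext; simp
      rw [this, Equiv.apply_symm_apply]
      apply Fin.ext; simp
    · rw [dif_neg h, dif_neg h]

lemma extPerm_castSucc {n : ℕ} (τ : Equiv.Perm (Fin n)) (i : Fin n) :
    extPerm τ i.castSucc = (τ i).castSucc := by
  show (if h : ((i.castSucc : Fin (n+1)):ℕ) < n then (τ ⟨(i.castSucc : Fin (n+1)), h⟩).castSucc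
      else i.castSucc) = _
  have h : ((i.castSucc : Fin (n+1)):ℕ) < n := by simp
  rw [dif_pos h]
  have e : (⟨((i.castSucc : Fin (n+1)):ℕ), h⟩ : Fin n) = i := by apply Fin.ext; simp
  rw [e]

def cycF {n : ℕ} (p : ℕ) (hp : p ≤ n) (x : Fin (n+1)) : Fin (n+1) :=
  if (x:ℕ) < p then x else if (x:ℕ) = p then ⟨n, by omega⟩ else ⟨(x:ℕ) - 1, by
    have := x.isLt; omega⟩

def cycG {n : ℕ} (p : ℕ) (hp : p ≤ n) (x : Fin (n+1)) : Fin (n+1) :=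
  if (x:ℕ) < p then x else if (x:ℕ) = n then ⟨p, Nat.lt_succ_of_le hp⟩
    else ⟨min ((x:ℕ) + 1) n, by omega⟩

lemma cycF_val {n : ℕ} (p : ℕ) (hp : p ≤ n) (x : Fin (n+1)) :
    ((cycF p hp x : Fin (n+1)) : ℕ) = if (x:ℕ) < p then (x:ℕ) else if (x:ℕ) = p then n
      else (x:ℕ) - 1 := by
  unfold cycF; split_ifs <;> rfl

lemma cycG_val {n : ℕ} (p : ℕ) (hp : p ≤ n) (x : Fin (n+1)) :
    ((cycG p hp x : Fin (n+1)) : ℕ) = if (x:ℕ) < p then (x:ℕ) else if (x:ℕ) = n then p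
      else min ((x:ℕ) + 1) n := by
  unfold cycG; split_ifs <;> rfl

def cyc {n : ℕ} (p : ℕ) (hp : p ≤ n) : Equiv.Perm (Fin (n+1)) where
  toFun := cycF p hp
  invFun := cycG p hp
  left_inv x := by
    have hx := x.isLt
    apply Fin.ext
    rw [cycG_val p hp (cycF p hp x), cycF_val p hp x]
    split_ifs <;> omega
  right_inv x := by
    have hx := x.isLt
    apply Fin.ext
    rw [cycF_val p hp (cycG p hp x), cycG_val p hp x]
    split_ifs <;> omega

lemma cyc_val {n : ℕ} (p : ℕ) (hp : p ≤ n) (x : Fin (n+1)) :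
    ((cyc p hp x : Fin (n+1)) : ℕ)
      = if (x:ℕ) < p then (x:ℕ) else if (x:ℕ) = p then n else (x:ℕ) - 1 :=
  cycF_val p hp x

lemma fAux_eq_zero_of_gt : ∀ (J : ℕ) (k : ℤ) (η : ℝ) (ψ : ℕ → ℝ), (J:ℤ) < k → fAux J k η ψ = 0 := by
  intro J k η ψ h
  match J with
  | 0 => simp [fAux]
  | 1 =>
    have h0 : k ≠ 0 := by omega
    have h1 : k ≠ 1 := by omega
    simp [fAux, h0, h1]
  | (J+2) =>
    have hc : ¬((0:ℤ) ≤ k ∧ k ≤ (J:ℤ) + 2) := by push_cast at h; omega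
    simp only [fAux, if_neg hc]

lemma gAux_eq_zero_of_K_zero (J : ℕ) (η : ℝ) (ψ : ℕ → ℝ) : gAux J 0 η ψ = 0 := by
  simp [gAux]

lemma sum_pm (f : ℤ → ℝ) : ∑ a ∈ ({-1, 0, 1} : Finset ℤ), f a = f (-1) + f 0 + f 1 := by
  rw [show ({-1, 0, 1} : Finset ℤ) = insert (-1) (insert 0 {1}) from rfl,
    Finset.sum_insert (by decide), Finset.sum_insert (by decide), Finset.sum_singleton]
  ring

lemma omega_neg1 : omegaCoef (-1) = 1/2 := by norm_num [omegaCoef]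
lemma omega_zero : omegaCoef 0 = -1 := by norm_num [omegaCoef]
lemma omega_one : omegaCoef 1 = 1/2 := by norm_num [omegaCoef]


lemma fin_mk_val {n a : ℕ} (h : a < n) : ((⟨a, h⟩ : Fin n) : ℕ) = a := rfl

lemma claim (η : ℝ) (hη : η ≠ 0) : ∀ J : ℕ, 1 ≤ J → ∀ (K : ℕ) (φ : ℕ → ℝ), 1 ≤ K → K ≤ J →
    (∀ K' J' : ℕ, 1 ≤ K' → K' ≤ J' → J' ≤ J → ∀ ι : Fin J' → Fin J, Function.Injective ι →
      (K' : ℝ) * η ≠ ∑ i, φ (ι i : ℕ)) →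
    gAux J (K:ℤ) η φ
      = 2 * (-1)^K * (η^J)⁻¹ * ((J.factorial : ℝ)⁻¹
          * ∑ σ : Equiv.Perm (Fin J), tB η K (List.ofFn fun i => φ (σ i))) := by
  intro J hJ
  induction J, hJ using Nat.le_induction with
  | base =>
    intro K φ hK1 hK2 hres
    have hK : K = 1 := le_antisymm hK2 hK1
    subst hK
    have hfa : fAux 1 ((1:ℕ):ℤ) η φ = η⁻¹ := by norm_num [fAux]
    have hsum : ∑ σ : Equiv.Perm (Fin 1), tB η 1 (List.ofFn fun i => φ (σ i))
        = (η - φ 0)⁻¹ := by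
      have h1 : ∀ σ : Equiv.Perm (Fin 1), (List.ofFn fun i => φ (σ i)) = [φ 0] := by
        intro σ
        have h0 : σ 0 = 0 := Subsingleton.elim _ _
        simp [List.ofFn_succ, h0]
      rw [Finset.sum_congr rfl fun σ _ => congrArg (tB η 1) (h1 σ)]
      rw [Finset.sum_const, Finset.card_univ]
      have hcard : Fintype.card (Equiv.Perm (Fin 1)) = 1 := by
        rw [Fintype.card_perm, Fintype.card_fin]; rfl
      rw [hcard, one_smul]
      rw [tB_one η _ (by simp), hl_single]
    show (-2 * (((1:ℕ):ℤ):ℝ)) / ((((1:ℕ):ℤ):ℝ) * η - ∑ i ∈ Finset.range 1, φ i)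
        * fAux 1 ((1:ℕ):ℤ) η φ = _
    rw [hfa, hsum]
    push_cast
    simp only [Finset.sum_range_one, pow_one, Nat.factorial_one, Nat.cast_one]
    rw [div_eq_mul_inv]
    ring
  | succ m' hm' ih =>
    intro K φ hK1 hK2 hres
    obtain ⟨m, rfl⟩ : ∃ m, m' = m + 1 := ⟨m' - 1, by omega⟩
    -- keyW : collapse of the double symmetrization
    have keyW : ∀ K' : ℕ,
        (∑ σ : Equiv.Perm (Fin (m+2)),
            gAux (m+1) (K':ℤ) η (fun i => if h : i < m+2 then φ (σ ⟨i, h⟩) else φ i))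
          = 2 * (-1)^K' * (η^(m+1))⁻¹
              * ∑ σ : Equiv.Perm (Fin (m+2)),
                  tB η K' (List.ofFn fun i : Fin (m+1) => φ (σ i.castSucc)) := by
      intro K'
      rcases Nat.eq_zero_or_pos K' with rfl | hpos
      · have hz : ∀ σ : Equiv.Perm (Fin (m+2)),
            gAux (m+1) ((0:ℕ):ℤ) η (fun i => if h : i < m+2 then φ (σ ⟨i, h⟩) else φ i) = 0 := by
          intro σ
          rw [show ((0:ℕ):ℤ) = 0 from rfl]
          exact gAux_eq_zero_of_K_zero (m+1) η _
        rw [Finset.sum_congr rfl fun σ _ => hz σ]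
        have hz2 : ∀ σ : Equiv.Perm (Fin (m+2)),
            tB η 0 (List.ofFn fun i : Fin (m+1) => φ (σ i.castSucc)) = 0 := by
          intro σ
          show (if (List.ofFn fun i : Fin (m+1) => φ (σ i.castSucc)) = [] then (1:ℝ) else 0) = 0
          rw [if_neg (by simp)]
        rw [Finset.sum_congr rfl fun σ _ => hz2 σ]
        simp
      rcases le_or_gt K' (m+1) with hle | hgt
      · have hper : ∀ σ : Equiv.Perm (Fin (m+2)),
            gAux (m+1) (K':ℤ) η (fun i => if h : i < m+2 then φ (σ ⟨i, h⟩) else φ i)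
              = 2*(-1)^K'*(η^(m+1))⁻¹*(((m+1).factorial : ℝ)⁻¹
                  * ∑ τ : Equiv.Perm (Fin (m+1)),
                      tB η K' (List.ofFn fun i => φ (σ ((τ i).castSucc)))) := by
          intro σ
          rw [ih K' (fun i => if h : i < m+2 then φ (σ ⟨i, h⟩) else φ i) hpos hle ?_]
          · congr 2
            refine Finset.sum_congr rfl fun τ _ => ?_
            refine congrArg (tB η K') (congrArg List.ofFn (funext fun i => ?_))
            have hlt : ((τ i : Fin (m+1)) : ℕ) < m + 2 := by have := (τ i).isLt; omega
            rw [dif_pos hlt]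
            rfl
          · intro K'' J'' h1 h2 h3 ι hι
            have hgoal := hres K'' J'' h1 h2 (by omega) (fun i => σ ((ι i).castSucc))
              (σ.injective.comp ((Fin.castSucc_injective _).comp hι))
            intro hcon
            apply hgoal
            refine hcon.trans (Finset.sum_congr rfl fun i _ => ?_)
            have hlt : ((ι i : Fin (m+1)) : ℕ) < m + 2 := by have := (ι i).isLt; omega
            show (if h : ((ι i : Fin (m+1)) : ℕ) < m+2
                then φ (σ ⟨((ι i : Fin (m+1)) : ℕ), h⟩) else φ ((ι i : Fin (m+1)) : ℕ)) = _
            rw [dif_pos hlt]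
            rfl
        rw [Finset.sum_congr rfl fun σ _ => hper σ]
        rw [← Finset.mul_sum]
        congr 1
        rw [← Finset.mul_sum, Finset.sum_comm]
        have hbij : ∀ τ : Equiv.Perm (Fin (m+1)),
            (∑ σ : Equiv.Perm (Fin (m+2)),
                tB η K' (List.ofFn fun i => φ (σ ((τ i).castSucc))))
              = ∑ σ : Equiv.Perm (Fin (m+2)),
                  tB η K' (List.ofFn fun i : Fin (m+1) => φ (σ i.castSucc)) := by
          intro τ
          refine Fintype.sum_bijective (fun σ => σ * extPerm τ)
            (Group.mulRight_bijective _) _ _ fun σ => ?_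
          refine congrArg (tB η K') (congrArg List.ofFn (funext fun i => ?_))
          rw [Equiv.Perm.mul_apply, extPerm_castSucc]
        rw [Finset.sum_congr rfl fun τ _ => hbij τ]
        rw [Finset.sum_const, Finset.card_univ]
        have hcard : Fintype.card (Equiv.Perm (Fin (m+1))) = (m+1).factorial := by
          rw [Fintype.card_perm, Fintype.card_fin]
        rw [hcard, nsmul_eq_mul, ← mul_assoc,
          inv_mul_cancel₀ (Nat.cast_ne_zero.mpr (Nat.factorial_ne_zero (m+1))), one_mul]
      · have h1 : ∀ σ : Equiv.Perm (Fin (m+2)),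
            gAux (m+1) (K':ℤ) η (fun i => if h : i < m+2 then φ (σ ⟨i, h⟩) else φ i) = 0 := by
          intro σ
          have hz := fAux_eq_zero_of_gt (m+1) (K':ℤ) η
            (fun i => if h : i < m+2 then φ (σ ⟨i, h⟩) else φ i) (by push_cast; omega)
          show _ * fAux (m+1) (K':ℤ) η _ = 0
          rw [hz, mul_zero]
        rw [Finset.sum_congr rfl fun σ _ => h1 σ]
        have h2 : ∀ σ : Equiv.Perm (Fin (m+2)),
            tB η K' (List.ofFn fun i : Fin (m+1) => φ (σ i.castSucc)) = 0 := by
          intro σ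
          apply tB_zero_of_lt
          simp only [List.length_ofFn]
          omega
        rw [Finset.sum_congr rfl fun σ _ => h2 σ]
        simp
    -- the key resolvent identity
    have keyId : ((K:ℝ) * η - ∑ i ∈ Finset.range (m+2), φ i)
          * (∑ σ : Equiv.Perm (Fin (m+2)), tB η K (List.ofFn fun i => φ (σ i)))
        = (K:ℝ) * ((∑ σ : Equiv.Perm (Fin (m+2)),
              tB η (K-1) (List.ofFn fun i : Fin (m+1) => φ (σ i.castSucc)))
            + 2 * (∑ σ : Equiv.Perm (Fin (m+2)),
              tB η K (List.ofFn fun i : Fin (m+1) => φ (σ i.castSucc)))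
            + (∑ σ : Equiv.Perm (Fin (m+2)),
              tB η (K+1) (List.ofFn fun i : Fin (m+1) => φ (σ i.castSucc)))) := by
      rw [Finset.mul_sum]
      have hstep : ∀ σ : Equiv.Perm (Fin (m+2)),
          ((K:ℝ)*η - ∑ i ∈ Finset.range (m+2), φ i)
              * tB η K (List.ofFn fun i => φ (σ i))
            = ∑ p ∈ Finset.range (m+2),
                DD η K ((List.ofFn fun i : Fin (m+2) => φ (σ i)).take p)
                  ((List.ofFn fun i : Fin (m+2) => φ (σ i)).drop (p+1)) := by
        intro σ
        have hsumL : (List.ofFn fun i : Fin (m+2) => φ (σ i)).sum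
            = ∑ i ∈ Finset.range (m+2), φ i := by
          rw [List.sum_ofFn, ← Fin.sum_univ_eq_sum_range]
          exact Fintype.sum_bijective σ σ.bijective _ _ fun i => rfl
        have hinf : ∀ B : List ℝ, B <:+: (List.ofFn fun i : Fin (m+2) => φ (σ i)) →
            B ≠ [] → η ≠ B.sum := by
          intro B hB hBne
          obtain ⟨s, u, hsu⟩ := hB
          have hlen : s.length + B.length + u.length = m + 2 := by
            have := congrArg List.length hsu
            simp only [List.length_append, List.length_ofFn] at this
            omega
          have hBlen : 1 ≤ B.length := List.length_pos_iff.mpr hBne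
          have hdrop : (List.ofFn fun i : Fin (m+2) => φ (σ i)).drop s.length = B ++ u := by
            rw [← hsu, List.append_assoc, List.drop_left]
          have hBtake : B = ((List.ofFn fun i : Fin (m+2) => φ (σ i)).drop s.length).take B.length := by
            rw [hdrop, List.take_left]
          have hBeq : B = List.ofFn (fun r : Fin B.length =>
              φ (σ ⟨s.length + (r:ℕ), by have := r.isLt; omega⟩)) := by
            refine hBtake.trans ?_
            apply List.ext_getElem
            · first
              | (simp [List.length_take]; omega)
              | simp [List.length_take]
            · intro r h1 h2
              simp only [List.getElem_take, List.getElem_drop, List.getElem_ofFn]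
          intro hcon
          refine hres 1 B.length le_rfl hBlen (by omega)
            (fun r => σ ⟨s.length + (r:ℕ), by have := r.isLt; omega⟩) ?_ ?_
          · intro r1 r2 hr
            have h2 := σ.injective hr
            have h3 : s.length + (r1:ℕ) = s.length + (r2:ℕ) := congrArg Fin.val h2
            apply Fin.ext; omega
          · push_cast
            rw [one_mul, hcon]
            conv_lhs => rw [hBeq]
            rw [List.sum_ofFn]
        have h0 := starI η K (List.ofFn fun i : Fin (m+2) => φ (σ i)) hinf
        rw [hsumL, List.length_ofFn] at h0
        exact h0
      rw [Finset.sum_congr rfl fun σ _ => hstep σ, Finset.sum_comm]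
      have hp2 : ∀ p ∈ Finset.range (m+2),
          (∑ σ : Equiv.Perm (Fin (m+2)),
            DD η K ((List.ofFn fun i : Fin (m+2) => φ (σ i)).take p)
              ((List.ofFn fun i : Fin (m+2) => φ (σ i)).drop (p+1)))
            = ∑ σ : Equiv.Perm (Fin (m+2)),
                DD η K ((List.ofFn fun i : Fin (m+1) => φ (σ i.castSucc)).take p)
                  ((List.ofFn fun i : Fin (m+1) => φ (σ i.castSucc)).drop p) := by
        intro p hp; simp only [Finset.mem_range] at hp
        have hple : p ≤ m + 1 := by omega
        refine (Fintype.sum_bijective (fun σ => σ * cyc p hple)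
          (Group.mulRight_bijective _) _ _ fun σ => ?_).symm
        have e1 : (List.ofFn fun i : Fin (m+1) => φ (σ i.castSucc)).take p
            = (List.ofFn fun i : Fin (m+2) => φ ((σ * cyc p hple) i)).take p := by
          apply List.ext_getElem
          · simp only [List.length_take, List.length_ofFn]; omega
          · intro r h1 h2
            simp only [List.getElem_take, List.getElem_ofFn]
            have hr : r < p := by
              simp only [List.length_take, List.length_ofFn] at h1
              omega
            rw [Equiv.Perm.mul_apply]
            have hc : (cyc p hple) (⟨r, by omega⟩ : Fin (m+2))
                = Fin.castSucc (⟨r, by omega⟩ : Fin (m+1)) := by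
              apply Fin.ext
              rw [cyc_val]
              simp only [fin_mk_val, Fin.coe_castSucc]
              rw [if_pos hr]
            rw [hc]
        have e2 : (List.ofFn fun i : Fin (m+1) => φ (σ i.castSucc)).drop p
            = (List.ofFn fun i : Fin (m+2) => φ ((σ * cyc p hple) i)).drop (p+1) := by
          apply List.ext_getElem
          · simp only [List.length_drop, List.length_ofFn]; omega
          · intro r h1 h2
            simp only [List.getElem_drop, List.getElem_ofFn]
            have hr : p + r < m + 1 := by
              simp only [List.length_drop, List.length_ofFn] at h1
              omega
            rw [Equiv.Perm.mul_apply]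
            have hc : (cyc p hple) (⟨p + 1 + r, by omega⟩ : Fin (m+2))
                = Fin.castSucc (⟨p + r, by omega⟩ : Fin (m+1)) := by
              apply Fin.ext
              rw [cyc_val]
              simp only [fin_mk_val, Fin.coe_castSucc]
              rw [if_neg (by omega), if_neg (by omega)]
              omega
            rw [hc]
        rw [e1, e2]
      rw [Finset.sum_congr rfl hp2, Finset.sum_comm]
      have hstep2 : ∀ σ : Equiv.Perm (Fin (m+2)),
          (∑ p ∈ Finset.range (m+2),
            DD η K ((List.ofFn fun i : Fin (m+1) => φ (σ i.castSucc)).take p)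
              ((List.ofFn fun i : Fin (m+1) => φ (σ i.castSucc)).drop p))
            = (K:ℝ) * (tB η (K-1) (List.ofFn fun i : Fin (m+1) => φ (σ i.castSucc))
                + 2 * tB η K (List.ofFn fun i : Fin (m+1) => φ (σ i.castSucc))
                + tB η (K+1) (List.ofFn fun i : Fin (m+1) => φ (σ i.castSucc))) := by
        intro σ
        have h0 := starII η K (List.ofFn fun i : Fin (m+1) => φ (σ i.castSucc))
        have hr : (List.ofFn fun i : Fin (m+1) => φ (σ i.castSucc)).length + 1 = m + 2 := by
          simp
        rw [hr] at h0
        exact h0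
      rw [Finset.sum_congr rfl fun σ _ => hstep2 σ, ← Finset.mul_sum]
      congr 1
      rw [Finset.sum_add_distrib, Finset.sum_add_distrib, ← Finset.mul_sum]
    -- unfold fAux
    have hcond : (0:ℤ) ≤ (K:ℤ) ∧ (K:ℤ) ≤ (m:ℤ) + 2 := ⟨Int.ofNat_nonneg K, by push_cast; omega⟩
    have hfa : fAux (m+2) (K:ℤ) η φ
        = η⁻¹ * ∑ a ∈ ({-1, 0, 1} : Finset ℤ), omegaCoef a * (((m+2).factorial : ℝ)⁻¹
            * ∑ σ : Equiv.Perm (Fin (m+2)),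
                gAux (m+1) ((K:ℤ)+a) η (fun i => if h : i < m+2 then φ (σ ⟨i, h⟩) else φ i)) := by
      show fAux (m+2) (K:ℤ) η φ = _
      simp only [fAux, if_pos hcond]
      rfl
    rw [show (m+1+1 : ℕ) = m+2 from rfl] at *
    have hg : gAux (m+2) (K:ℤ) η φ
        = (-2 * ((K:ℤ):ℝ)) / (((K:ℤ):ℝ) * η - ∑ i ∈ Finset.range (m+2), φ i)
            * fAux (m+2) (K:ℤ) η φ := rfl
    rw [hg, hfa, sum_pm]
    have c1 : (K:ℤ) + (-1) = ((K-1:ℕ):ℤ) := by push_cast; omega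
    have c2 : (K:ℤ) + 0 = ((K:ℕ):ℤ) := by push_cast; ring
    have c3 : (K:ℤ) + 1 = ((K+1:ℕ):ℤ) := by push_cast; ring
    rw [c1, c2, c3, keyW (K-1), keyW K, keyW (K+1), omega_neg1, omega_zero, omega_one]
    -- denominators nonzero
    have hD : ((K:ℝ) * η - ∑ i ∈ Finset.range (m+2), φ i) ≠ 0 := by
      have hr := hres K (m+2) hK1 hK2 le_rfl (fun i => i) (fun a b h => h)
      have h2 : (∑ i : Fin (m+2), φ (((fun i => i : Fin (m+2) → Fin (m+2)) i : Fin (m+2)) : ℕ))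
          = ∑ i ∈ Finset.range (m+2), φ i := Fin.sum_univ_eq_sum_range (fun i => φ i) (m+2)
      rw [h2] at hr
      exact sub_ne_zero.mpr hr
    have hKne : ((K:ℝ)) ≠ 0 := Nat.cast_ne_zero.mpr (by omega)
    have hfac2 : (((m+2).factorial : ℝ)) ≠ 0 := Nat.cast_ne_zero.mpr (Nat.factorial_ne_zero _)
    -- solve for T via keyId
    have hT : (∑ σ : Equiv.Perm (Fin (m+2)), tB η K (List.ofFn fun i => φ (σ i)))
        = (K:ℝ) * ((∑ σ : Equiv.Perm (Fin (m+2)),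
              tB η (K-1) (List.ofFn fun i : Fin (m+1) => φ (σ i.castSucc)))
            + 2 * (∑ σ : Equiv.Perm (Fin (m+2)),
              tB η K (List.ofFn fun i : Fin (m+1) => φ (σ i.castSucc)))
            + (∑ σ : Equiv.Perm (Fin (m+2)),
              tB η (K+1) (List.ofFn fun i : Fin (m+1) => φ (σ i.castSucc))))
          / ((K:ℝ) * η - ∑ i ∈ Finset.range (m+2), φ i) := by
      rw [eq_div_iff hD, mul_comm]
      exact keyId
    rw [hT]
    -- signs
    have hsK : ((-1:ℝ))^K = (-1)^(K-1) * (-1) := by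
      conv_lhs => rw [show K = (K-1)+1 by omega]
      rw [pow_succ]
    have hsg : ((-1:ℝ))^(K+1) = (-1)^(K-1) := by
      rw [show K+1 = (K-1)+2 by omega, pow_add]
      norm_num
    rw [hsK, hsg]
    push_cast
    field_simp
    ring

end Stmt8Aux

theorem stmt8 (J : ℕ) (hJ : 1 ≤ J)
    (η : ℝ) (hη : η ≠ 0) (φ : ℕ → ℝ)
    (hres : ∀ K' J' : ℕ, 1 ≤ K' → K' ≤ J' → J' ≤ J →
      ∀ ι : Fin J' → Fin J, Function.Injective ι →
        (K' : ℝ) * η ≠ ∑ i, φ (ι i : ℕ)) :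
    gAux J 1 η φ =
      -(2 / η ^ J) * ((Nat.factorial J : ℝ)⁻¹ *
        ∑ σ : Equiv.Perm (Fin J),
          hFun J η (fun i => if h : i < J then φ (σ ⟨i, h⟩) else φ i)) := by
  have hclaim := Stmt8Aux.claim η hη J hJ 1 φ le_rfl hJ hres
  rw [Nat.cast_one] at hclaim
  rw [hclaim]
  have hconv : ∀ σ : Equiv.Perm (Fin J),
      hFun J η (fun i => if h : i < J then φ (σ ⟨i, h⟩) else φ i)
        = Stmt8Aux.tB η 1 (List.ofFn fun i => φ (σ i)) := by
    intro σ
    have hne : (List.ofFn fun i : Fin J => φ (σ i)) ≠ [] := by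
      intro hcon
      have := congrArg List.length hcon
      simp only [List.length_ofFn, List.length_nil] at this
      omega
    rw [Stmt8Aux.hFun_eq_hl, Stmt8Aux.tB_one η _ hne]
    refine congrArg (Stmt8Aux.hl η) (congrArg List.ofFn (funext fun i => ?_))
    rw [dif_pos i.isLt]
  rw [Finset.sum_congr rfl fun σ _ => hconv σ]
  all_goals ring
end

section
/- Let η > 0, let (c_k)_{k≥1} be complex numbers, (φ_k)_{k≥1} real numbers, and γ_k : (0,∞) → ℂ functions; set β_k(x) = c_k e^{−iφ_k x} γ_k(x) and σ(x) = sup_k |γ_k(x)|. Then for all integers J ≥ 2 and 0 ≤ K ≤ J and every x ∈ (0,∞), Σ_{m_1,…,m_J=1}^∞ | f_{J,K}(η; φ_{m_1},…,φ_{m_J}) β_{m_1}(x) ⋯ β_{m_J}(x) | ≤ (1/η) · ( (1/2) E_{J−1,K−1} + E_{J−1,K} + (1/2) E_{J−1,K+1} ) · ( Σ_{l=1}^∞ |c_l| ) · σ(x)^J, where E_{J,K} := Σ_{m_1,…,m_J=1}^∞ |c_{m_1} ⋯ c_{m_J} g_{J,K}(η; φ_{m_1},…,φ_{m_J})| ∈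 [0,∞]. In particular, if the right-hand side is finite, then the series S_{J,K}(x) = Σ_{m_1,…,m_J=1}^∞ f_{J,K}(η; φ_{m_1},…,φ_{m_J}) β_{m_1}(x) ⋯ β_{m_J}(x) e^{iK(ηx + 2θ)} converges absolutely for any θ ∈ ℝ. -/
open scoped BigOperators ENNReal
open MeasureTheory

/-- Pad a tuple `m : Fin J → ℕ` of indices into a function `ℕ → ℝ` listing `φ_{m_1},…,φ_{m_J}`. -/
noncomputable def padFin (J : ℕ) (φ : ℕ → ℝ) (m : Fin J → ℕ) : ℕ → ℝ :=
  fun n => if h : n < J then φ (m ⟨n, h⟩) else 0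

/-- `E_{J,K} = Σ_{m_1,…,m_J} |c_{m_1} ⋯ c_{m_J} g_{J,K}(η;φ_{m_1},…,φ_{m_J})| ∈ [0,∞]`. -/
noncomputable def EFun (η : ℝ) (c : ℕ → ℂ) (φ : ℕ → ℝ) (J : ℕ) (K : ℤ) : ℝ≥0∞ :=
  ∑' m : Fin J → ℕ,
    (‖∏ i, c (m i)‖₊ : ℝ≥0∞) * (‖gAux J K η (padFin J φ m)‖₊ : ℝ≥0∞)

/-!
Unfolding the recursion once and applying the triangle inequality bounds `|f_{J,K}(η; φ_m)|` by
`η⁻¹ Σ_a |ω_a| (1/J!) Σ_σ |g_{J-1,K+a}|` evaluated at the first `J-1` entries of `m ∘ σ`.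
In the sum over `m` each permutation is undone by reindexing, after which the last index splits
off: it contributes `Σ_l |c_l| σ(x)`, while the other `J-1` contribute at most
`E_{J-1,K+a} σ(x)^{J-1}` because `|β_k(x)| = |c_k| |γ_k(x)| ≤ |c_k| σ(x)`. The `J!` equal
permutation terms cancel the factor `1/J!`.
-/

open Finset

lemma fAux_congr {J : ℕ} (K : ℤ) (η : ℝ) {φ ψ : ℕ → ℝ} (h : ∀ i < J, φ i = ψ i) :
    fAux J K η φ = fAux J K η ψ := by
  induction J using Nat.strong_induction_on generalizing K φ ψ with
  | _ J ih =>
    match J, ih, h with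
    | 0, _, _ | 1, _, _ => rfl
    | n + 2, ih, h =>
      simp only [fAux]
      refine if_ctx_congr Iff.rfl (fun _ => ?_) fun _ => rfl
      refine congrArg _ (sum_congr rfl fun a _ => ?_)
      congr 2
      refine sum_congr rfl fun σ _ => ?_
      have hσ : ∀ i < n + 1, (if h : i < n + 2 then φ (σ ⟨i, h⟩) else φ i) =
          (if h : i < n + 2 then ψ (σ ⟨i, h⟩) else ψ i) := fun i hi => by
        simp only [dif_pos (by omega : i < n + 2), h _ (σ _).isLt]
      rw [sum_congr rfl fun i hi => hσ i (mem_range.1 hi), ih (n + 1) (by omega) _ hσ]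

lemma gAux_congr {J : ℕ} (K : ℤ) (η : ℝ) {φ ψ : ℕ → ℝ} (h : ∀ i < J, φ i = ψ i) :
    gAux J K η φ = gAux J K η ψ := by
  rw [gAux, gAux, fAux_congr K η h, sum_congr rfl fun i hi => h i (mem_range.1 hi)]

lemma fAux_padFin_succ_succ {n : ℕ} {K : ℤ} (hK : 0 ≤ K ∧ K ≤ n + 2) (η : ℝ) (φ : ℕ → ℝ)
    (m : Fin (n + 2) → ℕ) :
    fAux (n + 2) K η (padFin (n + 2) φ m) = η⁻¹ * ∑ a ∈ ({-1, 0, 1} : Finset ℤ), omegaCoef a *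
      ((Nat.factorial (n + 2) : ℝ)⁻¹ * ∑ σ : Equiv.Perm (Fin (n + 2)),
        gAux (n + 1) (K + a) η (padFin (n + 1) φ fun j => m (σ j.castSucc))) := by
  rw [fAux, if_pos hK]
  refine congrArg _ (sum_congr rfl fun a _ => ?_)
  congr 2
  refine sum_congr rfl fun σ _ => gAux_congr _ _ fun i hi => ?_
  simp [padFin, hi, show i < n + 2 by omega]

lemma enorm_fAux_padFin_le (n : ℕ) (K : ℤ) (η : ℝ) (φ : ℕ → ℝ) (m : Fin (n + 2) → ℕ) :
    ‖fAux (n + 2) K η (padFin (n + 2) φ m)‖ₑ ≤ ‖η⁻¹‖ₑ * ∑ a ∈ ({-1, 0, 1} : Finset ℤ),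
      ‖omegaCoef a‖ₑ * (‖(Nat.factorial (n + 2) : ℝ)⁻¹‖ₑ * ∑ σ : Equiv.Perm (Fin (n + 2)),
        ‖gAux (n + 1) (K + a) η (padFin (n + 1) φ fun j => m (σ j.castSucc))‖ₑ) := by
  by_cases hK : 0 ≤ K ∧ K ≤ n + 2
  · rw [fAux_padFin_succ_succ hK, enorm_mul]
    gcongr
    refine (enorm_sum_le _ _).trans (sum_le_sum fun a _ => ?_)
    rw [enorm_mul, enorm_mul]
    gcongr
    exact enorm_sum_le _ _
  · simp [fAux, hK]

lemma tsum_comp_castSucc_mul_prod {N : ℕ} (G : (Fin N → ℕ) → ℝ≥0∞) (b : ℕ → ℝ≥0∞)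
    (σ : Equiv.Perm (Fin (N + 1))) :
    ∑' m : Fin (N + 1) → ℕ, G (fun j => m (σ j.castSucc)) * ∏ i, b (m i) =
      (∑' m : Fin N → ℕ, G m * ∏ i, b (m i)) * ∑' k, b k := by
  calc ∑' m : Fin (N + 1) → ℕ, G (fun j => m (σ j.castSucc)) * ∏ i, b (m i)
      = ∑' m : Fin (N + 1) → ℕ, G (fun j => m j.castSucc) * ∏ i, b (m i) := by
        rw [← (σ.symm.arrowCongr (Equiv.refl ℕ)).tsum_eq
          (fun m => G (fun j => m j.castSucc) * ∏ i, b (m i))]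
        refine tsum_congr fun m => ?_
        simp [Equiv.prod_comp σ fun i => b (m i)]
    _ = ∑' p : ℕ × (Fin N → ℕ), G p.2 * (∏ i, b (p.2 i)) * b p.1 := by
        rw [← (Fin.snocEquiv fun _ => ℕ).tsum_eq]
        refine tsum_congr fun p => ?_
        simp [Fin.prod_univ_castSucc, Fin.snocEquiv, mul_assoc]
    _ = _ := by
        rw [ENNReal.tsum_prod', ← ENNReal.tsum_mul_left]
        simp only [ENNReal.tsum_mul_right]

lemma enorm_inv_factorial_mul_factorial (n : ℕ) :
    ‖(Nat.factorial n : ℝ)⁻¹‖ₑ * (Nat.factorial n : ℝ≥0∞) = 1 := by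
  rw [enorm_inv (by positivity), Real.enorm_natCast]
  exact ENNReal.inv_mul_cancel (by simp [Nat.factorial_ne_zero]) (ENNReal.natCast_ne_top _)

lemma tsum_enorm_fAux_mul_prod_le (n : ℕ) (K : ℤ) (η : ℝ) (φ : ℕ → ℝ) (b : ℕ → ℝ≥0∞) :
    ∑' m : Fin (n + 2) → ℕ, ‖fAux (n + 2) K η (padFin (n + 2) φ m)‖ₑ * ∏ i, b (m i) ≤
      ‖η⁻¹‖ₑ * ∑ a ∈ ({-1, 0, 1} : Finset ℤ), ‖omegaCoef a‖ₑ *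
        ((∑' m : Fin (n + 1) → ℕ, ‖gAux (n + 1) (K + a) η (padFin (n + 1) φ m)‖ₑ * ∏ i, b (m i)) *
          ∑' k, b k) := by
  calc _ ≤ ∑' m : Fin (n + 2) → ℕ, (‖η⁻¹‖ₑ * ∑ a ∈ ({-1, 0, 1} : Finset ℤ),
          ‖omegaCoef a‖ₑ * (‖(Nat.factorial (n + 2) : ℝ)⁻¹‖ₑ * ∑ σ : Equiv.Perm (Fin (n + 2)),
            ‖gAux (n + 1) (K + a) η (padFin (n + 1) φ fun j => m (σ j.castSucc))‖ₑ)) *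
          ∏ i, b (m i) :=
        ENNReal.tsum_le_tsum fun m => by gcongr; exact enorm_fAux_padFin_le n K η φ m
    _ = ‖η⁻¹‖ₑ * ∑ a ∈ ({-1, 0, 1} : Finset ℤ), ‖omegaCoef a‖ₑ *
          (‖(Nat.factorial (n + 2) : ℝ)⁻¹‖ₑ * ∑ σ : Equiv.Perm (Fin (n + 2)),
            ∑' m : Fin (n + 2) → ℕ,
              ‖gAux (n + 1) (K + a) η (padFin (n + 1) φ fun j => m (σ j.castSucc))‖ₑ *
                ∏ i, b (m i)) := by
        simp only [sum_mul, mul_assoc, ENNReal.tsum_mul_left,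
          Summable.tsum_finsetSum fun _ _ => ENNReal.summable]
    _ = ‖η⁻¹‖ₑ * ∑ a ∈ ({-1, 0, 1} : Finset ℤ), ‖omegaCoef a‖ₑ *
          (‖(Nat.factorial (n + 2) : ℝ)⁻¹‖ₑ * ∑ _σ : Equiv.Perm (Fin (n + 2)),
            (∑' m : Fin (n + 1) → ℕ, ‖gAux (n + 1) (K + a) η (padFin (n + 1) φ m)‖ₑ *
              ∏ i, b (m i)) * ∑' k, b k) :=
        congrArg _ <| sum_congr rfl fun a _ => congrArg _ <| congrArg _ <|
          sum_congr rfl fun σ _ => tsum_comp_castSucc_mul_prod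
            (fun m => ‖gAux (n + 1) (K + a) η (padFin (n + 1) φ m)‖ₑ) b σ
    _ = _ := by
        simp only [sum_const, card_univ, Fintype.card_perm, Fintype.card_fin, nsmul_eq_mul,
          ← mul_assoc, enorm_inv_factorial_mul_factorial, one_mul]

lemma tsum_enorm_gAux_mul_prod_le (N : ℕ) (K : ℤ) (η : ℝ) (c : ℕ → ℂ) (φ : ℕ → ℝ)
    {b : ℕ → ℝ≥0∞} {S : ℝ≥0∞} (hb : ∀ k, b k ≤ ‖c k‖ₑ * S) :
    ∑' m : Fin N → ℕ, ‖gAux N K η (padFin N φ m)‖ₑ * ∏ i, b (m i) ≤ EFun η c φ N K * S ^ N := by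
  calc _ ≤ ∑' m : Fin N → ℕ, ‖gAux N K η (padFin N φ m)‖ₑ * (‖∏ i, c (m i)‖ₑ * S ^ N) :=
        ENNReal.tsum_le_tsum fun m => by
          gcongr
          calc ∏ i, b (m i) ≤ ∏ i, ‖c (m i)‖ₑ * S := prod_le_prod' fun i _ => hb _
            _ = _ := by simp [prod_mul_distrib, enorm_eq_nnnorm, nnnorm_prod]
    _ = _ := by
        rw [EFun, ← ENNReal.tsum_mul_right]
        exact tsum_congr fun m => by rw [enorm_eq_nnnorm, enorm_eq_nnnorm]; ring

lemma sum_enorm_omegaCoef_mul (F : ℤ → ℝ≥0∞) :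
    ∑ a ∈ ({-1, 0, 1} : Finset ℤ), ‖omegaCoef a‖ₑ * F a = 1 / 2 * F (-1) + F 0 + 1 / 2 * F 1 := by
  have two : ‖(2 : ℝ)‖ₑ = 2 := by exact_mod_cast Real.enorm_natCast 2
  simp [omegaCoef, two, add_assoc]

lemma enorm_inv_le_ofReal_inv (η : ℝ) : ‖η⁻¹‖ₑ ≤ (ENNReal.ofReal η)⁻¹ := by
  rcases le_or_gt η 0 with hη | hη
  · simp [ENNReal.ofReal_eq_zero.2 hη]
  · rw [Real.enorm_eq_ofReal (inv_nonneg.2 hη.le), ENNReal.ofReal_inv_of_pos hη]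

lemma tsum_enorm_fAux_mul_prod_le_EFun (n : ℕ) (K : ℤ) (η : ℝ) (c : ℕ → ℂ) (φ : ℕ → ℝ)
    {b : ℕ → ℝ≥0∞} {S : ℝ≥0∞} (hb : ∀ k, b k ≤ ‖c k‖ₑ * S) :
    ∑' m : Fin (n + 2) → ℕ, ‖fAux (n + 2) K η (padFin (n + 2) φ m)‖ₑ * ∏ i, b (m i) ≤
      (ENNReal.ofReal η)⁻¹ * (1 / 2 * EFun η c φ (n + 1) (K - 1) + EFun η c φ (n + 1) K +
        1 / 2 * EFun η c φ (n + 1) (K + 1)) * (∑' l, ‖c l‖ₑ) * S ^ (n + 2) :=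
  calc _ ≤ ‖η⁻¹‖ₑ * ∑ a ∈ ({-1, 0, 1} : Finset ℤ), ‖omegaCoef a‖ₑ *
          (EFun η c φ (n + 1) (K + a) * S ^ (n + 1) * ((∑' l, ‖c l‖ₑ) * S)) := by
        refine (tsum_enorm_fAux_mul_prod_le n K η φ b).trans ?_
        gcongr
        · exact tsum_enorm_gAux_mul_prod_le _ _ _ _ _ hb
        · exact ENNReal.tsum_mul_right ▸ ENNReal.tsum_le_tsum hb
    _ = ‖η⁻¹‖ₑ * (1 / 2 * EFun η c φ (n + 1) (K - 1) + EFun η c φ (n + 1) K +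
          1 / 2 * EFun η c φ (n + 1) (K + 1)) * (∑' l, ‖c l‖ₑ) * S ^ (n + 2) := by
        rw [sum_enorm_omegaCoef_mul, ← sub_eq_add_neg, add_zero]
        ring
    _ ≤ _ := by gcongr; exact enorm_inv_le_ofReal_inv η

lemma enorm_cexp_of_re_eq_zero {z : ℂ} (hz : z.re = 0) : ‖Complex.exp z‖ₑ = 1 := by
  rw [← Complex.re_add_im z, hz, Complex.ofReal_zero, zero_add, Complex.enorm_exp_ofReal_mul_I]

lemma enorm_ofReal_mul_prod_of_enorm_eq_one {ι : Type*} [Fintype ι] (r : ℝ) (c u g : ι → ℂ)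
    (hu : ∀ i, ‖u i‖ₑ = 1) :
    ‖(r : ℂ) * ∏ i, c i * u i * g i‖ₑ = ‖r‖ₑ * ∏ i, ‖c i‖ₑ * ‖g i‖ₑ := by
  have hu' (i : ι) : (‖u i‖₊ : ℝ≥0∞) = 1 := hu i
  simp only [enorm_eq_nnnorm, nnnorm_mul, Complex.nnnorm_real, nnnorm_prod, ENNReal.coe_mul,
    ENNReal.ofNNReal_finsetProd, hu', mul_one]

theorem stmt10_general (η : ℝ)
    (c : ℕ → ℂ) (φ : ℕ → ℝ) (γ : ℕ → ℝ → ℂ)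
    (J K : ℕ) (hJ : 2 ≤ J) (x : ℝ) :
    (∑' m : Fin J → ℕ,
        (‖(fAux J (K : ℤ) η (padFin J φ m) : ℂ) *
            ∏ i, (c (m i) * Complex.exp (-Complex.I * φ (m i) * x) * γ (m i) x)‖₊ : ℝ≥0∞))
      ≤ (ENNReal.ofReal η)⁻¹ *
        ((1 / 2) * EFun η c φ (J - 1) ((K : ℤ) - 1) + EFun η c φ (J - 1) (K : ℤ) +
          (1 / 2) * EFun η c φ (J - 1) ((K : ℤ) + 1)) *
        (∑' l, (‖c l‖₊ : ℝ≥0∞)) * (⨆ k, (‖γ k x‖₊ : ℝ≥0∞)) ^ J ∧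
    ((ENNReal.ofReal η)⁻¹ *
        ((1 / 2) * EFun η c φ (J - 1) ((K : ℤ) - 1) + EFun η c φ (J - 1) (K : ℤ) +
          (1 / 2) * EFun η c φ (J - 1) ((K : ℤ) + 1)) *
        (∑' l, (‖c l‖₊ : ℝ≥0∞)) * (⨆ k, (‖γ k x‖₊ : ℝ≥0∞)) ^ J < ⊤ →
      ∀ θ : ℝ, Summable fun m : Fin J → ℕ =>
        ‖(fAux J (K : ℤ) η (padFin J φ m) : ℂ) *
            (∏ i, (c (m i) * Complex.exp (-Complex.I * φ (m i) * x) * γ (m i) x)) *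
            Complex.exp (Complex.I * K * (η * x + 2 * θ))‖) := by
  obtain ⟨n, rfl⟩ : ∃ n, J = n + 2 := ⟨J - 2, by omega⟩
  simp only [← enorm_eq_nnnorm]
  have hterm (m : Fin (n + 2) → ℕ) :
      ‖(fAux (n + 2) K η (padFin (n + 2) φ m) : ℂ) *
        ∏ i, (c (m i) * Complex.exp (-Complex.I * φ (m i) * x) * γ (m i) x)‖ₑ =
      ‖fAux (n + 2) K η (padFin (n + 2) φ m)‖ₑ * ∏ i, ‖c (m i)‖ₑ * ‖γ (m i) x‖ₑ :=
    enorm_ofReal_mul_prod_of_enorm_eq_one _ _ _ _ fun _ => enorm_cexp_of_re_eq_zero (by simp)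
  have hmain := (tsum_congr hterm).trans_le <| tsum_enorm_fAux_mul_prod_le_EFun n K η c φ
    fun k => mul_le_mul_right (le_iSup (fun k => ‖γ k x‖ₑ) k) _
  refine ⟨hmain, fun hfin θ => tsum_enorm_ne_top_iff_summable_norm.1 ?_⟩
  have hphase : ‖Complex.exp (Complex.I * K * (η * x + 2 * θ))‖ₑ = 1 :=
    enorm_cexp_of_re_eq_zero (by simp)
  simpa only [enorm_mul _ (Complex.exp _), hphase, mul_one] using (hmain.trans_lt hfin).ne

theorem stmt10 (η : ℝ) (hη : 0 < η)
    (c : ℕ → ℂ) (φ : ℕ → ℝ) (γ : ℕ → ℝ → ℂ)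
    (J K : ℕ) (hJ : 2 ≤ J) (hK : K ≤ J) (x : ℝ) (hx : 0 < x) :
    (∑' m : Fin J → ℕ,
        (‖(fAux J (K : ℤ) η (padFin J φ m) : ℂ) *
            ∏ i, (c (m i) * Complex.exp (-Complex.I * φ (m i) * x) * γ (m i) x)‖₊ : ℝ≥0∞))
      ≤ (ENNReal.ofReal η)⁻¹ *
        ((1 / 2) * EFun η c φ (J - 1) ((K : ℤ) - 1) + EFun η c φ (J - 1) (K : ℤ) +
          (1 / 2) * EFun η c φ (J - 1) ((K : ℤ) + 1)) *
        (∑' l, (‖c l‖₊ : ℝ≥0∞)) * (⨆ k, (‖γ k x‖₊ : ℝ≥0∞)) ^ J ∧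
    ((ENNReal.ofReal η)⁻¹ *
        ((1 / 2) * EFun η c φ (J - 1) ((K : ℤ) - 1) + EFun η c φ (J - 1) (K : ℤ) +
          (1 / 2) * EFun η c φ (J - 1) ((K : ℤ) + 1)) *
        (∑' l, (‖c l‖₊ : ℝ≥0∞)) * (⨆ k, (‖γ k x‖₊ : ℝ≥0∞)) ^ J < ⊤ →
      ∀ θ : ℝ, Summable fun m : Fin J → ℕ =>
        ‖(fAux J (K : ℤ) η (padFin J φ m) : ℂ) *
            (∏ i, (c (m i) * Complex.exp (-Complex.I * φ (m i) * x) * γ (m i) x)) *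
            Complex.exp (Complex.I * K * (η * x + 2 * θ))‖) :=
  stmt10_general η c φ γ J K hJ x
end

section
/- Let ν be a finite Borel measure on ℝ, let J ≥ 1 be an integer, let α > 0, and let D < ∞ be such that ∫_ℝ |η − ψ|^{−Jα} dν(η) ≤ D for every ψ ∈ ℝ. Then for all real numbers φ_1,…,φ_J, ∫_ℝ |h_J(η; φ_1,…,φ_J)|^α dν(η) ≤ C_J · D, where C_J = (1/(J+1))·binom(2J, J) is the J-th Catalan number. (The finitely many points η at which some denominator in the recursive definition of h_J vanishes form a ν-null set under the stated hypothesis, so the value of h_J there is immaterial; one may use the convention that division by zero yields 0.) -/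
/-!
Put `γ = J α`. If `γ > 1`, the hypothesis gives `ν I ≤ D |I|^γ` for every interval `I`; cutting
an interval of length one into `n` pieces gives `ν I ≤ D n^(1-γ) → 0`, so `ν = 0`.

If `γ ≤ 1`, subadditivity of `t ↦ t^c` for `c = γ/(K+1) ≤ 1` and weighted AM-GM with weights
`1, j, K-j` over `K+1` give pointwise
`(K+1) |h_{K+1}|^c ≤ Σ_j (|η - S|^(-γ) + j |h_j|^(γ/j) + (K-j) |h_{K-j}|^(γ/(K-j)))`,
`S = φ_1 + ⋯ + φ_{K+1}`. Integrating, `∫ n |h_n|^(γ/n) dν ≤ n C_n D` by induction, since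
`1 + m C_m + n C_n ≤ (m+n+1) C_m C_n` and `C_{K+1} = Σ_j C_j C_{K-j}`.
-/

open scoped BigOperators ENNReal
open MeasureTheory

open Finset Set Filter Topology

theorem Real.rpow_sum_le_sum_rpow {ι : Type*} (s : Finset ι) {f : ι → ℝ} (hf : ∀ i ∈ s, 0 ≤ f i)
    {p : ℝ} (hp0 : 0 < p) (hp1 : p ≤ 1) : (∑ i ∈ s, f i) ^ p ≤ ∑ i ∈ s, f i ^ p := by
  classical
  induction s using Finset.induction with
  | empty => simp [Real.zero_rpow hp0.ne']
  | insert i s hi ih =>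
    rw [sum_insert hi, sum_insert hi]
    have hfs := Finset.forall_mem_insert .. |>.1 hf
    exact (Real.rpow_add_le_add_rpow hfs.1 (sum_nonneg hfs.2) hp0.le hp1).trans
      (add_le_add_right (ih hfs.2) _)

theorem Real.mul_geom_mean_le_add {x y z : ℝ} (hx : 0 ≤ x) (hy : 0 ≤ y) (hz : 0 ≤ z) {m n N : ℕ}
    (hN : m + n + 1 = N) :
    N * (x ^ (1 / N : ℝ) * y ^ (m / N : ℝ) * z ^ (n / N : ℝ)) ≤ x + m * y + n * z := by
  have hN0 : (0 : ℝ) < N := by rw [← hN]; positivity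
  have hNR : (m : ℝ) + n + 1 = N := by exact_mod_cast hN
  have hamgm := Real.geom_mean_le_arith_mean3_weighted (w₁ := 1 / N) (w₂ := m / N) (w₃ := n / N)
    (by positivity) (by positivity) (by positivity) hx hy hz (by field_simp; linarith)
  calc _ ≤ N * (1 / N * x + m / N * y + n / N * z) := mul_le_mul_of_nonneg_left hamgm hN0.le
    _ = x + m * y + n * z := by field_simp

theorem hFun_zero (η : ℝ) (φ : ℕ → ℝ) : hFun 0 η φ = 1 := by
  rw [hFun]

theorem hFun_succ (K : ℕ) (η : ℝ) (φ : ℕ → ℝ) :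
    hFun (K + 1) η φ = (η - ∑ i ∈ range (K + 1), φ i)⁻¹ *
      ∑ j ∈ range (K + 1), hFun j η φ * hFun (K - j) η (fun i => φ (i + j)) := by
  rw [hFun, sum_attach (range (K + 1)) fun j => hFun j η φ * hFun (K - j) η (fun i => φ (i + j))]

theorem measurable_hFun (n : ℕ) (φ : ℕ → ℝ) : Measurable fun η => hFun n η φ := by
  induction n using Nat.strong_induction_on generalizing φ with
  | _ n ih =>
  cases n with
  | zero => simp only [hFun_zero]; exact measurable_const
  | succ K =>
    simp only [hFun_succ]
    exact (measurable_id.sub_const _).inv.mul <| Finset.measurable_sum _ fun j hj =>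
      (ih j (by simp at hj; omega) φ).mul (ih (K - j) (by omega) _)

theorem abs_hFun_succ_le (K : ℕ) (η : ℝ) (φ : ℕ → ℝ) :
    |hFun (K + 1) η φ| ≤ |η - ∑ i ∈ range (K + 1), φ i|⁻¹ *
      ∑ j ∈ range (K + 1), |hFun j η φ| * |hFun (K - j) η (fun i => φ (i + j))| := by
  rw [hFun_succ, abs_mul, abs_inv]
  gcongr
  exact (abs_sum_le_sum_abs _ _).trans_eq (by simp only [abs_mul])

theorem abs_hFun_rpow_rpow (γ : ℝ) (n N : ℕ) (η : ℝ) (φ : ℕ → ℝ) :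
    (|hFun n η φ| ^ (γ / n)) ^ (n / N : ℝ) = |hFun n η φ| ^ (γ / N) := by
  rcases n with _ | n
  · simp [hFun_zero]
  · rw [← Real.rpow_mul (abs_nonneg _)]
    congr 1
    field_simp

noncomputable def hWeightedPow (γ : ℝ) (n : ℕ) (η : ℝ) (φ : ℕ → ℝ) : ℝ :=
  n * |hFun n η φ| ^ (γ / n)

theorem hWeightedPow_nonneg (γ : ℝ) (n : ℕ) (η : ℝ) (φ : ℕ → ℝ) : 0 ≤ hWeightedPow γ n η φ := by
  unfold hWeightedPow; positivity

theorem hWeightedPow_succ_le {γ : ℝ} (hγ0 : 0 < γ) (hγ1 : γ ≤ 1) (K : ℕ) (η : ℝ) (φ : ℕ → ℝ) :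
    hWeightedPow γ (K + 1) η φ ≤ ∑ j ∈ range (K + 1),
      ((|η - ∑ i ∈ range (K + 1), φ i|⁻¹) ^ γ + hWeightedPow γ j η φ +
        hWeightedPow γ (K - j) η (fun i => φ (i + j))) := by
  set X := |η - ∑ i ∈ range (K + 1), φ i|⁻¹
  set N : ℕ := K + 1 with hN
  set c : ℝ := γ / N
  have hN0 : (0 : ℝ) < N := by positivity
  have hc0 : 0 < c := by positivity
  have hc1 : c ≤ 1 := div_le_one_of_le₀ (hγ1.trans (by norm_cast; omega)) hN0.le
  have hX : 0 ≤ X := by positivity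
  calc hWeightedPow γ N η φ = N * |hFun N η φ| ^ c := rfl
    _ ≤ N * (X * ∑ j ∈ range N, |hFun j η φ| * |hFun (K - j) η (fun i => φ (i + j))|) ^ c := by
      gcongr; exact abs_hFun_succ_le K η φ
    _ ≤ N * (X ^ c * ∑ j ∈ range N,
          |hFun j η φ| ^ c * |hFun (K - j) η (fun i => φ (i + j))| ^ c) := by
      rw [Real.mul_rpow hX (by positivity)]
      gcongr
      refine (Real.rpow_sum_le_sum_rpow _ (fun j _ => by positivity) hc0 hc1).trans_eq ?_
      simp only [Real.mul_rpow (abs_nonneg _) (abs_nonneg _)]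
    _ = ∑ j ∈ range N, N * ((X ^ γ) ^ (1 / N : ℝ) * (|hFun j η φ| ^ (γ / j)) ^ (j / N : ℝ) *
          (|hFun (K - j) η (fun i => φ (i + j))| ^ (γ / (K - j : ℕ))) ^ ((K - j : ℕ) / N : ℝ)) := by
      rw [mul_sum, mul_sum]
      refine sum_congr rfl fun j _ => ?_
      rw [abs_hFun_rpow_rpow, abs_hFun_rpow_rpow, ← Real.rpow_mul hX, mul_one_div, mul_assoc]
    _ ≤ _ := sum_le_sum fun j hj => Real.mul_geom_mean_le_add (by positivity) (by positivity)
      (by positivity) (by simp at hj; omega)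

theorem catalan_pos (n : ℕ) : 0 < catalan n :=
  Nat.pos_of_mul_pos_left ((succ_mul_catalan_eq_centralBinom n).symm ▸ n.centralBinom_pos)

theorem one_add_mul_catalan_add_mul_catalan_le (m n : ℕ) :
    1 + m * catalan m + n * catalan n ≤ (m + n + 1) * (catalan m * catalan n) := by
  have hm := catalan_pos m
  have hn := catalan_pos n
  nlinarith [Nat.mul_le_mul hm hn, Nat.mul_le_mul_left m (Nat.le_mul_of_pos_right (catalan m) hn),
    Nat.mul_le_mul_left n (Nat.le_mul_of_pos_left (catalan n) hm)]

theorem sum_range_one_add_mul_catalan_le (K : ℕ) :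
    ∑ j ∈ range (K + 1), (1 + j * catalan j + (K - j) * catalan (K - j)) ≤
      (K + 1) * catalan (K + 1) := by
  calc _ ≤ ∑ j ∈ range (K + 1), (K + 1) * (catalan j * catalan (K - j)) :=
        sum_le_sum fun j hj => (one_add_mul_catalan_add_mul_catalan_le j (K - j)).trans_eq
          (by simp at hj; congr 1; omega)
    _ = (K + 1) * catalan (K + 1) := by rw [← mul_sum, catalan_succ, sum_range]

theorem ENNReal.ofReal_inv_rpow_le {x : ℝ} (hx : 0 ≤ x) (γ : ℝ) :
    ENNReal.ofReal (x⁻¹ ^ γ) ≤ ENNReal.ofReal x ^ (-γ) := by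
  rcases hx.eq_or_lt with rfl | hx
  · rcases eq_or_ne γ 0 with rfl | hγ
    · simp
    · simp [Real.zero_rpow hγ]
  · rw [ENNReal.ofReal_rpow_of_pos hx, Real.rpow_neg hx.le, Real.inv_rpow hx.le]

theorem lintegral_hWeightedPow_le {ν : Measure ℝ} {γ : ℝ} (hγ0 : 0 < γ) (hγ1 : γ ≤ 1)
    {D : ℝ≥0∞} (hint : ∀ ψ : ℝ, ∫⁻ η, ENNReal.ofReal |η - ψ| ^ (-γ) ∂ν ≤ D)
    (n : ℕ) (φ : ℕ → ℝ) :
    ∫⁻ η, ENNReal.ofReal (hWeightedPow γ n η φ) ∂ν ≤ n * catalan n * D := by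
  induction n using Nat.strong_induction_on generalizing φ with
  | _ n ih =>
  rcases n with _ | K
  · simp [hWeightedPow]
  have hmeas (m : ℕ) (ψ : ℕ → ℝ) : Measurable fun η => ENNReal.ofReal (hWeightedPow γ m η ψ) :=
    (measurable_const.mul ((measurable_hFun m ψ).abs.pow_const _)).ennreal_ofReal
  set S := ∑ i ∈ range (K + 1), φ i
  have hX : Measurable fun η : ℝ => ENNReal.ofReal (|η - S|⁻¹ ^ γ) :=
    ((measurable_id.sub_const S).abs.inv.pow_const γ).ennreal_ofReal
  calc ∫⁻ η, ENNReal.ofReal (hWeightedPow γ (K + 1) η φ) ∂ν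
      ≤ ∫⁻ η, ∑ j ∈ range (K + 1), (ENNReal.ofReal (|η - S|⁻¹ ^ γ) +
          ENNReal.ofReal (hWeightedPow γ j η φ) +
          ENNReal.ofReal (hWeightedPow γ (K - j) η (fun i => φ (i + j)))) ∂ν := by
        refine lintegral_mono fun η => (ENNReal.ofReal_le_ofReal
          (hWeightedPow_succ_le hγ0 hγ1 K η φ)).trans_eq ?_
        have hnonneg (j : ℕ) := hWeightedPow_nonneg γ j η φ
        have hnonneg' (j : ℕ) := hWeightedPow_nonneg γ (K - j) η (fun i => φ (i + j))
        rw [ENNReal.ofReal_sum_of_nonneg fun j _ =>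
          add_nonneg (add_nonneg (by positivity) (hnonneg j)) (hnonneg' j)]
        refine sum_congr rfl fun j _ => ?_
        rw [ENNReal.ofReal_add (add_nonneg (by positivity) (hnonneg j)) (hnonneg' j),
          ENNReal.ofReal_add (by positivity) (hnonneg j)]
    _ = ∑ j ∈ range (K + 1), (∫⁻ η, ENNReal.ofReal (|η - S|⁻¹ ^ γ) ∂ν +
          ∫⁻ η, ENNReal.ofReal (hWeightedPow γ j η φ) ∂ν +
          ∫⁻ η, ENNReal.ofReal (hWeightedPow γ (K - j) η (fun i => φ (i + j))) ∂ν) := by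
        rw [lintegral_finsetSum]
        · refine sum_congr rfl fun j _ => ?_
          rw [lintegral_add_right _ (hmeas _ _), lintegral_add_right _ (hmeas _ _)]
        · exact fun j _ => (hX.add (hmeas _ _)).add (hmeas _ _)
    _ ≤ ∑ j ∈ range (K + 1), (D + j * catalan j * D + (K - j : ℕ) * catalan (K - j) * D) := by
        gcongr with j hj
        · exact (lintegral_mono fun η => ENNReal.ofReal_inv_rpow_le (abs_nonneg _) γ).trans
            (hint S)
        · exact ih j (by simp at hj; omega) φ
        · exact ih (K - j) (by omega) _
    _ = ((∑ j ∈ range (K + 1), (1 + j * catalan j + (K - j) * catalan (K - j)) : ℕ) : ℝ≥0∞) *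
          D := by
        push_cast [sum_mul, add_mul]
        simp
    _ ≤ ((K + 1) * catalan (K + 1) : ℕ) * D := by
        gcongr; exact sum_range_one_add_mul_catalan_le K
    _ = _ := by push_cast; rfl

theorem measure_Ioc_le_of_lintegral_rpow_neg_le {ν : Measure ℝ} {γ : ℝ} (hγ : 0 ≤ γ)
    {D : ℝ≥0∞} (hint : ∀ ψ : ℝ, ∫⁻ η, ENNReal.ofReal |η - ψ| ^ (-γ) ∂ν ≤ D)
    (a : ℝ) {δ : ℝ} (hδ : 0 < δ) :
    ν (Ioc a (a + δ)) ≤ D * ENNReal.ofReal δ ^ γ := by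
  have hδγ : ENNReal.ofReal δ ^ (-γ) * ν (Ioc a (a + δ)) ≤ D :=
    calc ENNReal.ofReal δ ^ (-γ) * ν (Ioc a (a + δ))
        = ∫⁻ _ in Ioc a (a + δ), ENNReal.ofReal δ ^ (-γ) ∂ν := (setLIntegral_const _ _).symm
      _ ≤ ∫⁻ η in Ioc a (a + δ), ENNReal.ofReal |η - (a + δ)| ^ (-γ) ∂ν :=
        setLIntegral_mono' measurableSet_Ioc fun η hη => by
          rw [ENNReal.rpow_neg, ENNReal.rpow_neg]
          gcongr
          exact abs_le.2 ⟨by linarith [hη.1], by linarith [hη.2]⟩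
      _ ≤ D := (setLIntegral_le_lintegral _ _).trans (hint _)
  rwa [ENNReal.rpow_neg, ENNReal.inv_mul_le_iff
    (ENNReal.rpow_pos (ENNReal.ofReal_pos.2 hδ) ENNReal.ofReal_ne_top).ne'
    (ENNReal.rpow_ne_top_of_nonneg hγ ENNReal.ofReal_ne_top), mul_comm] at hδγ

theorem measure_Ioc_add_mul_le {μ : Measure ℝ} {δ : ℝ} (hδ : 0 ≤ δ) {B : ℝ≥0∞}
    (h : ∀ x, μ (Ioc x (x + δ)) ≤ B) (a : ℝ) (n : ℕ) :
    μ (Ioc a (a + n * δ)) ≤ n * B := by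
  induction n with
  | zero => simp
  | succ n ih =>
    have hsplit : Ioc a (a + (n + 1 : ℕ) * δ) =
        Ioc a (a + n * δ) ∪ Ioc (a + n * δ) (a + n * δ + δ) := by
      rw [Set.Ioc_union_Ioc_eq_Ioc (by nlinarith [n.cast_nonneg (α := ℝ)]) (by linarith)]
      push_cast; ring_nf
    calc μ (Ioc a (a + (n + 1 : ℕ) * δ))
        ≤ μ (Ioc a (a + n * δ)) + μ (Ioc (a + n * δ) (a + n * δ + δ)) :=
          hsplit ▸ measure_union_le _ _
      _ ≤ n * B + B := add_le_add ih (h _)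
      _ = (n + 1 : ℕ) * B := by push_cast; ring

theorem measure_eq_zero_of_lintegral_rpow_neg_le {ν : Measure ℝ} {γ : ℝ} (hγ : 1 < γ)
    {D : ℝ≥0∞} (hD : D ≠ ⊤) (hint : ∀ ψ : ℝ, ∫⁻ η, ENNReal.ofReal |η - ψ| ^ (-γ) ∂ν ≤ D) :
    ν = 0 := by
  have hIoc (a : ℝ) : ν (Ioc a (a + 1)) = 0 := by
    have hbound (n : ℕ) (hn : 1 ≤ n) :
        ν (Ioc a (a + 1)) ≤ D * ENNReal.ofReal ((n : ℝ) ^ (-(γ - 1))) := by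
      have hn : (0 : ℝ) < n := by positivity
      calc ν (Ioc a (a + 1)) = ν (Ioc a (a + n * (1 / n))) := by rw [mul_one_div_cancel hn.ne']
        _ ≤ n * (D * ENNReal.ofReal (1 / n) ^ γ) :=
          measure_Ioc_add_mul_le (by positivity)
            (fun x => measure_Ioc_le_of_lintegral_rpow_neg_le (by linarith) hint x (by positivity))
            a n
        _ = D * ENNReal.ofReal ((n : ℝ) ^ (-(γ - 1))) := by
          rw [ENNReal.ofReal_rpow_of_pos (by positivity), ← ENNReal.ofReal_natCast, mul_left_comm,
            ← ENNReal.ofReal_mul hn.le, one_div, Real.inv_rpow hn.le, Real.rpow_neg hn.le,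
            Real.rpow_sub_one hn.ne', inv_div, div_eq_mul_inv]
    have hlim : Tendsto (fun n : ℕ => D * ENNReal.ofReal ((n : ℝ) ^ (-(γ - 1)))) atTop (𝓝 0) := by
      have := (tendsto_rpow_neg_atTop (by linarith : 0 < γ - 1)).comp tendsto_natCast_atTop_atTop
      simpa using ENNReal.Tendsto.const_mul (ENNReal.tendsto_ofReal this) (Or.inr hD)
    exact nonpos_iff_eq_zero.1 <| ge_of_tendsto hlim (eventually_atTop.2 ⟨1, hbound⟩)
  rw [← Measure.measure_univ_eq_zero, ← iUnion_Ioc_intCast]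
  exact measure_iUnion_null fun n => hIoc n

theorem ENNReal.natCast_catalan (n : ℕ) :
    (catalan n : ℝ≥0∞) = (2 * n).choose n / (n + 1) := by
  rw [ENNReal.eq_div_iff (by simp) (by simp), ← Nat.centralBinom_eq_two_mul_choose,
    ← succ_mul_catalan_eq_centralBinom]
  push_cast; ring

theorem stmt14_general (ν : Measure ℝ)
    (J : ℕ) (hJ : 1 ≤ J) (α : ℝ) (hα : 0 < α)
    (D : ℝ≥0∞) (hD : D ≠ ⊤)
    (hint : ∀ ψ : ℝ, ∫⁻ η, (ENNReal.ofReal |η - ψ|) ^ (-((J : ℝ) * α)) ∂ν ≤ D)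
    (φ : Fin J → ℝ) :
    ∫⁻ η, ENNReal.ofReal (|hFun J η (fun i => if h : i < J then φ ⟨i, h⟩ else 0)| ^ α) ∂ν
      ≤ ((2 * J).choose J : ℝ≥0∞) / ((J : ℝ≥0∞) + 1) * D := by
  set γ := (J : ℝ) * α
  set ψ : ℕ → ℝ := fun i => if h : i < J then φ ⟨i, h⟩ else 0
  rcases le_or_gt γ 1 with hγ1 | hγ1
  · have hJ0 : (J : ℝ) ≠ 0 := Nat.cast_ne_zero.2 (by omega)
    rw [← ENNReal.natCast_catalan, ← ENNReal.mul_le_mul_iff_right (by simpa using hJ0)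
      (ENNReal.natCast_ne_top J), ← lintegral_const_mul' _ _ (ENNReal.natCast_ne_top J),
      ← mul_assoc]
    refine le_of_eq_of_le (lintegral_congr fun η => ?_)
      (lintegral_hWeightedPow_le (by positivity) hγ1 hint J ψ)
    rw [hWeightedPow, ENNReal.ofReal_mul (by positivity), ENNReal.ofReal_natCast,
      mul_div_cancel_left₀ α hJ0]
  · simp [measure_eq_zero_of_lintegral_rpow_neg_le hγ1 hD hint]

theorem stmt14 (ν : Measure ℝ) [IsFiniteMeasure ν]
    (J : ℕ) (hJ : 1 ≤ J) (α : ℝ) (hα : 0 < α)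
    (D : ℝ≥0∞) (hD : D ≠ ⊤)
    (hint : ∀ ψ : ℝ, ∫⁻ η, (ENNReal.ofReal |η - ψ|) ^ (-((J : ℝ) * α)) ∂ν ≤ D)
    (φ : Fin J → ℝ) :
    ∫⁻ η, ENNReal.ofReal (|hFun J η (fun i => if h : i < J then φ ⟨i, h⟩ else 0)| ^ α) ∂ν
      ≤ ((2 * J).choose J : ℝ≥0∞) / ((J : ℝ≥0∞) + 1) * D :=
  stmt14_general ν J hJ α hα D hD hint φ
end

section
/- Let γ : (0,∞) → ℝ be a function of bounded variation and let W : (0,∞) → ℝ be Lebesgue measurable. Suppose there exist T > 0 and constants 0 < δ ≤ Δ < ∞ such that for every a ≥ 0, δ ≤ ∫_a^{a+T} |W(x)| dx ≤ Δ. If ∫_0^∞ |W(x) γ(x)| dx < ∞, then (δ/T) ∫_0^∞ |γ(y)| dy ≤ ∫_0^∞ |W(x) γ(x)| dx + Var(γ,(0,∞)) · Δ; in particular, γ ∈ L¹(0,∞). -/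
/-!
Cut `(0, ∞)` into the intervals `I_k = (kT, (k+1)T]`. For `x, y ∈ I_k` we have
`|γ y| ≤ |γ x| + Var(γ, I_k)`; multiplying by `|W x|` and integrating in `x` over `I_k` gives
`δ |γ y| ≤ ∫_{I_k} |W γ| + Δ Var(γ, I_k)`, and integrating in `y` over `I_k` multiplies this by `T`.
Summing over `k`, the integrals add up to integrals over `(0, ∞)` and the variations of `γ` on the
consecutive intervals add up to at most `Var(γ, (0, ∞))`.
-/

open scoped BigOperators ENNReal
open MeasureTheory Set

theorem LocallyBoundedVariationOn.aemeasurable_restrict {α : Type*} [LinearOrder α]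
    [TopologicalSpace α] [OrderClosedTopology α] [MeasurableSpace α] [BorelSpace α]
    {μ : Measure α} {f : α → ℝ} {s : Set α} (hf : LocallyBoundedVariationOn f s)
    (hs : MeasurableSet s) : AEMeasurable f (μ.restrict s) := by
  obtain ⟨p, q, hp, hq, rfl⟩ := hf.exists_monotoneOn_sub_monotoneOn
  exact (aemeasurable_restrict_of_monotoneOn hs hp).sub (aemeasurable_restrict_of_monotoneOn hs hq)

namespace eVariationOn

variable {α E : Type*} [LinearOrder α] [PseudoEMetricSpace E]

theorem sum_le_biUnion (f : α → E) {s : ℕ → Set α}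
    (hs : ∀ i j, i < j → ∀ x ∈ s i, ∀ y ∈ s j, x ≤ y) (n : ℕ) :
    ∑ k ∈ Finset.range n, eVariationOn f (s k) ≤ eVariationOn f (⋃ k < n, s k) := by
  induction n with
  | zero => simp
  | succ n ih =>
    rw [Finset.sum_range_succ, biUnion_lt_succ]
    refine (add_le_add ih le_rfl).trans (add_le_union f ?_)
    simp only [mem_iUnion]
    rintro x ⟨i, hi, hx⟩ y hy
    exact hs i n hi x hx y hy

theorem tsum_le_iUnion (f : α → E) {s : ℕ → Set α}
    (hs : ∀ i j, i < j → ∀ x ∈ s i, ∀ y ∈ s j, x ≤ y) :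
    ∑' k, eVariationOn f (s k) ≤ eVariationOn f (⋃ k, s k) :=
  ENNReal.tsum_le_of_sum_range_le fun n =>
    (sum_le_biUnion f hs n).trans (mono f (iUnion₂_subset fun k _ => subset_iUnion s k))

end eVariationOn

section WeightedBound

variable {α : Type*} [MeasurableSpace α] {μ : Measure α} {W γ : α → ℝ} {s : Set α}

theorem setLIntegral_nnnorm_mul_le_of_edist_le (hW : Measurable W) (hs : MeasurableSet s)
    {y : α} {v : ℝ≥0∞} (hv : ∀ x ∈ s, edist (γ x) (γ y) ≤ v) :
    (∫⁻ x in s, (‖W x‖₊ : ℝ≥0∞) ∂μ) * ‖γ y‖₊ ≤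
      (∫⁻ x in s, (‖W x * γ x‖₊ : ℝ≥0∞) ∂μ) + (∫⁻ x in s, (‖W x‖₊ : ℝ≥0∞) ∂μ) * v := by
  have hWm : Measurable fun x => (‖W x‖₊ : ℝ≥0∞) := hW.nnnorm.coe_nnreal_ennreal
  have htriangle : ∀ x ∈ s, (‖γ y‖₊ : ℝ≥0∞) ≤ ‖γ x‖₊ + v := fun x hx =>
    calc (‖γ y‖₊ : ℝ≥0∞) = edist (γ y) 0 := (edist_zero_right _).symm
      _ ≤ edist (γ x) 0 + edist (γ x) (γ y) := by
        rw [add_comm, edist_comm (γ x)]; exact edist_triangle _ _ _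
      _ ≤ ‖γ x‖₊ + v := by rw [edist_zero_right]; exact add_le_add le_rfl (hv x hx)
  calc (∫⁻ x in s, (‖W x‖₊ : ℝ≥0∞) ∂μ) * ‖γ y‖₊
      = ∫⁻ x in s, (‖W x‖₊ : ℝ≥0∞) * ‖γ y‖₊ ∂μ := (lintegral_mul_const _ hWm).symm
    _ ≤ ∫⁻ x in s, ((‖W x * γ x‖₊ : ℝ≥0∞) + ‖W x‖₊ * v) ∂μ := by
      refine setLIntegral_mono' hs fun x hx => ?_
      rw [nnnorm_mul, ENNReal.coe_mul, ← mul_add]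
      gcongr
      exact htriangle x hx
    _ = _ := by rw [lintegral_add_right _ (hWm.mul_const _), lintegral_mul_const _ hWm]

variable [LinearOrder α]

theorem mul_setLIntegral_nnnorm_le (hW : Measurable W) (hs : MeasurableSet s) {c C : ℝ≥0∞}
    (hc : c ≤ ∫⁻ x in s, (‖W x‖₊ : ℝ≥0∞) ∂μ) (hC : ∫⁻ x in s, (‖W x‖₊ : ℝ≥0∞) ∂μ ≤ C) :
    c * ∫⁻ y in s, (‖γ y‖₊ : ℝ≥0∞) ∂μ ≤
      ((∫⁻ x in s, (‖W x * γ x‖₊ : ℝ≥0∞) ∂μ) + eVariationOn γ s * C) * μ s := by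
  have hpointwise : ∀ y ∈ s, c * ‖γ y‖₊ ≤
      (∫⁻ x in s, (‖W x * γ x‖₊ : ℝ≥0∞) ∂μ) + eVariationOn γ s * C := fun y hy =>
    calc c * ‖γ y‖₊ ≤ (∫⁻ x in s, (‖W x‖₊ : ℝ≥0∞) ∂μ) * ‖γ y‖₊ := by gcongr
      _ ≤ (∫⁻ x in s, (‖W x * γ x‖₊ : ℝ≥0∞) ∂μ) +
          (∫⁻ x in s, (‖W x‖₊ : ℝ≥0∞) ∂μ) * eVariationOn γ s :=
        setLIntegral_nnnorm_mul_le_of_edist_le hW hs fun x hx => eVariationOn.edist_le γ hx hy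
      _ ≤ _ := by rw [mul_comm]; gcongr
  calc c * ∫⁻ y in s, (‖γ y‖₊ : ℝ≥0∞) ∂μ ≤ ∫⁻ y in s, c * ‖γ y‖₊ ∂μ := lintegral_const_mul_le _ _
    _ ≤ ∫⁻ _ in s, ((∫⁻ x in s, (‖W x * γ x‖₊ : ℝ≥0∞) ∂μ) + eVariationOn γ s * C) ∂μ :=
      setLIntegral_mono' hs hpointwise
    _ = _ := setLIntegral_const _ _

theorem mul_setLIntegral_iUnion_nnnorm_le (hW : Measurable W) {s : ℕ → Set α}
    (hs : ∀ k, MeasurableSet (s k)) (hdisj : Pairwise (Function.onFun Disjoint s))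
    (hord : ∀ i j, i < j → ∀ x ∈ s i, ∀ y ∈ s j, x ≤ y) {c C L : ℝ≥0∞}
    (hc : ∀ k, c ≤ ∫⁻ x in s k, (‖W x‖₊ : ℝ≥0∞) ∂μ)
    (hC : ∀ k, ∫⁻ x in s k, (‖W x‖₊ : ℝ≥0∞) ∂μ ≤ C) (hL : ∀ k, μ (s k) ≤ L) :
    c * ∫⁻ y in ⋃ k, s k, (‖γ y‖₊ : ℝ≥0∞) ∂μ ≤
      ((∫⁻ x in ⋃ k, s k, (‖W x * γ x‖₊ : ℝ≥0∞) ∂μ) + eVariationOn γ (⋃ k, s k) * C) * L := by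
  rw [lintegral_iUnion hs hdisj, lintegral_iUnion hs hdisj, ← ENNReal.tsum_mul_left]
  calc ∑' k, c * ∫⁻ y in s k, (‖γ y‖₊ : ℝ≥0∞) ∂μ
      ≤ ∑' k, ((∫⁻ x in s k, (‖W x * γ x‖₊ : ℝ≥0∞) ∂μ) + eVariationOn γ (s k) * C) * L :=
        ENNReal.tsum_le_tsum fun k =>
          (mul_setLIntegral_nnnorm_le hW (hs k) (hc k) (hC k)).trans (by gcongr; exact hL k)
    _ = ((∑' k, ∫⁻ x in s k, (‖W x * γ x‖₊ : ℝ≥0∞) ∂μ) + (∑' k, eVariationOn γ (s k)) * C) * L := by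
      rw [ENNReal.tsum_mul_right, ENNReal.tsum_add, ENNReal.tsum_mul_right]
    _ ≤ _ := by gcongr; exact eVariationOn.tsum_le_iUnion γ hord

end WeightedBound

section Intervals

variable {T : ℝ}

theorem Ioc_natCast_mul_eq_Ioc_succ (T : ℝ) (k : ℕ) :
    Ioc (k * T) (k * T + T) =
      Ioc ((fun n : ℕ => n * T) k) ((fun n : ℕ => n * T) (Order.succ k)) := by
  simp [add_mul]

theorem iUnion_Ioc_natCast_mul (hT : 0 < T) : ⋃ k : ℕ, Ioc (k * T) (k * T + T) = Ioi 0 := by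
  simp_rw [Ioc_natCast_mul_eq_Ioc_succ T]
  rw [iUnion_Ioc_map_succ_eq_Ioi fun _ => Nat.mono_cast.mul_const hT.le bot_le]
  · simp
  · rw [not_bddAbove_iff]
    intro x
    obtain ⟨n, hn⟩ := exists_nat_gt (x / T)
    exact ⟨n * T, mem_range_self n, (div_lt_iff₀ hT).1 hn⟩

theorem pairwise_disjoint_Ioc_natCast_mul (hT : 0 ≤ T) :
    Pairwise (Function.onFun Disjoint fun k : ℕ => Ioc (k * T) (k * T + T)) := by
  simpa only [Ioc_natCast_mul_eq_Ioc_succ T] using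
    (Nat.mono_cast.mul_const hT).pairwise_disjoint_on_Ioc_succ

theorem Ioc_natCast_mul_le (hT : 0 ≤ T) {i j : ℕ} (hij : i < j) :
    ∀ x ∈ Ioc (i * T) (i * T + T), ∀ y ∈ Ioc (j * T) (j * T + T), x ≤ y := by
  rintro x ⟨-, hx⟩ y ⟨hy, -⟩
  have : (i : ℝ) + 1 ≤ j := by exact_mod_cast hij
  nlinarith

end Intervals

theorem stmt16_general (γ : ℝ → ℝ) (hγ : BoundedVariationOn γ (Set.Ioi 0))
    (W : ℝ → ℝ) (hW : Measurable W)
    (T δ Δ : ℝ) (hT : 0 < T) (hδ : 0 < δ)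
    (hlow : ∀ a : ℝ, 0 ≤ a →
      ENNReal.ofReal δ ≤ ∫⁻ x in Set.Ioc a (a + T), (‖W x‖₊ : ℝ≥0∞))
    (hup : ∀ a : ℝ, 0 ≤ a →
      (∫⁻ x in Set.Ioc a (a + T), (‖W x‖₊ : ℝ≥0∞)) ≤ ENNReal.ofReal Δ)
    (hint : ∫⁻ x in Set.Ioi (0:ℝ), (‖W x * γ x‖₊ : ℝ≥0∞) < ⊤) :
    ENNReal.ofReal (δ / T) * ∫⁻ y in Set.Ioi (0:ℝ), (‖γ y‖₊ : ℝ≥0∞)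
        ≤ (∫⁻ x in Set.Ioi (0:ℝ), (‖W x * γ x‖₊ : ℝ≥0∞)) +
          eVariationOn γ (Set.Ioi 0) * ENNReal.ofReal Δ
      ∧ IntegrableOn γ (Set.Ioi 0) := by
  have hmain := mul_setLIntegral_iUnion_nnnorm_le (μ := volume) (γ := γ) hW
    (fun _ => measurableSet_Ioc) (pairwise_disjoint_Ioc_natCast_mul hT.le)
    (fun _ _ => Ioc_natCast_mul_le hT.le) (fun _ => hlow _ (by positivity))
    (fun _ => hup _ (by positivity))
    (fun _ => (Real.volume_Ioc ..).trans_le (by rw [add_sub_cancel_left]))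
  rw [iUnion_Ioc_natCast_mul hT] at hmain
  have hbound : ENNReal.ofReal (δ / T) * ∫⁻ y in Ioi (0:ℝ), (‖γ y‖₊ : ℝ≥0∞) ≤
      (∫⁻ x in Ioi (0:ℝ), (‖W x * γ x‖₊ : ℝ≥0∞)) + eVariationOn γ (Ioi 0) * ENNReal.ofReal Δ := by
    rw [ENNReal.ofReal_div_of_pos hT, ← ENNReal.mul_div_right_comm]
    exact ENNReal.div_le_of_le_mul hmain
  have hfinite : (∫⁻ x in Ioi (0:ℝ), (‖W x * γ x‖₊ : ℝ≥0∞)) +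
      eVariationOn γ (Ioi 0) * ENNReal.ofReal Δ ≠ ⊤ :=
    ENNReal.add_ne_top.2 ⟨hint.ne, ENNReal.mul_ne_top hγ ENNReal.ofReal_ne_top⟩
  refine ⟨hbound,
    (hγ.locallyBoundedVariationOn.aemeasurable_restrict measurableSet_Ioi).aestronglyMeasurable, ?_⟩
  exact ENNReal.lt_top_of_mul_ne_top_right (ne_top_of_le_ne_top hfinite hbound)
    (ENNReal.ofReal_pos.2 (div_pos hδ hT)).ne'

theorem stmt16 (γ : ℝ → ℝ) (hγ : BoundedVariationOn γ (Set.Ioi 0))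
    (W : ℝ → ℝ) (hW : Measurable W)
    (T δ Δ : ℝ) (hT : 0 < T) (hδ : 0 < δ) (hδΔ : δ ≤ Δ)
    (hlow : ∀ a : ℝ, 0 ≤ a →
      ENNReal.ofReal δ ≤ ∫⁻ x in Set.Ioc a (a + T), (‖W x‖₊ : ℝ≥0∞))
    (hup : ∀ a : ℝ, 0 ≤ a →
      (∫⁻ x in Set.Ioc a (a + T), (‖W x‖₊ : ℝ≥0∞)) ≤ ENNReal.ofReal Δ)
    (hint : ∫⁻ x in Set.Ioi (0:ℝ), (‖W x * γ x‖₊ : ℝ≥0∞) < ⊤) :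
    ENNReal.ofReal (δ / T) * ∫⁻ y in Set.Ioi (0:ℝ), (‖γ y‖₊ : ℝ≥0∞)
        ≤ (∫⁻ x in Set.Ioi (0:ℝ), (‖W x * γ x‖₊ : ℝ≥0∞)) +
          eVariationOn γ (Set.Ioi 0) * ENNReal.ofReal Δ
      ∧ IntegrableOn γ (Set.Ioi 0) :=
  stmt16_general γ hγ W hW T δ Δ hT hδ hlow hup hint
end
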